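/- arXiv:math/0610762 — 4 statements merged into one kernel-verified Lean document; each statement's English description precedes it below -/
import Mathlib

section
/- Let N ≥ 2, α > 1, p > 0 and R > 0. Let h : [0,R) → ℝ be continuous, nonnegative, not identically zero, and satisfy h'' + ((N-1)/r)h' = (1/α)h^{-α} − p on the open set {r ∈ (0,R) : h(r) > 0}. Then h(r) > 0 for every r ∈ (0,R); in other words, a radial continuous solution cannot vanish away from the origin. -/
open Set Filter Topology

noncomputable section
set_option maxHeartbeats 1000000

private lemma ev_slope_right {f : ℝ → ℝ} {x v : ℝ} (hf : HasDerivAt f v x) (hv : 0 < v) :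
    ∀ᶠ t in 𝓝[>] x, f x < f t := by
  have hs : Tendsto (slope f x) (𝓝[>] x) (𝓝 v) :=
    (hasDerivAt_iff_tendsto_slope.mp hf).mono_left
      (nhdsWithin_mono x fun t ht => ne_of_gt ht)
  have h1 : ∀ᶠ t in 𝓝[>] x, 0 < slope f x t := hs (Ioi_mem_nhds hv)
  filter_upwards [h1, self_mem_nhdsWithin] with t ht hx
  have h2 : slope f x t = (f t - f x) / (t - x) := slope_def_field f x t
  rw [h2] at ht
  rcases div_pos_iff.mp ht with ⟨h3, _⟩ | ⟨_, h4⟩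
  · linarith
  · simp only [mem_Ioi] at hx; linarith

private lemma ev_slope_left {f : ℝ → ℝ} {x v : ℝ} (hf : HasDerivAt f v x) (hv : 0 < v) :
    ∀ᶠ t in 𝓝[<] x, f t < f x := by
  have hs : Tendsto (slope f x) (𝓝[<] x) (𝓝 v) :=
    (hasDerivAt_iff_tendsto_slope.mp hf).mono_left
      (nhdsWithin_mono x fun t ht => ne_of_lt ht)
  have h1 : ∀ᶠ t in 𝓝[<] x, 0 < slope f x t := hs (Ioi_mem_nhds hv)
  filter_upwards [h1, self_mem_nhdsWithin] with t ht hx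
  have h2 : slope f x t = (f t - f x) / (t - x) := slope_def_field f x t
  rw [h2] at ht
  rcases div_pos_iff.mp ht with ⟨h3, h4⟩ | ⟨h3, _⟩
  · simp only [mem_Iio] at hx; linarith
  · linarith

private lemma exists_right {x b : ℝ} (hxb : x < b) {P : ℝ → Prop} (hP : ∀ᶠ t in 𝓝[>] x, P t) :
    ∃ t, x < t ∧ t < b ∧ P t := by
  have h2 : Ioo x b ∈ 𝓝[>] x := Ioo_mem_nhdsGT_of_mem ⟨le_refl x, hxb⟩
  rcases (hP.and h2).exists with ⟨t, ht, h1, h2'⟩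
  exact ⟨t, h1, h2', ht⟩

private lemma exists_left {c x : ℝ} (hcx : c < x) {P : ℝ → Prop} (hP : ∀ᶠ t in 𝓝[<] x, P t) :
    ∃ t, c < t ∧ t < x ∧ P t := by
  have h2 : Ioo c x ∈ 𝓝[<] x := Ioo_mem_nhdsLT_of_mem ⟨hcx, le_refl x⟩
  rcases (hP.and h2).exists with ⟨t, ht, h1, h2'⟩
  exact ⟨t, h1, h2', ht⟩

private lemma deriv_nonneg_right' {h : ℝ → ℝ} {r b : ℝ} (hrb : r < b)
    (mono : ∀ t, r < t → t < b → h r ≤ h t) : 0 ≤ deriv h r := by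
  by_cases hd : DifferentiableAt ℝ h r
  · have hs : Tendsto (slope h r) (𝓝[>] r) (𝓝 (deriv h r)) :=
      (hasDerivAt_iff_tendsto_slope.mp hd.hasDerivAt).mono_left
        (nhdsWithin_mono r fun t ht => ne_of_gt ht)
    refine ge_of_tendsto hs ?_
    filter_upwards [self_mem_nhdsWithin, Ioo_mem_nhdsGT_of_mem ⟨le_refl r, hrb⟩] with t ht hIoo
    rw [slope_def_field]
    exact div_nonneg (sub_nonneg.mpr (mono t hIoo.1 hIoo.2)) (sub_nonneg.mpr (le_of_lt ht))
  · rw [deriv_zero_of_not_differentiableAt hd]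

private lemma deriv_nonpos_right' {h : ℝ → ℝ} {r b : ℝ} (hrb : r < b)
    (mono : ∀ t, r < t → t < b → h t ≤ h r) : deriv h r ≤ 0 := by
  by_cases hd : DifferentiableAt ℝ h r
  · have hs : Tendsto (slope h r) (𝓝[>] r) (𝓝 (deriv h r)) :=
      (hasDerivAt_iff_tendsto_slope.mp hd.hasDerivAt).mono_left
        (nhdsWithin_mono r fun t ht => ne_of_gt ht)
    refine le_of_tendsto hs ?_
    filter_upwards [self_mem_nhdsWithin, Ioo_mem_nhdsGT_of_mem ⟨le_refl r, hrb⟩] with t ht hIoo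
    rw [slope_def_field]
    exact div_nonpos_of_nonpos_of_nonneg (sub_nonpos.mpr (mono t hIoo.1 hIoo.2))
      (sub_nonneg.mpr (le_of_lt ht))
  · rw [deriv_zero_of_not_differentiableAt hd]

/-- basic bound: if `0 < x ≤ (2αp)^(-1/α)` then `p ≤ (1/(2α)) x^(-α)`. -/
private lemma fbd {α p x : ℝ} (hα : 1 < α) (hp : 0 < p) (hx : 0 < x)
    (hle : x ≤ (2*α*p) ^ (-α⁻¹)) : p ≤ 1/(2*α) * x ^ (-α) := by
  have hα0 : (0:ℝ) < α := by linarith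
  have h2αp : (0:ℝ) < 2*α*p := by positivity
  have h1 : ((2*α*p) ^ (-α⁻¹)) ^ (-α) ≤ x ^ (-α) :=
    Real.rpow_le_rpow_of_nonpos hx hle (by linarith : -α ≤ 0)
  have h2 : ((2*α*p) ^ (-α⁻¹)) ^ (-α) = 2*α*p := by
    rw [← Real.rpow_mul h2αp.le, show (-α⁻¹)*(-α) = α⁻¹*α by ring,
      inv_mul_cancel₀ (ne_of_gt hα0), Real.rpow_one]
  rw [h2] at h1
  calc p = 1/(2*α) * (2*α*p) := by field_simp
    _ ≤ 1/(2*α) * x ^ (-α) := by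
        apply mul_le_mul_of_nonneg_left h1 (by positivity)

/-- the "no local max" lemma (junk-derivative safe). -/
private lemma no_local_max
    (N : ℕ) (α p R : ℝ) (h : ℝ → ℝ)
    (hcont : ContinuousOn h (Ico 0 R))
    (hode : ∀ r ∈ Ioo (0 : ℝ) R, 0 < h r →
      deriv (deriv h) r + ((N : ℝ) - 1) / r * deriv h r = 1 / α * h r ^ (-α) - p)
    (r : ℝ) (hr : r ∈ Ioo (0:ℝ) R) (hpos : 0 < h r)
    (hf : 0 < 1/α * h r ^ (-α) - p) : ¬ IsLocalMax h r := by
  intro hmax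
  have hd0 : deriv h r = 0 := hmax.deriv_eq_zero
  have heq := hode r hr hpos
  rw [hd0, mul_zero, add_zero] at heq
  have hdd : DifferentiableAt ℝ (deriv h) r := by
    by_contra hnd
    rw [deriv_zero_of_not_differentiableAt hnd] at heq
    linarith
  have hD : HasDerivAt (deriv h) (1/α * h r ^ (-α) - p) r := heq ▸ hdd.hasDerivAt
  have hev : ∀ᶠ t in 𝓝[<] r, deriv h t < 0 := by
    filter_upwards [ev_slope_left hD hf] with t ht; rw [hd0] at ht; exact ht
  have hnb : ∀ᶠ t in 𝓝[<] r, h t ≤ h r := hmax.filter_mono nhdsWithin_le_nhds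
  rcases mem_nhdsLT_iff_exists_Ioo_subset.mp (hev.and hnb) with ⟨c, hc, hsub⟩
  simp only [mem_Iio] at hc
  have hr0 : 0 < r := hr.1
  set c1 := max c (r/2) with hc1
  have hc1r : c1 < r := max_lt hc (by linarith)
  have hc10 : 0 < c1 := lt_of_lt_of_le (by linarith : (0:ℝ) < r/2) (le_max_right _ _)
  set c2 := (c1 + r)/2 with hc2
  have hc2mem : c2 ∈ Ioo c r := by
    constructor
    · have := le_max_left c (r/2); simp only [hc2]; linarith [le_max_left c (r/2)]
    · simp only [hc2]; linarith
  have hsubset : Ioo c2 r ⊆ Ioo c r := by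
    intro t ht; exact ⟨lt_trans hc2mem.1 ht.1, ht.2⟩
  have hanti : StrictAntiOn h (Icc c2 r) := by
    apply strictAntiOn_of_deriv_neg (convex_Icc _ _)
    · apply hcont.mono
      intro t ht
      constructor
      · have : 0 < c2 := by simp only [hc2]; linarith
        linarith [ht.1]
      · exact lt_of_le_of_lt ht.2 hr.2
    · intro t ht
      rw [interior_Icc] at ht
      exact (hsub (hsubset ht)).1
  have h1 : h r < h c2 := by
    apply hanti (left_mem_Icc.mpr (by simp only [hc2]; linarith))
      (right_mem_Icc.mpr (by simp only [hc2]; linarith))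
    simp only [hc2]; linarith
  have h2 : h c2 ≤ h r := (hsub hc2mem).2
  linarith

private lemma max_endpoints {h : ℝ → ℝ} {x y : ℝ} (hxy : x ≤ y)
    (hc : ContinuousOn h (Icc x y)) (hnlm : ∀ m ∈ Ioo x y, ¬ IsLocalMax h m) :
    ∀ t ∈ Icc x y, h t ≤ max (h x) (h y) := by
  obtain ⟨m, hm, hmax⟩ := isCompact_Icc.exists_isMaxOn (nonempty_Icc.mpr hxy) hc
  intro t ht
  rcases eq_or_lt_of_le hm.1 with h1 | h1
  · exact le_trans (hmax ht) (h1 ▸ le_max_left _ _)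
  rcases eq_or_lt_of_le hm.2 with h2 | h2
  · exact le_trans (hmax ht) (h2 ▸ le_max_right _ _)
  exfalso
  refine hnlm m ⟨h1, h2⟩ ?_
  exact Filter.eventually_of_mem (Ioo_mem_nhds h1 h2) fun t' ht' => hmax (Ioo_subset_Icc_self ht')

private lemma mono_of_no_local_max {h : ℝ → ℝ} {a s0 : ℝ}
    (hc : ContinuousOn h (Icc a s0))
    (hnlm : ∀ m ∈ Ioo a s0, ¬ IsLocalMax h m)
    (hsmall : ∀ e, 0 < e → ∀ x ∈ Ioc a s0, ∃ x', x' ∈ Ioo a x ∧ h x' < e)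
    (hposy : ∀ t ∈ Ioc a s0, 0 < h t) :
    ∀ x ∈ Ioc a s0, ∀ y ∈ Ioc a s0, x ≤ y → h x ≤ h y := by
  intro x hx y hy hxy
  obtain ⟨x', hx', hx'small⟩ := hsmall (h y) (hposy y hy) x hx
  have key := max_endpoints (le_trans hx'.2.le hxy)
    (hc.mono (Icc_subset_Icc hx'.1.le hy.2))
    (fun m hm => hnlm m ⟨lt_trans hx'.1 hm.1, lt_of_lt_of_le hm.2 hy.2⟩)
    x ⟨hx'.2.le, hxy⟩
  rcases max_cases (h x') (h y) with ⟨he, _⟩ | ⟨he, _⟩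
  · rw [he] at key; linarith
  · rw [he] at key; exact key

private lemma anti_of_no_local_max {h : ℝ → ℝ} {b1 a : ℝ}
    (hc : ContinuousOn h (Ico b1 a))
    (hnlm : ∀ m ∈ Ioo b1 a, ¬ IsLocalMax h m)
    (hsmall : ∀ e, 0 < e → ∀ y ∈ Ico b1 a, ∃ y', y' ∈ Ioo y a ∧ h y' < e)
    (hposx : ∀ t ∈ Ico b1 a, 0 < h t) :
    ∀ x ∈ Ico b1 a, ∀ y ∈ Ico b1 a, x ≤ y → h y ≤ h x := by
  intro x hx y hy hxy
  obtain ⟨y', hy', hy'small⟩ := hsmall (h x) (hposx x hx) y hy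
  have hxy' : x ≤ y' := le_trans hxy hy'.1.le
  have key := max_endpoints hxy'
    (hc.mono (fun t ht => ⟨le_trans hx.1 ht.1, lt_of_le_of_lt ht.2 hy'.2⟩))
    (fun m hm => hnlm m ⟨lt_of_le_of_lt hx.1 hm.1, lt_trans hm.2 hy'.2⟩)
    y ⟨hxy, hy'.1.le⟩
  rcases max_cases (h x) (h y') with ⟨he, _⟩ | ⟨he, _⟩
  · rw [he] at key; exact key
  · rw [he] at key; linarith

private lemma le_rpow_neg {β c x : ℝ} (hβ : 0 < β) (hc : 0 < c) (hx : 0 < x)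
    (hle : x ≤ c ^ (-β⁻¹)) : c ≤ x ^ (-β) := by
  have h1 : (c ^ (-β⁻¹)) ^ (-β) ≤ x ^ (-β) :=
    Real.rpow_le_rpow_of_nonpos hx hle (by linarith)
  rwa [← Real.rpow_mul hc.le, show (-β⁻¹)*(-β) = β⁻¹*β by ring,
    inv_mul_cancel₀ hβ.ne', Real.rpow_one] at h1

/-- Contradiction on a fully regular right-rupture initial interval. -/
private lemma reg_contra
    (N : ℕ) (hN : 2 ≤ N) {α p : ℝ} (hα : 1 < α) (hp : 0 < p)
    (h : ℝ → ℝ) (a t0 : ℝ) (ha : 0 < a) (hat0 : a < t0)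
    (hcIcc : ContinuousOn h (Icc a t0)) (hha : h a = 0)
    (hpos : ∀ r ∈ Ioc a t0, 0 < h r)
    (hd : ∀ r ∈ Ioc a t0, HasDerivAt h (deriv h r) r)
    (hdpos : ∀ r ∈ Ioc a t0, 0 < deriv h r)
    (hdd : ∀ r ∈ Ioc a t0,
      HasDerivAt (deriv h) (1/α * h r ^ (-α) - p - ((N:ℝ)-1)/r * deriv h r) r)
    (hfl : ∀ r ∈ Ioc a t0, p ≤ 1/(2*α) * h r ^ (-α)) :
    False := by
  have hα0 : (0:ℝ) < α := by linarith
  have hN2 : (2:ℝ) ≤ (N:ℝ) := by exact_mod_cast hN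
  have hcast : ((N-1 : ℕ) : ℝ) = (N:ℝ)-1 := by
    have : 1 ≤ N := by omega
    push_cast [Nat.cast_sub this]; ring
  set d := deriv h with hdDef
  set f : ℝ → ℝ := fun r => 1/α * h r ^ (-α) - p with hfDef
  have hfp : ∀ r ∈ Ioc a t0, p ≤ f r := by
    intro r hr
    have := hfl r hr
    have h2 : 1/α * h r ^ (-α) = 2 * (1/(2*α) * h r ^ (-α)) := by field_simp
    simp only [hfDef]
    rw [h2]; linarith
  -- q = r^(N-1) * d r  has derivative r^(N-1) * f r
  set q : ℝ → ℝ := fun r => r^(N-1) * d r with hqDef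
  have hq : ∀ r ∈ Ioc a t0, HasDerivAt q (r^(N-1) * f r) r := by
    intro r hr
    have hr0 : (0:ℝ) < r := lt_trans ha hr.1
    have h1 : HasDerivAt (fun x : ℝ => x^(N-1)) (((N-1:ℕ):ℝ) * r^(N-2)) r := by
      have := hasDerivAt_pow (N-1) r
      have he : N - 1 - 1 = N - 2 := by omega
      rwa [he] at this
    have h2 := h1.mul (hdd r hr)
    have h3 : r^(N-1) = r^(N-2) * r := by
      rw [← pow_succ]; congr 1; omega
    have h4 : r^(N-1) * (((N:ℝ)-1)/r) = ((N:ℝ)-1) * r^(N-2) := by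
      rw [h3]; field_simp; try ring
    have h5 : ((N-1:ℕ):ℝ) * r^(N-2) * d r
          + r^(N-1) * (1/α * h r ^ (-α) - p - ((N:ℝ)-1)/r * d r)
        = r^(N-1) * (1/α * h r ^ (-α) - p) := by
      rw [hcast, mul_sub, ← mul_assoc, h4]; ring
    refine h2.congr_deriv ?_
    symm
    simp only [hfDef]
    exact h5.symm
  have hqpos : ∀ r ∈ Ioc a t0, 0 < q r := by
    intro r hr
    have hr0 : (0:ℝ) < r := lt_trans ha hr.1
    exact mul_pos (pow_pos hr0 _) (hdpos r hr)
  have hqmono : MonotoneOn q (Ioc a t0) := by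
    apply monotoneOn_of_deriv_nonneg (convex_Ioc a t0)
    · intro r hr
      exact ((hq r hr).differentiableAt).continuousAt.continuousWithinAt
    · intro r hr
      rw [interior_Ioc] at hr
      exact ((hq r (Ioo_subset_Ioc_self hr)).differentiableAt).differentiableWithinAt
    · intro r hr
      rw [interior_Ioc] at hr
      have hr' := Ioo_subset_Ioc_self hr
      rw [(hq r hr').deriv]
      have hr0 : (0:ℝ) < r := lt_trans ha hr'.1
      have := hfp r hr'
      have hrp : (0:ℝ) ≤ r^(N-1) := (pow_pos hr0 _).le
      exact mul_nonneg hrp (by linarith)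
  set V0 : ℝ := q t0 / a^(N-1) with hV0Def
  have hV0 : 0 < V0 := div_pos (hqpos t0 ⟨hat0, le_refl t0⟩) (pow_pos ha _)
  have hdb : ∀ r ∈ Ioc a t0, d r ≤ V0 := by
    intro r hr
    have hr0 : (0:ℝ) < r := lt_trans ha hr.1
    have h1 : q r ≤ q t0 := hqmono hr ⟨hat0, le_refl t0⟩ hr.2
    have h2 : a^(N-1) ≤ r^(N-1) := pow_le_pow_left₀ ha.le hr.1.le _
    have h3 : d r ≤ q t0 / r^(N-1) := by
      rw [le_div_iff₀ (pow_pos hr0 _)]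
      calc d r * r^(N-1) = q r := by rw [hqDef]; ring
        _ ≤ q t0 := h1
    calc d r ≤ q t0 / r^(N-1) := h3
      _ ≤ q t0 / a^(N-1) :=
        div_le_div_of_nonneg_left (hqpos t0 ⟨hat0, le_refl t0⟩).le (pow_pos ha _) h2
  -- linear bound  h r ≤ V0 (r - a)
  have hlin : ∀ r ∈ Ioc a t0, h r ≤ V0 * (r - a) := by
    have hVlin : ∀ r:ℝ, HasDerivAt (fun x => V0 * x) V0 r := fun r => by
      simpa using (hasDerivAt_id r).const_mul V0
    have hg : AntitoneOn (fun r => h r - V0 * r) (Icc a t0) := by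
      apply antitoneOn_of_deriv_nonpos (convex_Icc a t0)
      · exact hcIcc.sub ((continuous_const.mul continuous_id).continuousOn)
      · intro r hr
        rw [interior_Icc] at hr
        exact (((hd r (Ioo_subset_Ioc_self hr)).sub
          (hVlin r)).differentiableAt).differentiableWithinAt
      · intro r hr
        rw [interior_Icc] at hr
        have hr' := Ioo_subset_Ioc_self hr
        rw [show deriv (fun r => h r - V0 * r) r = _ from ((hd r hr').sub (hVlin r)).deriv]
        linarith [hdb r hr']
    intro r hr
    have := hg ⟨le_refl a, hat0.le⟩ ⟨hr.1.le, hr.2⟩ hr.1.le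
    simp only [hha] at this
    linarith
  clear_value V0
  -- quantitative blow-up of d near a
  set K : ℝ := ((N:ℝ)-1)/a with hKDef
  have hK : 0 < K := div_pos (by linarith) ha
  set η : ℝ := (4*α*K*V0) ^ (-α⁻¹) / V0 with hηDef
  have hη : 0 < η := div_pos (Real.rpow_pos_of_pos (by positivity) _) hV0
  set t1 : ℝ := min t0 (a + η/2) with ht1Def
  have hat1 : a < t1 := lt_min hat0 (by linarith)
  have ht1t0 : t1 ≤ t0 := min_le_left _ _
  have hsub1 : Ioc a t1 ⊆ Ioc a t0 := Ioc_subset_Ioc le_rfl ht1t0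
  set c71 : ℝ := 1/(4*α) * V0 ^ (-α) with hc71
  have hc71pos : 0 < c71 :=
    mul_pos (by positivity) (Real.rpow_pos_of_pos hV0 _)
  clear_value c71
  have hFlow : ∀ r ∈ Ioc a t1, c71 * (r-a) ^ (-α) ≤ f r - ((N:ℝ)-1)/r * d r := by
    intro r hr
    have hr' : r ∈ Ioc a t0 := hsub1 hr
    have hr0 : (0:ℝ) < r := lt_trans ha hr.1
    have hra : (0:ℝ) < r - a := sub_pos.mpr hr.1
    have h1 : h r ≤ V0 * (r - a) := hlin r hr'
    have h2 : V0 * (r - a) ≤ (4*α*K*V0) ^ (-α⁻¹) := by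
      have hr2 : r - a ≤ η/2 := by
        have : r ≤ a + η/2 := le_trans hr.2 (min_le_right t0 (a+η/2))
        linarith
      have h2a : V0 * (r-a) ≤ V0 * (η/2) := mul_le_mul_of_nonneg_left hr2 hV0.le
      have h2b : V0 * η = (4*α*K*V0) ^ (-α⁻¹) := by
        rw [hηDef]; field_simp
      nlinarith [hη, hV0]
    have hhp := hpos r hr'
    have h3 : (V0*(r-a)) ^ (-α) ≤ (h r) ^ (-α) :=
      Real.rpow_le_rpow_of_nonpos hhp h1 (by linarith)
    have h4 : 4*α*K*V0 ≤ (V0*(r-a)) ^ (-α) :=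
      le_rpow_neg hα0 (by positivity) (by positivity) h2
    have h5 : ((N:ℝ)-1)/r * d r ≤ K * V0 := by
      have hd1 : d r ≤ V0 := hdb r hr'
      have hd2 : 0 < d r := hdpos r hr'
      have hk1 : ((N:ℝ)-1)/r ≤ K := by
        rw [hKDef]
        apply div_le_div_of_nonneg_left (by linarith) ha hr.1.le
      calc ((N:ℝ)-1)/r * d r ≤ K * d r := mul_le_mul_of_nonneg_right hk1 hd2.le
        _ ≤ K * V0 := mul_le_mul_of_nonneg_left hd1 hK.le
    have h6 : 1/(2*α) * (V0*(r-a))^(-α) ≤ f r := by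
      have hfl' := hfl r hr'
      have h7 : 1/α * h r ^(-α) = 2*(1/(2*α) * h r^(-α)) := by field_simp
      simp only [hfDef]; rw [h7]
      have h8 := mul_le_mul_of_nonneg_left h3 (by positivity : (0:ℝ) ≤ 1/(2*α))
      linarith
    have h8 : K*V0 ≤ 1/(4*α) * (V0*(r-a))^(-α) := by
      have h9 := mul_le_mul_of_nonneg_left h4 (by positivity : (0:ℝ) ≤ 1/(4*α))
      have h10 : 1/(4*α) * (4*α*K*V0) = K*V0 := by field_simp; try ring
      linarith
    have h11 : c71 * (r-a)^(-α) = 1/(4*α) * (V0*(r-a))^(-α) := by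
      rw [Real.mul_rpow hV0.le hra.le, hc71]; ring
    have h12 : 1/(4*α)*(V0*(r-a))^(-α) ≤ f r - K*V0 := by
      have : (0:ℝ) < (V0*(r-a))^(-α) := Real.rpow_pos_of_pos (by positivity) _
      have e1 : 1/(2*α)*(V0*(r-a))^(-α) - 1/(4*α)*(V0*(r-a))^(-α)
          = 1/(4*α)*(V0*(r-a))^(-α) := by field_simp; ring
      linarith
    rw [h11]; linarith
  set c72 : ℝ := c71/(α-1) with hc72
  have hc72pos : 0 < c72 := div_pos hc71pos (by linarith)
  clear_value c72
  have hGd : ∀ r ∈ Ioc a t1,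
      HasDerivAt (fun x => c72 * (x-a)^(1-α)) (-(c71 * (r-a)^(-α))) r := by
    intro r hr
    have hra : (0:ℝ) < r - a := sub_pos.mpr hr.1
    have h1 : HasDerivAt (fun x : ℝ => x - a) 1 r := (hasDerivAt_id r).sub_const a
    have h2 := h1.rpow_const (p := 1-α) (Or.inl hra.ne')
    have h3 := h2.const_mul c72
    refine h3.congr_deriv ?_
    symm
    have hα1 : α - 1 ≠ 0 := ne_of_gt (by linarith)
    rw [show (1-α)-1 = -α by ring, hc72]
    field_simp [hα1]
    ring
  -- monotone comparison
  have key : ∀ x ∈ Ioo a t1, d x + c72 * (x-a)^(1-α) ≤ d t1 + c72*(t1-a)^(1-α) := by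
    intro x hx
    have hM : MonotoneOn (fun r => d r + c72*(r-a)^(1-α)) (Icc x t1) := by
      have hIcc : Icc x t1 ⊆ Ioc a t1 := fun t ht => ⟨lt_of_lt_of_le hx.1 ht.1, ht.2⟩
      apply monotoneOn_of_deriv_nonneg (convex_Icc x t1)
      · intro r hr
        exact (((hdd r (hsub1 (hIcc hr))).add (hGd r (hIcc hr))).differentiableAt)
          |>.continuousAt.continuousWithinAt
      · intro r hr
        rw [interior_Icc] at hr
        exact (((hdd r (hsub1 (hIcc (Ioo_subset_Icc_self hr)))).add
          (hGd r (hIcc (Ioo_subset_Icc_self hr)))).differentiableAt).differentiableWithinAt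
      · intro r hr
        rw [interior_Icc] at hr
        have hr' := hIcc (Ioo_subset_Icc_self hr)
        rw [show deriv (fun r => d r + c72 * (r - a) ^ (1 - α)) r = _ from ((hdd r (hsub1 hr')).add (hGd r hr')).deriv]
        have := hFlow r hr'
        simp only [hfDef] at this ⊢
        linarith
    have := hM (left_mem_Icc.mpr hx.2.le) (right_mem_Icc.mpr hx.2.le) hx.2.le
    simpa using this
  -- choose x close to a for contradiction
  set B : ℝ := (d t1 + c72*(t1-a)^(1-α))/c72 with hBDef
  have hBpos : 0 < B := by
    apply div_pos _ hc72pos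
    have h1 : 0 < d t1 := hdpos t1 (hsub1 ⟨hat1, le_refl t1⟩)
    have h2 : (0:ℝ) < (t1-a)^(1-α) := Real.rpow_pos_of_pos (by linarith) _
    nlinarith
  set ξ : ℝ := min (B ^ (-(α-1)⁻¹)) (t1-a) with hξDef
  have hξpos : 0 < ξ := lt_min (Real.rpow_pos_of_pos hBpos _) (by linarith)
  set x : ℝ := a + ξ/2 with hxDef
  have hxmem : x ∈ Ioo a t1 := by
    constructor
    · simp only [hxDef]; linarith
    · have := min_le_right (B ^ (-(α-1)⁻¹)) (t1-a)
      simp only [hxDef]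
      have : ξ ≤ t1 - a := min_le_right _ _
      linarith
  have hxa : x - a = ξ/2 := by simp [hxDef]
  have hBle : B ≤ (x-a)^(-(α-1)) := by
    apply le_rpow_neg (by linarith : (0:ℝ) < α-1) hBpos (by rw [hxa]; linarith)
    rw [hxa]
    calc ξ/2 ≤ ξ := by linarith
      _ ≤ B ^ (-(α-1)⁻¹) := min_le_left _ _
  have hfinal := key x hxmem
  have hrw : (x-a)^(1-α) = (x-a)^(-(α-1)) := by norm_num
  have hdx : 0 < d x := hdpos x (hsub1 ⟨hxmem.1, hxmem.2.le⟩)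
  have hc72B : c72 * B = d t1 + c72*(t1-a)^(1-α) := by
    rw [hBDef]; field_simp
  have : c72 * B ≤ c72 * (x-a)^(1-α) := by
    rw [hrw]
    exact mul_le_mul_of_nonneg_left hBle hc72pos.le
  linarith

/-- Left-rupture case: `h w > 0`, `h z = 0`, `w < z` gives a contradiction. -/
private lemma left_case_contra
    (N : ℕ) (hN : 2 ≤ N) {α p R : ℝ} (hα : 1 < α) (hp : 0 < p) (hR : 0 < R)
    (h : ℝ → ℝ)
    (hcont : ContinuousOn h (Ico 0 R))
    (hnonneg : ∀ r ∈ Ico (0 : ℝ) R, 0 ≤ h r)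
    (hode : ∀ r ∈ Ioo (0 : ℝ) R, 0 < h r →
      deriv (deriv h) r + ((N : ℝ) - 1) / r * deriv h r = 1 / α * h r ^ (-α) - p)
    {z w : ℝ} (hz : z ∈ Ioo (0:ℝ) R) (hhz : h z = 0)
    (hw : w ∈ Ico (0:ℝ) z) (hhw : 0 < h w) : False := by
  have hα0 : (0:ℝ) < α := by linarith
  have hN2 : (2:ℝ) ≤ (N:ℝ) := by exact_mod_cast hN
  -- the first zero after w
  set B : Set ℝ := {t | t ∈ Icc w z ∧ h t = 0} with hBDef
  have hBclosed : IsClosed B := by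
    have h1 : ContinuousOn h (Icc w z) :=
      hcont.mono (fun t ht => ⟨le_trans hw.1 ht.1, lt_of_le_of_lt ht.2 hz.2⟩)
    exact h1.preimage_isClosed_of_isClosed isClosed_Icc isClosed_singleton
  have hBne : B.Nonempty := ⟨z, ⟨hw.2.le, le_refl z⟩, hhz⟩
  have hBbdd : BddBelow B := ⟨w, fun t ht => ht.1.1⟩
  set a : ℝ := sInf B with haDef
  have haB : a ∈ B := hBclosed.csInf_mem hBne hBbdd
  have hha : h a = 0 := haB.2
  have haw : w < a := by
    rcases eq_or_lt_of_le haB.1.1 with h1 | h1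
    · exfalso; rw [h1, hha] at hhw; exact lt_irrefl 0 hhw
    · exact h1
  have haz : a ≤ z := haB.1.2
  have haIoo : a ∈ Ioo (0:ℝ) R := ⟨lt_of_le_of_lt hw.1 haw, lt_of_le_of_lt haz hz.2⟩
  have hposwa : ∀ t, w ≤ t → t < a → 0 < h t := by
    intro t ht1 ht2
    have htIco : t ∈ Ico (0:ℝ) R := ⟨le_trans hw.1 ht1, lt_trans ht2 haIoo.2⟩
    rcases lt_or_eq_of_le (hnonneg t htIco) with h1 | h1
    · exact h1
    · exfalso
      have : t ∈ B := ⟨⟨ht1, le_trans ht2.le haz⟩, h1.symm⟩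
      exact absurd (csInf_le hBbdd this) (not_le.mpr ht2)
  -- continuity at a
  have hcA : ContinuousAt h a := by
    apply (hcont a ⟨haIoo.1.le, haIoo.2⟩).continuousAt
    exact mem_of_superset (Ioo_mem_nhds haIoo.1 haIoo.2) Ioo_subset_Ico_self
  have htends : Tendsto h (𝓝 a) (𝓝 0) := by
    have := hcA; rw [ContinuousAt, hha] at this; exact this
  -- general smallness extraction near a
  have hsmall : ∀ e, 0 < e → ∀ y, y < a → ∃ y', y' ∈ Ioo y a ∧ h y' < e := by
    intro e he y hy
    have hmem : {t | h t < e} ∈ 𝓝 a := htends (Iio_mem_nhds he)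
    rcases mem_nhds_iff_exists_Ioo_subset.mp hmem with ⟨l, u, haIn, hsub⟩
    refine ⟨(max y l + a)/2, ⟨?_, ?_⟩, ?_⟩
    · have := le_max_left y l; have : max y l < a := max_lt hy haIn.1; linarith [le_max_left y l]
    · have : max y l < a := max_lt hy haIn.1; linarith
    · apply hsub
      constructor
      · have := le_max_right y l; have hmax : max y l < a := max_lt hy haIn.1; linarith
      · have hmax : max y l < a := max_lt hy haIn.1
        have : (max y l + a)/2 < a := by linarith
        exact lt_trans this haIn.2
  -- choose b1 < a with h < cmin on [b1, a)
  set cmin : ℝ := (2*α*p) ^ (-α⁻¹) with hcminDef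
  have hcmin : 0 < cmin := Real.rpow_pos_of_pos (by positivity) _
  have hmemc : {t | h t < cmin} ∈ 𝓝 a := htends (Iio_mem_nhds hcmin)
  rcases mem_nhds_iff_exists_Ioo_subset.mp hmemc with ⟨l, u, haIn, hsubc⟩
  set b1 : ℝ := (max (max w l) (a/2) + a)/2 with hb1Def
  have hb1lt : b1 < a := by
    have h1 : max (max w l) (a/2) < a := by
      apply max_lt (max_lt haw haIn.1); linarith [haIoo.1]
    simp only [hb1Def]; linarith
  have hb1w : w < b1 := by
    have h1 := le_max_left w l
    have h2 := le_max_left (max w l) (a/2)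
    simp only [hb1Def]; linarith
  have hb1l : l < b1 := by
    have h1 := le_max_right w l
    have h2 := le_max_left (max w l) (a/2)
    simp only [hb1Def]; linarith
  have hb10 : 0 < b1 := by
    have h2 := le_max_right (max w l) (a/2)
    have := haIoo.1
    simp only [hb1Def]; linarith
  have hb1small : ∀ t, b1 ≤ t → t < a → h t < cmin := by
    intro t ht1 ht2
    exact hsubc ⟨lt_of_lt_of_le hb1l ht1, lt_trans ht2 haIn.2⟩
  have hb1pos : ∀ t, b1 ≤ t → t < a → 0 < h t :=
    fun t ht1 ht2 => hposwa t (le_trans hb1w.le ht1) ht2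
  -- f > 0 there
  have hfpos : ∀ t, b1 ≤ t → t < a → 0 < 1/α * h t ^ (-α) - p := by
    intro t ht1 ht2
    have h1 := fbd hα hp (hb1pos t ht1 ht2) (hb1small t ht1 ht2).le
    have h2 : 1/α * h t ^ (-α) = 2*(1/(2*α) * h t ^ (-α)) := by field_simp
    rw [h2]; linarith
  -- h is antitone on [b1, a)
  have hanti : ∀ x ∈ Ico b1 a, ∀ y ∈ Ico b1 a, x ≤ y → h y ≤ h x := by
    apply anti_of_no_local_max
    · exact hcont.mono (fun t ht => ⟨le_trans hb10.le ht.1, lt_trans ht.2 haIoo.2⟩)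
    · intro m hm
      apply no_local_max N α p R h hcont hode m
        ⟨lt_trans hb10 hm.1, lt_trans hm.2 haIoo.2⟩
        (hb1pos m hm.1.le hm.2) (hfpos m hm.1.le hm.2)
    · intro e he y hy
      exact hsmall e he y hy.2
    · intro t ht; exact hb1pos t ht.1 ht.2
  -- deriv h < 0 on (b1, a), with full regularity
  set dh : ℝ → ℝ := deriv h with hdhDef
  have hdnonpos : ∀ r ∈ Ioo b1 a, dh r ≤ 0 := by
    intro r hr
    apply deriv_nonpos_right' hr.2
    intro t ht1 ht2
    exact hanti r ⟨hr.1.le, hr.2⟩ t ⟨le_trans hr.1.le ht1.le, ht2⟩ ht1.le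
  have hdneg : ∀ r ∈ Ioo b1 a, dh r < 0 := by
    intro r hr
    rcases lt_or_eq_of_le (hdnonpos r hr) with h2 | h2
    · exact h2
    exfalso
    have hrIoo : r ∈ Ioo (0:ℝ) R := ⟨lt_trans hb10 hr.1, lt_trans hr.2 haIoo.2⟩
    have heq := hode r hrIoo (hb1pos r hr.1.le hr.2)
    rw [h2, mul_zero, add_zero] at heq
    have hfr := hfpos r hr.1.le hr.2
    have hdd : DifferentiableAt ℝ dh r := by
      by_contra hnd
      rw [hdhDef] at hnd
      rw [deriv_zero_of_not_differentiableAt hnd] at heq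
      linarith
    have hD : HasDerivAt dh (1/α * h r ^ (-α) - p) r := by
      have h3 := hdd.hasDerivAt
      rw [show deriv dh r = 1/α * h r ^ (-α) - p from heq] at h3
      exact h3
    obtain ⟨t, htr, hta, htpos⟩ := exists_right hr.2 (ev_slope_right hD hfr)
    rw [h2] at htpos
    exact absurd (hdnonpos t ⟨lt_trans hr.1 htr, hta⟩) (not_le.mpr htpos)
  -- h is differentiable with derivative dh, and dh differentiable with the ODE
  have hdh : ∀ r ∈ Ioo b1 a, HasDerivAt h (dh r) r := by
    intro r hr
    have h1 : DifferentiableAt ℝ h r := by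
      by_contra hnd
      have := deriv_zero_of_not_differentiableAt hnd
      rw [← hdhDef] at this
      exact absurd this (ne_of_lt (hdneg r hr))
    exact h1.hasDerivAt
  have hgood : ∀ r ∈ Ioo b1 a,
      HasDerivAt dh (1/α * h r ^ (-α) - p - ((N:ℝ)-1)/r * dh r) r := by
    intro r hr
    have hrIoo : r ∈ Ioo (0:ℝ) R := ⟨lt_trans hb10 hr.1, lt_trans hr.2 haIoo.2⟩
    have heq := hode r hrIoo (hb1pos r hr.1.le hr.2)
    have hfr := hfpos r hr.1.le hr.2
    have hkd : ((N:ℝ)-1)/r * dh r ≤ 0 := by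
      apply mul_nonpos_of_nonneg_of_nonpos
      · apply div_nonneg (by linarith) (by linarith [hrIoo.1])
      · exact (hdneg r hr).le
    have hdd : DifferentiableAt ℝ dh r := by
      by_contra hnd
      rw [hdhDef] at hnd
      rw [deriv_zero_of_not_differentiableAt hnd, zero_add] at heq
      linarith
    have h3 := hdd.hasDerivAt
    rw [show deriv dh r = 1/α * h r ^ (-α) - p - ((N:ℝ)-1)/r * dh r by linarith] at h3
    exact h3
  -- the energy is non-increasing
  set C : ℝ := 1/(α*(α-1)) with hCDef
  have hCpos : 0 < C := by
    have : (0:ℝ) < α*(α-1) := by nlinarith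
    positivity
  set E : ℝ → ℝ := fun r => (1/2)*(dh r)^2 + C * (h r)^(1-α) + p * h r with hEDef
  have hE : ∀ r ∈ Ioo b1 a, HasDerivAt E (-(((N:ℝ)-1)/r) * (dh r)^2) r := by
    intro r hr
    have hhr := hb1pos r hr.1.le hr.2
    have h1 := ((hgood r hr).pow 2).const_mul (1/2 : ℝ)
    have h2 := ((hdh r hr).rpow_const (p := 1-α) (Or.inl hhr.ne')).const_mul C
    have h3 := (hdh r hr).const_mul p
    have h4 := (h1.add h2).add h3
    refine h4.congr_deriv ?_
    symm
    rw [show (1-α)-1 = -α by ring]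
    have hα1 : α - 1 ≠ 0 := ne_of_gt (by linarith)
    have hrne : r ≠ 0 := ne_of_gt (by linarith [lt_trans hb10 hr.1])
    rw [hCDef]
    field_simp
    ring
  have hEanti : AntitoneOn E (Ioo b1 a) := by
    apply antitoneOn_of_deriv_nonpos (convex_Ioo b1 a)
    · intro r hr
      exact ((hE r hr).differentiableAt).continuousAt.continuousWithinAt
    · intro r hr
      rw [interior_Ioo] at hr
      exact ((hE r hr).differentiableAt).differentiableWithinAt
    · intro r hr
      rw [interior_Ioo] at hr
      rw [(hE r hr).deriv]
      have h1 : (0:ℝ) ≤ ((N:ℝ)-1)/r := div_nonneg (by linarith) (by linarith [lt_trans hb10 hr.1])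
      have h2 : (0:ℝ) ≤ (dh r)^2 := sq_nonneg _
      have := mul_nonneg h1 h2
      linarith
  -- contradiction: the energy blows up approaching `a`
  set r0 : ℝ := (b1 + a)/2 with hr0Def
  have hr0mem : r0 ∈ Ioo b1 a := by constructor <;> (simp only [hr0Def]; linarith)
  set M : ℝ := E r0 / C + 1 with hMDef
  have hEr0pos : 0 < E r0 := by
    have h1 := hb1pos r0 hr0mem.1.le hr0mem.2
    have h2 : (0:ℝ) < (h r0)^(1-α) := Real.rpow_pos_of_pos h1 _
    have h3 : (0:ℝ) ≤ (dh r0)^2 := sq_nonneg _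
    simp only [hEDef]
    nlinarith
  have hMpos : 0 < M := by
    have := div_pos hEr0pos hCpos
    simp only [hMDef]; linarith
  obtain ⟨s, hs, hse⟩ := hsmall (M ^ (-(α-1)⁻¹)) (Real.rpow_pos_of_pos hMpos _) r0 hr0mem.2
  have hsmem : s ∈ Ioo b1 a := ⟨lt_trans hr0mem.1 hs.1, hs.2⟩
  have hspos := hb1pos s hsmem.1.le hsmem.2
  have hMle : M ≤ (h s) ^ (-(α-1)) :=
    le_rpow_neg (by linarith : (0:ℝ) < α - 1) hMpos hspos hse.le
  have hEs : E s ≤ E r0 := hEanti hr0mem hsmem hs.1.le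
  have hlow : C * (h s)^(1-α) ≤ E s := by
    have h3 : (0:ℝ) ≤ (dh s)^2 := sq_nonneg _
    have h4 : (0:ℝ) ≤ p * h s := by positivity
    simp only [hEDef]; nlinarith
  have hrw : (h s)^(1-α) = (h s)^(-(α-1)) := by norm_num
  have hCM : C * M ≤ C * (h s)^(1-α) := by
    rw [hrw]; exact mul_le_mul_of_nonneg_left hMle hCpos.le
  have hCMval : C * M = E r0 + C := by
    simp only [hMDef]; field_simp
  linarith

private lemma eps_h_lt {A0 ε x α : ℝ} (hα0 : 0 < α) (hA : 0 < A0) (hε : 0 < ε)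
    (hx : 0 < x) (hlt : x < (A0/ε) ^ ((1+α)⁻¹)) : ε * x < A0 * x ^ (-α) := by
  have h1 : x ^ (1+α) < ((A0/ε) ^ ((1+α)⁻¹)) ^ (1+α) :=
    Real.rpow_lt_rpow hx.le hlt (by linarith)
  have h2 : ((A0/ε) ^ ((1+α)⁻¹)) ^ (1+α) = A0/ε := by
    rw [← Real.rpow_mul (by positivity : (0:ℝ) ≤ A0/ε),
      inv_mul_cancel₀ (by positivity : (1+α) ≠ 0), Real.rpow_one]
  rw [h2] at h1
  have h3 : x ^ (1+α) = x * x^α := by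
    rw [Real.rpow_add hx, Real.rpow_one]
  have h4 : x ^ (-α) = (x^α)⁻¹ := Real.rpow_neg hx.le α
  have hxα : (0:ℝ) < x ^ α := Real.rpow_pos_of_pos hx _
  have h5 : x ^ (1+α) * ε < A0 := (lt_div_iff₀ hε).mp h1
  rw [h4, ← div_eq_mul_inv, lt_div_iff₀ hxα]
  rw [h3] at h5
  nlinarith

private lemma right_case_contra
    (N : ℕ) (hN : 2 ≤ N) {α p R : ℝ} (hα : 1 < α) (hp : 0 < p) (hR : 0 < R)
    (h : ℝ → ℝ)
    (hcont : ContinuousOn h (Ico 0 R))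
    (hode : ∀ r ∈ Ioo (0 : ℝ) R, 0 < h r →
      deriv (deriv h) r + ((N : ℝ) - 1) / r * deriv h r = 1 / α * h r ^ (-α) - p)
    {a : ℝ} (ha : a ∈ Ioo (0:ℝ) R) (hha : h a = 0)
    (hapos : ∀ t ∈ Ioo a R, 0 < h t) : False := by
  have hα0 : (0:ℝ) < α := by linarith
  have hN2 : (2:ℝ) ≤ (N:ℝ) := by exact_mod_cast hN
  have hN1 : (0:ℝ) < (N:ℝ) - 1 := by linarith
  have ha0 : 0 < a := ha.1
  set K : ℝ := ((N:ℝ)-1)/a with hKDef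
  have hK : 0 < K := div_pos hN1 ha0
  set ε : ℝ := 2/(α*a) with hεDef
  have hε : 0 < ε := by positivity
  set A0 : ℝ := a/(2*α*((N:ℝ)-1)) with hA0Def
  have hA0 : 0 < A0 := by positivity
  set cmin : ℝ := (2*α*p) ^ (-α⁻¹) with hcminDef
  have hcmin : 0 < cmin := Real.rpow_pos_of_pos (by positivity) _
  set c64 : ℝ := ((1/(2*α))/((K+ε)*ε)) ^ ((1+α)⁻¹) with hc64
  have hc64p : 0 < c64 := Real.rpow_pos_of_pos (by positivity) _
  set c65 : ℝ := ((A0/2)/ε) ^ ((1+α)⁻¹) with hc65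
  have hc65p : 0 < c65 := Real.rpow_pos_of_pos (by positivity) _
  set cthr : ℝ := min cmin (min c64 c65) with hcthr
  have hcthrp : 0 < cthr := lt_min hcmin (lt_min hc64p hc65p)
  have hcA : ContinuousAt h a := (hcont a ⟨ha0.le, ha.2⟩).continuousAt
      (mem_of_superset (Ioo_mem_nhds ha0 ha.2) Ioo_subset_Ico_self)
  have htends : Tendsto h (𝓝 a) (𝓝 0) := by
    have h1 := hcA; rw [ContinuousAt, hha] at h1; exact h1
  obtain ⟨l, u, haIn, hsubc⟩ :=
    mem_nhds_iff_exists_Ioo_subset.mp (htends (Iio_mem_nhds hcthrp))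
  set s0 : ℝ := min ((a+u)/2) ((a+R)/2) with hs0Def
  have has0 : a < s0 := lt_min (by linarith [haIn.2]) (by linarith [ha.2])
  have hs0R : s0 < R := lt_of_le_of_lt (min_le_right _ _) (by linarith [ha.2])
  have hs0u : s0 < u := lt_of_le_of_lt (min_le_left _ _) (by linarith [haIn.2])
  have hs0p : 0 < s0 := lt_trans ha0 has0
  have hIsub : Ioo a s0 ⊆ Ioo (0:ℝ) R := fun t ht => ⟨lt_trans ha0 ht.1, lt_trans ht.2 hs0R⟩
  have hsm : ∀ t ∈ Ioc a s0, h t < cthr := fun t ht =>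
    hsubc ⟨lt_trans haIn.1 ht.1, lt_of_le_of_lt ht.2 hs0u⟩
  have hpos : ∀ t ∈ Ioc a s0, 0 < h t := fun t ht =>
    hapos t ⟨ht.1, lt_of_le_of_lt ht.2 hs0R⟩
  set ff : ℝ → ℝ := fun r => 1/α * h r ^ (-α) - p with hffDef
  have hfl : ∀ t ∈ Ioc a s0, p ≤ 1/(2*α) * h t ^ (-α) := fun t ht =>
    fbd hα hp (hpos t ht) (le_trans (hsm t ht).le (min_le_left _ _))
  have hflow : ∀ t ∈ Ioc a s0, 1/(2*α) * h t ^ (-α) ≤ ff t := by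
    intro t ht
    have h2 : 1/α * h t ^ (-α) = 2*(1/(2*α) * h t ^ (-α)) := by field_simp
    simp only [hffDef]; rw [h2]; linarith [hfl t ht]
  have hfpos : ∀ t ∈ Ioc a s0, 0 < ff t := by
    intro t ht
    exact lt_of_lt_of_le hp (le_trans (hfl t ht) (hflow t ht))
  have hsmall : ∀ e, 0 < e → ∀ x, a < x → ∃ x', x' ∈ Ioo a x ∧ h x' < e := by
    intro e he x hx
    obtain ⟨l2, u2, hIn2, hsub2⟩ := mem_nhds_iff_exists_Ioo_subset.mp (htends (Iio_mem_nhds he))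
    have hmin := lt_min hx hIn2.2
    refine ⟨(a + min x u2)/2, ⟨by linarith, ?_⟩, ?_⟩
    · have h1 := min_le_left x u2; linarith
    · apply hsub2
      constructor
      · have := hIn2.1; linarith
      · have h1 := min_le_right x u2; linarith
  have hmono : ∀ x ∈ Ioc a s0, ∀ y ∈ Ioc a s0, x ≤ y → h x ≤ h y := by
    apply mono_of_no_local_max
    · exact hcont.mono (fun t ht => ⟨le_trans ha0.le ht.1, lt_of_le_of_lt ht.2 hs0R⟩)
    · intro m hm
      apply no_local_max N α p R h hcont hode m (hIsub hm) (hpos m ⟨hm.1, hm.2.le⟩)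
      exact hfpos m ⟨hm.1, hm.2.le⟩
    · intro e he x hx; exact hsmall e he x hx.1
    · exact hpos
  set dh : ℝ → ℝ := deriv h with hdhDef
  have hd0 : ∀ r ∈ Ioo a s0, 0 ≤ dh r := by
    intro r hr
    apply deriv_nonneg_right' hr.2
    intro t ht1 ht2
    exact hmono r ⟨hr.1, hr.2.le⟩ t ⟨lt_trans hr.1 ht1, ht2.le⟩ ht1.le
  have hdpos : ∀ r ∈ Ioo a s0, 0 < dh r := by
    intro r hr
    rcases lt_or_eq_of_le (hd0 r hr) with h2 | h2
    · exact h2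
    exfalso
    have heq := hode r (hIsub hr) (hpos r ⟨hr.1, hr.2.le⟩)
    rw [← h2, mul_zero, add_zero] at heq
    have hfr : 0 < 1/α * h r ^ (-α) - p := hfpos r ⟨hr.1, hr.2.le⟩
    have hdd : DifferentiableAt ℝ dh r := by
      by_contra hnd
      rw [hdhDef] at hnd
      rw [deriv_zero_of_not_differentiableAt hnd] at heq
      linarith
    have hD : HasDerivAt dh (1/α * h r ^ (-α) - p) r := by
      have h3 := hdd.hasDerivAt
      rw [heq] at h3; exact h3
    obtain ⟨t, hta, htr, hlt⟩ := exists_left hr.1 (ev_slope_left hD hfr)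
    rw [← h2] at hlt
    exact absurd (hd0 t ⟨hta, lt_trans htr hr.2⟩) (not_le.mpr hlt)
  have hdh : ∀ r ∈ Ioo a s0, HasDerivAt h (dh r) r := by
    intro r hr
    have h1 : DifferentiableAt ℝ h r := by
      by_contra hnd
      exact absurd (deriv_zero_of_not_differentiableAt hnd) (ne_of_gt (hdpos r hr))
    exact h1.hasDerivAt
  set φ : ℝ → ℝ := fun r => r * ff r / ((N:ℝ)-1) with hφDef
  have hφlow : ∀ r ∈ Ioo a s0, A0 * h r ^ (-α) ≤ φ r := by
    intro r hr
    have h1 := hflow r ⟨hr.1, hr.2.le⟩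
    have h2 : (0:ℝ) < h r ^ (-α) := Real.rpow_pos_of_pos (hpos r ⟨hr.1, hr.2.le⟩) _
    have har : a ≤ r := hr.1.le
    have h3 : a * (1/(2*α) * h r ^ (-α)) ≤ r * ff r :=
      mul_le_mul har h1 (by positivity) (by linarith)
    have h4 : A0 * h r ^ (-α) = a * (1/(2*α) * h r ^ (-α))/((N:ℝ)-1) := by
      rw [hA0Def]; field_simp; try ring
    rw [h4, hφDef]
    exact (div_le_div_iff_of_pos_right hN1).mpr h3
  have hφpos : ∀ r ∈ Ioo a s0, 0 < φ r := by
    intro r hr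
    have h2 : (0:ℝ) < h r ^ (-α) := Real.rpow_pos_of_pos (hpos r ⟨hr.1, hr.2.le⟩) _
    exact lt_of_lt_of_le (by positivity) (hφlow r hr)
  have hdich : ∀ r ∈ Ioo a s0,
      HasDerivAt dh (ff r - ((N:ℝ)-1)/r * dh r) r ∨
      (¬ DifferentiableAt ℝ dh r ∧ dh r = φ r) := by
    intro r hr
    have heq := hode r (hIsub hr) (hpos r ⟨hr.1, hr.2.le⟩)
    by_cases hdd : DifferentiableAt ℝ dh r
    · left
      have h3 := hdd.hasDerivAt
      rw [show deriv dh r = ff r - ((N:ℝ)-1)/r * dh r by simp only [hffDef]; linarith] at h3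
      exact h3
    · right
      refine ⟨hdd, ?_⟩
      rw [hdhDef] at hdd
      rw [deriv_zero_of_not_differentiableAt hdd, zero_add] at heq
      have hr0 : (0:ℝ) < r := lt_trans ha0 hr.1
      have hne1 : ((N:ℝ)-1) ≠ 0 := ne_of_gt hN1
      have hne2 : r ≠ 0 := ne_of_gt hr0
      have h4 : dh r = r/((N:ℝ)-1) * (((N:ℝ)-1)/r * dh r) := by field_simp
      rw [h4, heq]
      simp only [hφDef, hffDef]
      ring
  have hthr_bad : ∀ r ∈ Ioo a s0, h r < ((A0)/ε) ^ ((1+α)⁻¹) := by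
    intro r hr
    have h2 : h r < c65 := lt_of_lt_of_le (hsm r ⟨hr.1, hr.2.le⟩)
      (le_trans (min_le_right _ _) (min_le_right _ _))
    apply lt_of_lt_of_le h2
    rw [hc65]
    apply Real.rpow_le_rpow (by positivity) _ (by positivity)
    apply (div_le_div_iff_of_pos_right hε).mpr
    linarith
  have hbad_gt : ∀ r ∈ Ioo a s0, ε * h r < A0 * h r ^ (-α) := by
    intro r hr
    exact eps_h_lt hα0 hA0 hε (hpos r ⟨hr.1, hr.2.le⟩) (hthr_bad r hr)
  have hbad_dh : ∀ r ∈ Ioo a s0, ¬ DifferentiableAt ℝ dh r → ε * h r < dh r := by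
    intro r hr hnd
    rcases hdich r hr with hg | hb
    · exact absurd hg.differentiableAt hnd
    · rw [hb.2]
      exact lt_of_lt_of_le (hbad_gt r hr) (hφlow r hr)
  have hc64fact : ∀ r ∈ Ioo a s0, ∀ dval, 0 ≤ dval → dval ≤ ε * h r →
      0 < ff r - ((N:ℝ)-1)/r * dval - ε * dval := by
    intro r hr dval hd1 hd2
    have hhr := hpos r ⟨hr.1, hr.2.le⟩
    have h1 : ((K+ε)*ε) * h r < (1/(2*α)) * h r ^ (-α) := by
      apply eps_h_lt hα0 (by positivity) (by positivity) hhr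
      have h2 : h r < c64 := lt_of_lt_of_le (hsm r ⟨hr.1, hr.2.le⟩)
        (le_trans (min_le_right _ _) (min_le_left _ _))
      exact lt_of_lt_of_le h2 (le_of_eq hc64.symm)
    have hk : ((N:ℝ)-1)/r ≤ K := by
      rw [hKDef]
      exact div_le_div_of_nonneg_left hN1.le ha0 hr.1.le
    have hkpos : 0 ≤ ((N:ℝ)-1)/r := div_nonneg hN1.le (by linarith [lt_trans ha0 hr.1])
    have h3 : ((N:ℝ)-1)/r * dval + ε * dval ≤ (K+ε) * (ε * h r) := by
      have e1 : ((N:ℝ)-1)/r * dval ≤ K * (ε * h r) :=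
        mul_le_mul hk hd2 hd1 hK.le
      have e2 : ε * dval ≤ ε * (ε * h r) := mul_le_mul_of_nonneg_left hd2 hε.le
      ring_nf
      ring_nf at e1 e2
      linarith
    have h4 := hflow r ⟨hr.1, hr.2.le⟩
    have h5 : (K+ε) * (ε * h r) = ((K+ε)*ε) * h r := by ring
    rw [h5] at h3
    simp only [hffDef] at h4 ⊢
    linarith
  -- ═══════ main dichotomy ═══════
  by_cases hAex : ∃ t', t' ∈ Ioo a s0 ∧ dh t' < ε * h t'
  · -- case A': d dips below ε h somewhere
    obtain ⟨t', ht'm, ht'lt⟩ := hAex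
    set S : Set ℝ := {t | t ∈ Ioc a t' ∧ ∀ s ∈ Icc t t', dh s < ε * h s} with hSDef
    have ht'S : t' ∈ S := by
      refine ⟨⟨ht'm.1, le_refl t'⟩, fun s hs => ?_⟩
      have : s = t' := le_antisymm hs.2 hs.1
      rw [this]; exact ht'lt
    have hSne : S.Nonempty := ⟨t', ht'S⟩
    have hSbdd : BddBelow S := ⟨a, fun t ht => ht.1.1.le⟩
    set uu : ℝ := sInf S with huuDef
    have huua : a ≤ uu := le_csInf hSne (fun t ht => ht.1.1.le)
    have huut : uu ≤ t' := csInf_le hSbdd ht'S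
    have hV : ∀ s, uu < s → s ≤ t' → dh s < ε * h s := by
      intro s hs1 hs2
      obtain ⟨t, htS, hts⟩ := exists_lt_of_csInf_lt hSne hs1
      exact htS.2 s ⟨hts.le, hs2⟩
    have hmem : ∀ s, uu < s → s ≤ t' → s ∈ Ioo a s0 :=
      fun s h1 h2 => ⟨lt_of_le_of_lt huua h1, lt_of_le_of_lt h2 ht'm.2⟩
    have hgoodV : ∀ s, uu < s → s ≤ t' → HasDerivAt dh (ff s - ((N:ℝ)-1)/s * dh s) s := by
      intro s h1 h2
      rcases hdich s (hmem s h1 h2) with hg | hb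
      · exact hg
      · exfalso
        have := hbad_dh s (hmem s h1 h2) hb.1
        have := hV s h1 h2
        linarith
    rcases eq_or_lt_of_le huua with hua | hua
    · -- uu = a : fully regular initial interval
      apply reg_contra N hN hα hp h a t' ha0 ht'm.1
      · exact hcont.mono (fun t ht =>
          ⟨le_trans ha0.le ht.1, lt_of_le_of_lt ht.2 (lt_trans ht'm.2 hs0R)⟩)
      · exact hha
      · intro r hr; exact hpos r ⟨hr.1, le_trans hr.2 ht'm.2.le⟩
      · intro r hr; exact hdh r ⟨hr.1, lt_of_le_of_lt hr.2 ht'm.2⟩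
      · intro r hr; exact hdpos r ⟨hr.1, lt_of_le_of_lt hr.2 ht'm.2⟩
      · intro r hr
        have h6 := hgoodV r (by rw [← hua]; exact hr.1) hr.2
        exact h6
      · intro r hr; exact hfl r ⟨hr.1, le_trans hr.2 ht'm.2.le⟩
    · -- a < uu
      have huum : uu ∈ Ioo a s0 := ⟨hua, lt_of_le_of_lt huut ht'm.2⟩
      rcases hdich uu huum with hgu | hbu
      · -- uu is a good point : continuity + sign argument
        have hρd : HasDerivAt (fun s => dh s - ε * h s)
            (ff uu - ((N:ℝ)-1)/uu * dh uu - ε * dh uu) uu :=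
          hgu.sub ((hdh uu huum).const_mul ε)
        have hρcont : ContinuousAt (fun s => dh s - ε * h s) uu :=
          hρd.differentiableAt.continuousAt
        have hρle : dh uu - ε * h uu ≤ 0 := by
          rcases eq_or_lt_of_le huut with he | hl
          · rw [he]; linarith [ht'lt]
          · have htnd : Tendsto (fun s => dh s - ε * h s) (𝓝[>] uu)
                (𝓝 (dh uu - ε * h uu)) := hρcont.continuousWithinAt.tendsto
            apply le_of_tendsto htnd
            filter_upwards [Ioo_mem_nhdsGT_of_mem ⟨le_refl uu, hl⟩] with s hs
            linarith [hV s hs.1 hs.2.le]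
        rcases lt_or_eq_of_le hρle with hρlt | hρeq
        · -- ρ uu < 0 : extend the set S to the left of uu, contradicting sInf
          have hev : ∀ᶠ s in 𝓝 uu, dh s - ε * h s < 0 :=
            hρcont (Iio_mem_nhds hρlt)
          obtain ⟨l2, u2, hIn2, hsub2⟩ := mem_nhds_iff_exists_Ioo_subset.mp hev
          set t2 : ℝ := (max l2 a + uu)/2 with ht2Def
          have hmax2 : max l2 a < uu := max_lt hIn2.1 hua
          have ht2u : t2 < uu := by simp only [ht2Def]; linarith
          have ht2a : a < t2 := by
            simp only [ht2Def]; linarith [le_max_right l2 a]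
          have ht2l : l2 < t2 := by
            simp only [ht2Def]; linarith [le_max_left l2 a]
          have ht2S : t2 ∈ S := by
            refine ⟨⟨ht2a, le_trans ht2u.le huut⟩, fun s hs => ?_⟩
            rcases le_or_gt s uu with hsu | hsu
            · have hsm2 : s ∈ Ioo l2 u2 := ⟨lt_of_lt_of_le ht2l hs.1, lt_of_le_of_lt hsu hIn2.2⟩
              have h7 := hsub2 hsm2
              simp only [mem_setOf_eq] at h7
              linarith
            · linarith [hV s hsu hs.2]
          exact absurd (csInf_le hSbdd ht2S) (not_le.mpr ht2u)
        · -- ρ uu = 0 : derivative positive pushes ρ above 0 to the right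
          have huult : uu < t' := by
            rcases eq_or_lt_of_le huut with he | hl
            · exfalso; rw [he] at hρeq; linarith [ht'lt]
            · exact hl
          have hpos' : 0 < ff uu - ((N:ℝ)-1)/uu * dh uu - ε * dh uu := by
            apply hc64fact uu huum (dh uu) (hd0 uu huum)
            linarith
          obtain ⟨s, hs1, hs2, hs3⟩ := exists_right huult (ev_slope_right hρd hpos')
          change dh uu - ε * h uu < dh s - ε * h s at hs3
          have h7 := hV s hs1 hs2.le
          linarith
      · -- uu is a bad point : Darboux contradiction
        have hbuu : dh uu = φ uu := hbu.2
        have huult : uu < t' := by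
          rcases eq_or_lt_of_le huut with he | hl
          · exfalso
            have h7 := hbad_dh uu huum hbu.1
            rw [he] at h7; linarith [ht'lt]
          · exact hl
        have hylt : ε * h t' < A0 * h t' ^ (-α) := hbad_gt t' ht'm
        set yv : ℝ := (ε * h t' + A0 * h t' ^ (-α))/2 with hyv
        have h5 : A0 * h t' ^ (-α) ≤ dh uu := by
          rw [hbuu]
          apply le_trans _ (hφlow uu huum)
          have hm := hmono uu ⟨huum.1, huum.2.le⟩ t' ⟨ht'm.1, ht'm.2.le⟩ huult.le
          have h6 := Real.rpow_le_rpow_of_nonpos (hpos uu ⟨huum.1, huum.2.le⟩) hm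
            (by linarith : -α ≤ 0)
          exact mul_le_mul_of_nonneg_left h6 hA0.le
        have hDar := exists_hasDerivWithinAt_eq_of_lt_of_gt huult.le
          (f' := dh)
          (fun c hc => (hdh c ⟨lt_of_lt_of_le huum.1 hc.1,
            lt_of_le_of_lt hc.2 ht'm.2⟩).hasDerivWithinAt)
          (show yv < dh uu by simp only [hyv]; linarith)
          (show dh t' < yv by
            simp only [hyv]
            have := hV t' huult (le_refl t')
            linarith)
        obtain ⟨c, hcIoo, hc⟩ := hDar
        have hcm : c ∈ Ioo a s0 := hmem c hcIoo.1 hcIoo.2.le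
        have h8 := hV c hcIoo.1 hcIoo.2.le
        have h9 : h c ≤ h t' := hmono c ⟨hcm.1, hcm.2.le⟩ t' ⟨ht'm.1, ht'm.2.le⟩ hcIoo.2.le
        have h10 : ε * h c ≤ ε * h t' := mul_le_mul_of_nonneg_left h9 hε.le
        rw [hc] at h8
        simp only [hyv] at h8
        linarith
  · -- case B'
    push_neg at hAex
    have hB : ∀ t ∈ Ioo a s0, ε * h t ≤ dh t := hAex
    -- φ is differentiable with negative derivative
    set φv : ℝ → ℝ := fun r =>
      (1 * ff r + r * (1/α * (dh r * -α * h r ^ (-α-1))))/((N:ℝ)-1) with hφvDef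
    have hφd : ∀ r ∈ Ioo a s0, HasDerivAt φ (φv r) r := by
      intro r hr
      have hhr := hpos r ⟨hr.1, hr.2.le⟩
      have h1 : HasDerivAt (fun y => h y ^ (-α)) (dh r * -α * h r ^ (-α-1)) r := by
        have h0 := (hdh r hr).rpow_const (p := -α) (Or.inl hhr.ne')
        convert h0 using 1
      have h2 : HasDerivAt ff (1/α * (dh r * -α * h r ^ (-α-1))) r :=
        (h1.const_mul (1/α)).sub_const p
      have h3 := ((hasDerivAt_id r).mul h2).div_const ((N:ℝ)-1)
      exact h3
    have hφvneg : ∀ r ∈ Ioo a s0, φv r < 0 := by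
      intro r hr
      have hhr := hpos r ⟨hr.1, hr.2.le⟩
      have hhα : (0:ℝ) < h r ^ (-α) := Real.rpow_pos_of_pos hhr _
      have hhα1 : (0:ℝ) < h r ^ (-α-1) := Real.rpow_pos_of_pos hhr _
      have hid : h r * h r ^ (-α-1) = h r ^ (-α) := by
        nth_rewrite 1 [← Real.rpow_one (h r)]
        rw [← Real.rpow_add hhr]
        norm_num
      have hnum : 1 * ff r + r * (1/α * (dh r * -α * h r ^ (-α-1)))
          = ff r - r * dh r * h r ^ (-α-1) := by
        field_simp
        ring
      have hbd : a * (ε * h r) * h r ^ (-α-1) ≤ r * dh r * h r ^ (-α-1) := by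
        apply mul_le_mul_of_nonneg_right _ hhα1.le
        exact mul_le_mul hr.1.le (hB r hr) (by positivity) (by linarith [ha0, hr.1])
      have hbd2 : a * (ε * h r) * h r ^ (-α-1) = 2/α * h r ^ (-α) := by
        rw [show a * (ε * h r) * h r ^ (-α-1) = (a * ε) * (h r * h r ^ (-α-1)) by ring, hid,
          hεDef]
        field_simp
        try ring
      have hffb : ff r ≤ 1/α * h r ^ (-α) := by
        simp only [hffDef]; linarith
      have hnn : 1 * ff r + r * (1/α * (dh r * -α * h r ^ (-α-1))) < 0 := by
        rw [hnum]
        rw [hbd2] at hbd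
        have e2 : (0:ℝ) < 1/α * h r ^ (-α) := by positivity
        calc ff r - r * dh r * h r ^ (-α-1)
            ≤ 1/α * h r ^ (-α) - 2/α * h r ^ (-α) := sub_le_sub hffb hbd
          _ = -(1/α * h r ^ (-α)) := by ring
          _ < 0 := by linarith
      simp only [hφvDef]
      exact div_neg_of_neg_of_pos hnn hN1
    -- the comparison function Y
    set Y : ℝ → ℝ := fun r => r^(N-1) * (dh r - φ r) with hYDef
    have hcast : ((N-1 : ℕ) : ℝ) = (N:ℝ)-1 := by
      have h9 : 1 ≤ N := by omega
      push_cast [Nat.cast_sub h9]; ring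
    have hYgood : ∀ r ∈ Ioo a s0, DifferentiableAt ℝ dh r →
        HasDerivAt Y (-(r^(N-1) * φv r)) r ∧ 0 < -(r^(N-1) * φv r) := by
      intro r hr hdiff
      have hr0 : (0:ℝ) < r := lt_trans ha0 hr.1
      have hg : HasDerivAt dh (ff r - ((N:ℝ)-1)/r * dh r) r := by
        rcases hdich r hr with hg | hb
        · exact hg
        · exact absurd hdiff hb.1
      have hW : HasDerivAt (fun y => dh y - φ y)
          (ff r - ((N:ℝ)-1)/r * dh r - φv r) r := hg.sub (hφd r hr)
      have hpw : HasDerivAt (fun y : ℝ => y^(N-1)) (((N-1:ℕ):ℝ) * r^(N-2)) r := by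
        have := hasDerivAt_pow (N-1) r
        have he : N - 1 - 1 = N - 2 := by omega
        rwa [he] at this
      have hprod := hpw.mul hW
      have h3 : r^(N-1) = r^(N-2) * r := by
        rw [← pow_succ]; congr 1; omega
      have hkφ' : ((N:ℝ)-1) * φ r = r * ff r := by
        simp only [hφDef]
        field_simp
      have e3 : r^(N-1) * (((N:ℝ)-1)/r * dh r) = ((N:ℝ)-1) * r^(N-2) * dh r := by
        rw [h3]; field_simp
      have e4 : ((N:ℝ)-1) * r^(N-2) * φ r = r^(N-1) * ff r := by
        calc ((N:ℝ)-1)*r^(N-2)*φ r = r^(N-2) * (((N:ℝ)-1) * φ r) := by ring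
          _ = r^(N-2) * (r * ff r) := by rw [hkφ']
          _ = r^(N-1) * ff r := by rw [h3]; ring
      constructor
      · refine hprod.congr_deriv ?_
        symm
        rw [hcast]
        linear_combination e4 + e3
      · have h5 := hφvneg r hr
        have h6 : (0:ℝ) < r^(N-1) := pow_pos hr0 _
        nlinarith
    have hYbad : ∀ r ∈ Ioo a s0, ¬ DifferentiableAt ℝ dh r → Y r = 0 := by
      intro r hr hnd
      rcases hdich r hr with hg | hb
      · exact absurd hg.differentiableAt hnd
      · simp only [hYDef, hb.2]; ring
    have hYeq : ∀ s, 0 < s → dh s - φ s = Y s / s^(N-1) := by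
      intro s hs
      rw [hYDef]
      field_simp
    -- Claim (i): Y is nonnegative
    have hYnn : ∀ t' ∈ Ioo a s0, 0 ≤ Y t' := by
      intro t' ht'm
      by_contra hYneg
      push_neg at hYneg
      set S : Set ℝ := {t | t ∈ Ioc a t' ∧ ∀ s ∈ Icc t t', Y s < 0} with hSDef
      have ht'S : t' ∈ S := by
        refine ⟨⟨ht'm.1, le_refl t'⟩, fun s hs => ?_⟩
        have he : s = t' := le_antisymm hs.2 hs.1
        rw [he]; exact hYneg
      have hSne : S.Nonempty := ⟨t', ht'S⟩
      have hSbdd : BddBelow S := ⟨a, fun t ht => ht.1.1.le⟩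
      set uu : ℝ := sInf S with huuDef
      have huua : a ≤ uu := le_csInf hSne (fun t ht => ht.1.1.le)
      have huut : uu ≤ t' := csInf_le hSbdd ht'S
      have hV : ∀ s, uu < s → s ≤ t' → Y s < 0 := by
        intro s hs1 hs2
        obtain ⟨t, htS, hts⟩ := exists_lt_of_csInf_lt hSne hs1
        exact htS.2 s ⟨hts.le, hs2⟩
      have hmem : ∀ s, uu < s → s ≤ t' → s ∈ Ioo a s0 :=
        fun s h1 h2 => ⟨lt_of_le_of_lt huua h1, lt_of_le_of_lt h2 ht'm.2⟩
      have hgoodV : ∀ s, uu < s → s ≤ t' → DifferentiableAt ℝ dh s := by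
        intro s h1 h2
        by_contra hnd
        exact absurd (hYbad s (hmem s h1 h2) hnd) (ne_of_lt (hV s h1 h2))
      have hmonY : ∀ s, uu < s → s ≤ t' → Y s ≤ Y t' := by
        intro s h1 h2
        have hIccsub : Icc s t' ⊆ Ioo a s0 := fun c hc =>
          hmem c (lt_of_lt_of_le h1 hc.1) hc.2
        have hmono2 : MonotoneOn Y (Icc s t') := by
          apply monotoneOn_of_deriv_nonneg (convex_Icc s t')
          · intro c hc
            exact (((hYgood c (hIccsub hc)
              (hgoodV c (lt_of_lt_of_le h1 hc.1) hc.2)).1).differentiableAt)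
              |>.continuousAt.continuousWithinAt
          · intro c hc
            rw [interior_Icc] at hc
            exact (((hYgood c (hIccsub (Ioo_subset_Icc_self hc))
              (hgoodV c (lt_trans h1 hc.1) hc.2.le)).1).differentiableAt).differentiableWithinAt
          · intro c hc
            rw [interior_Icc] at hc
            have hg := hYgood c (hIccsub (Ioo_subset_Icc_self hc))
              (hgoodV c (lt_trans h1 hc.1) hc.2.le)
            rw [hg.1.deriv]
            exact hg.2.le
        exact hmono2 (left_mem_Icc.mpr h2) (right_mem_Icc.mpr h2) h2
      rcases eq_or_lt_of_le huua with hua | hua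
      · apply reg_contra N hN hα hp h a t' ha0 ht'm.1
        · exact hcont.mono (fun t ht =>
            ⟨le_trans ha0.le ht.1, lt_of_le_of_lt ht.2 (lt_trans ht'm.2 hs0R)⟩)
        · exact hha
        · intro r hr; exact hpos r ⟨hr.1, le_trans hr.2 ht'm.2.le⟩
        · intro r hr; exact hdh r ⟨hr.1, lt_of_le_of_lt hr.2 ht'm.2⟩
        · intro r hr; exact hdpos r ⟨hr.1, lt_of_le_of_lt hr.2 ht'm.2⟩
        · intro r hr
          have hrm : r ∈ Ioo a s0 := ⟨hr.1, lt_of_le_of_lt hr.2 ht'm.2⟩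
          have hgd := hgoodV r (by rw [← hua]; exact hr.1) hr.2
          rcases hdich r hrm with hg | hb
          · exact hg
          · exact absurd hgd hb.1
        · intro r hr; exact hfl r ⟨hr.1, le_trans hr.2 ht'm.2.le⟩
      · have huum : uu ∈ Ioo a s0 := ⟨hua, lt_of_le_of_lt huut ht'm.2⟩
        by_cases hdiffu : DifferentiableAt ℝ dh uu
        · have hYc : ContinuousAt Y uu :=
            ((hYgood uu huum hdiffu).1.differentiableAt).continuousAt
          have hYu : Y uu < 0 := by
            rcases eq_or_lt_of_le huut with he | hl
            · rw [he]; exact hYneg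
            · have htnd : Tendsto Y (𝓝[>] uu) (𝓝 (Y uu)) := hYc.continuousWithinAt.tendsto
              have hle : Y uu ≤ Y t' := by
                apply le_of_tendsto htnd
                filter_upwards [Ioo_mem_nhdsGT_of_mem ⟨le_refl uu, hl⟩] with s hs
                exact hmonY s hs.1 hs.2.le
              linarith
          have hev : ∀ᶠ s in 𝓝 uu, Y s < 0 := hYc (Iio_mem_nhds hYu)
          obtain ⟨l2, u2, hIn2, hsub2⟩ := mem_nhds_iff_exists_Ioo_subset.mp hev
          set t2 : ℝ := (max l2 a + uu)/2 with ht2Def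
          have hmax2 : max l2 a < uu := max_lt hIn2.1 hua
          have ht2u : t2 < uu := by simp only [ht2Def]; linarith
          have ht2a : a < t2 := by simp only [ht2Def]; linarith [le_max_right l2 a]
          have ht2l : l2 < t2 := by simp only [ht2Def]; linarith [le_max_left l2 a]
          have ht2S : t2 ∈ S := by
            refine ⟨⟨ht2a, le_trans ht2u.le huut⟩, fun s hs => ?_⟩
            rcases le_or_gt s uu with hsu | hsu
            · have hsm2 : s ∈ Ioo l2 u2 := ⟨lt_of_lt_of_le ht2l hs.1, lt_of_le_of_lt hsu hIn2.2⟩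
              have h7 := hsub2 hsm2
              simpa using h7
            · exact hV s hsu hs.2
          exact absurd (csInf_le hSbdd ht2S) (not_le.mpr ht2u)
        · have hbuu : dh uu = φ uu := by
            rcases hdich uu huum with hg | hb
            · exact absurd hg.differentiableAt hdiffu
            · exact hb.2
          have hYuu : Y uu = 0 := hYbad uu huum hdiffu
          have huult : uu < t' := by
            rcases eq_or_lt_of_le huut with he | hl
            · exfalso; rw [he] at hYuu; rw [hYuu] at hYneg; exact lt_irrefl 0 hYneg
            · exact hl
          set δ3 : ℝ := -Y t' / s0^(N-1) with hδ3
          have hδ3p : 0 < δ3 := div_pos (by linarith) (pow_pos hs0p _)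
          have hgap : ∀ s, uu < s → s ≤ t' → dh s ≤ φ s - δ3 := by
            intro s h1 h2
            have hsm3 := hmem s h1 h2
            have hs0' : (0:ℝ) < s := lt_trans ha0 hsm3.1
            have hYs : Y s ≤ Y t' := hmonY s h1 h2
            have he := hYeq s hs0'
            have h4 : Y s / s^(N-1) ≤ Y t' / s^(N-1) :=
              (div_le_div_iff_of_pos_right (pow_pos hs0' _)).mpr hYs
            have h5 : Y t' / s^(N-1) ≤ Y t' / s0^(N-1) := by
              rw [div_le_div_iff₀ (pow_pos hs0' _) (pow_pos hs0p _)]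
              apply mul_le_mul_of_nonpos_left _ (le_of_lt (by linarith : Y t' < (0:ℝ)))
              exact pow_le_pow_left₀ hs0'.le (le_trans h2 ht'm.2.le) _
            have h6 : dh s - φ s ≤ -δ3 := by
              rw [he, hδ3]
              calc Y s / s^(N-1) ≤ Y t'/s0^(N-1) := le_trans h4 h5
                _ = -(-Y t'/s0^(N-1)) := by ring
            linarith
          have hφc : ContinuousAt φ uu := ((hφd uu huum).differentiableAt).continuousAt
          have hev2 : ∀ᶠ c in 𝓝 uu, φ c ∈ Ioo (φ uu - δ3/2) (φ uu + δ3/2) :=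
            hφc (Ioo_mem_nhds (by linarith) (by linarith))
          obtain ⟨l3, u3, hIn3, hsub3⟩ := mem_nhds_iff_exists_Ioo_subset.mp hev2
          set sx : ℝ := min t' ((uu + u3)/2) with hsxDef
          have hsxu : uu < sx := lt_min huult (by linarith [hIn3.2])
          have hsxt : sx ≤ t' := min_le_left _ _
          have hsxu3 : sx < u3 := lt_of_le_of_lt (min_le_right _ _) (by linarith [hIn3.2])
          have hφnear : ∀ c, uu < c → c ≤ sx → φ c < φ uu + δ3/2 := by
            intro c h1 h2
            have hcm : c ∈ Ioo l3 u3 := ⟨lt_trans hIn3.1 h1, lt_of_le_of_lt h2 hsxu3⟩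
            exact (hsub3 hcm).2
          set yv : ℝ := φ uu - δ3/2 with hyv
          have hDar := exists_hasDerivWithinAt_eq_of_lt_of_gt hsxu.le
            (f' := dh)
            (fun c hc => (hdh c ⟨lt_of_lt_of_le huum.1 hc.1,
              lt_of_le_of_lt (le_trans hc.2 hsxt) ht'm.2⟩).hasDerivWithinAt)
            (show yv < dh uu by rw [hbuu]; simp only [hyv]; linarith)
            (show dh sx < yv by
              have h7 := hgap sx hsxu hsxt
              have h8 := hφnear sx hsxu (le_refl sx)
              simp only [hyv]; linarith)
          obtain ⟨c, hcIoo, hc⟩ := hDar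
          have h8 := hgap c hcIoo.1 (le_trans hcIoo.2.le hsxt)
          have h9 := hφnear c hcIoo.1 hcIoo.2.le
          rw [hc] at h8
          simp only [hyv] at h8
          linarith
    -- Claim (ii): below a bad point, Y is nonpositive
    have hYnp : ∀ z ∈ Ioo a s0, ¬ DifferentiableAt ℝ dh z → ∀ x ∈ Ioo a z, Y x ≤ 0 := by
      intro z hz hndz x hx
      by_contra hYx
      push_neg at hYx
      have hYz : Y z = 0 := hYbad z hz hndz
      have hxz : x < z := hx.2
      set S2 : Set ℝ := {t | t ∈ Icc x z ∧ ∀ s ∈ Icc x t, 0 < Y s} with hS2Def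
      have hxS2 : x ∈ S2 := by
        refine ⟨⟨le_refl x, hxz.le⟩, fun s hs => ?_⟩
        have he : s = x := le_antisymm hs.2 hs.1
        rw [he]; exact hYx
      have hS2ne : S2.Nonempty := ⟨x, hxS2⟩
      have hS2bdd : BddAbove S2 := ⟨z, fun t ht => ht.1.2⟩
      set ww : ℝ := sSup S2 with hwwDef
      have hwx : x ≤ ww := le_csSup hS2bdd hxS2
      have hwz : ww ≤ z := csSup_le hS2ne (fun t ht => ht.1.2)
      have hV2 : ∀ s, x ≤ s → s < ww → 0 < Y s := by
        intro s h1 h2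
        obtain ⟨t, htS, hts⟩ := exists_lt_of_lt_csSup hS2ne h2
        exact htS.2 s ⟨h1, hts.le⟩
      have hmem2 : ∀ s, x ≤ s → s ≤ z → s ∈ Ioo a s0 :=
        fun s h1 h2 => ⟨lt_of_lt_of_le hx.1 h1, lt_of_le_of_lt h2 hz.2⟩
      have hgood2 : ∀ s, x ≤ s → s < ww → DifferentiableAt ℝ dh s := by
        intro s h1 h2
        by_contra hnd
        exact (hV2 s h1 h2).ne' (hYbad s (hmem2 s h1 (le_trans h2.le hwz)) hnd)
      have hmonY2 : ∀ s, x ≤ s → s < ww → Y x ≤ Y s := by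
        intro s h1 h2
        have hIccsub : Icc x s ⊆ Ioo a s0 := fun c hc =>
          hmem2 c hc.1 (le_trans (le_trans hc.2 h2.le) hwz)
        have hmono2 : MonotoneOn Y (Icc x s) := by
          apply monotoneOn_of_deriv_nonneg (convex_Icc x s)
          · intro c hc
            exact (((hYgood c (hIccsub hc)
              (hgood2 c hc.1 (lt_of_le_of_lt hc.2 h2))).1).differentiableAt)
              |>.continuousAt.continuousWithinAt
          · intro c hc
            rw [interior_Icc] at hc
            exact (((hYgood c (hIccsub (Ioo_subset_Icc_self hc))
              (hgood2 c hc.1.le (lt_trans hc.2 h2))).1).differentiableAt).differentiableWithinAt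
          · intro c hc
            rw [interior_Icc] at hc
            have hg := hYgood c (hIccsub (Ioo_subset_Icc_self hc))
              (hgood2 c hc.1.le (lt_trans hc.2 h2))
            rw [hg.1.deriv]
            exact hg.2.le
        exact hmono2 (left_mem_Icc.mpr h1) (right_mem_Icc.mpr h1) h1
      by_cases hdiffw : DifferentiableAt ℝ dh ww
      · have hwm : ww ∈ Ioo a s0 := hmem2 ww hwx hwz
        have hYcw : ContinuousAt Y ww :=
          ((hYgood ww hwm hdiffw).1.differentiableAt).continuousAt
        have hYw : 0 < Y ww := by
          rcases eq_or_lt_of_le hwx with hwe | hwlt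
          · rw [← hwe]; exact hYx
          · have htnd : Tendsto Y (𝓝[<] ww) (𝓝 (Y ww)) := hYcw.continuousWithinAt.tendsto
            have hle : Y x ≤ Y ww := by
              apply ge_of_tendsto htnd
              filter_upwards [Ioo_mem_nhdsLT_of_mem ⟨hwlt, le_refl ww⟩] with s hs
              exact hmonY2 s hs.1.le hs.2
            linarith
        have hwzlt : ww < z := by
          rcases eq_or_lt_of_le hwz with he | hl
          · exfalso; rw [he, hYz] at hYw; exact lt_irrefl 0 hYw
          · exact hl
        have hev4 : ∀ᶠ s in 𝓝 ww, 0 < Y s := hYcw (Ioi_mem_nhds hYw)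
        obtain ⟨l4, u4, hIn4, hsub4⟩ := mem_nhds_iff_exists_Ioo_subset.mp hev4
        set t4 : ℝ := (ww + min u4 z)/2 with ht4Def
        have hmin4 : ww < min u4 z := lt_min hIn4.2 hwzlt
        have ht4w : ww < t4 := by simp only [ht4Def]; linarith
        have ht4z : t4 ≤ z := by simp only [ht4Def]; linarith [min_le_right u4 z]
        have ht4u4 : t4 < u4 := by simp only [ht4Def]; linarith [min_le_left u4 z]
        have ht4S2 : t4 ∈ S2 := by
          refine ⟨⟨le_trans hwx ht4w.le, ht4z⟩, fun s hs => ?_⟩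
          rcases lt_or_ge s ww with hsw | hsw
          · exact hV2 s hs.1 hsw
          · have hsm4 : s ∈ Ioo l4 u4 := ⟨lt_of_lt_of_le hIn4.1 hsw, lt_of_le_of_lt hs.2 ht4u4⟩
            have h7 := hsub4 hsm4
            simpa using h7
        exact absurd (le_csSup hS2bdd ht4S2) (not_le.mpr ht4w)
      · have hwm : ww ∈ Ioo a s0 := hmem2 ww hwx hwz
        have hYw0 : Y ww = 0 := hYbad ww hwm hdiffw
        have hbww : dh ww = φ ww := by
          rcases hdich ww hwm with hg | hb
          · exact absurd hg.differentiableAt hdiffw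
          · exact hb.2
        have hxw : x < ww := by
          rcases eq_or_lt_of_le hwx with hwe | hwlt
          · exfalso; rw [← hwe] at hYw0; rw [hYw0] at hYx; exact lt_irrefl 0 hYx
          · exact hwlt
        set δ5 : ℝ := Y x / s0^(N-1) with hδ5
        have hδ5p : 0 < δ5 := div_pos hYx (pow_pos hs0p _)
        have hgap2 : ∀ s, x ≤ s → s < ww → φ s + δ5 ≤ dh s := by
          intro s h1 h2
          have hsm5 := hmem2 s h1 (le_trans h2.le hwz)
          have hs0' : (0:ℝ) < s := lt_trans ha0 hsm5.1
          have hYs := hmonY2 s h1 h2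
          have he := hYeq s hs0'
          have h4 : Y x / s^(N-1) ≤ Y s / s^(N-1) :=
            (div_le_div_iff_of_pos_right (pow_pos hs0' _)).mpr hYs
          have h5 : Y x / s0^(N-1) ≤ Y x / s^(N-1) := by
            apply div_le_div_of_nonneg_left hYx.le (pow_pos hs0' _)
            exact pow_le_pow_left₀ hs0'.le (le_trans (le_trans h2.le hwz) hz.2.le) _
          rw [hδ5]
          linarith
        have hφc : ContinuousAt φ ww := ((hφd ww hwm).differentiableAt).continuousAt
        have hev5 : ∀ᶠ c in 𝓝 ww, φ c ∈ Ioo (φ ww - δ5/2) (φ ww + δ5/2) :=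
          hφc (Ioo_mem_nhds (by linarith) (by linarith))
        obtain ⟨l5, u5, hIn5, hsub5⟩ := mem_nhds_iff_exists_Ioo_subset.mp hev5
        set sx : ℝ := (max l5 x + ww)/2 with hsxDef
        have hmax5 : max l5 x < ww := max_lt hIn5.1 hxw
        have hsxw : sx < ww := by simp only [hsxDef]; linarith
        have hsxx : x ≤ sx := by simp only [hsxDef]; linarith [le_max_right l5 x]
        have hsxl5 : l5 < sx := by simp only [hsxDef]; linarith [le_max_left l5 x]
        have hφnear2 : ∀ c, sx ≤ c → c < ww → φ ww - δ5/2 < φ c := by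
          intro c h1 h2
          have hcm : c ∈ Ioo l5 u5 := ⟨lt_of_lt_of_le hsxl5 h1, lt_trans h2 hIn5.2⟩
          exact (hsub5 hcm).1
        set yv2 : ℝ := φ ww + δ5/2 with hyv2
        have hDar2 := exists_hasDerivWithinAt_eq_of_lt_of_gt hsxw.le
          (f' := dh)
          (fun c hc => (hdh c ⟨lt_of_lt_of_le (lt_of_lt_of_le hx.1 hsxx) hc.1,
            lt_of_le_of_lt hc.2 hwm.2⟩).hasDerivWithinAt)
          (show yv2 < dh sx by
            have h7 := hgap2 sx hsxx hsxw
            have h8 := hφnear2 sx (le_refl sx) hsxw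
            simp only [hyv2]; linarith)
          (show dh ww < yv2 by rw [hbww]; simp only [hyv2]; linarith)
        obtain ⟨c, hcIoo, hc⟩ := hDar2
        have h8 := hgap2 c (le_trans hsxx hcIoo.1.le) hcIoo.2
        have h9 := hφnear2 c hcIoo.1.le hcIoo.2
        rw [hc] at h8
        simp only [hyv2] at h8
        linarith
    -- final dichotomy of case B'
    by_cases hbadex : ∃ z, z ∈ Ioo a s0 ∧ ¬ DifferentiableAt ℝ dh z
    · obtain ⟨z, hz, hndz⟩ := hbadex
      set rr : ℝ := (a + z)/2 with hrrDef
      have hrm : rr ∈ Ioo a z := by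
        constructor <;> (simp only [hrrDef]; linarith [hz.1])
      have hrm' : rr ∈ Ioo a s0 := ⟨hrm.1, lt_trans hrm.2 hz.2⟩
      have hrr0 : (0:ℝ) < rr := lt_trans ha0 hrm.1
      have hdφ : ∀ c ∈ Ioo a z, dh c = φ c := by
        intro c hc
        have hcm : c ∈ Ioo a s0 := ⟨hc.1, lt_trans hc.2 hz.2⟩
        have h1 : Y c = 0 := le_antisymm (hYnp z hz hndz c hc) (hYnn c hcm)
        have h2 : (0:ℝ) < c := lt_trans ha0 hcm.1
        have h3 := hYeq c h2
        rw [h1] at h3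
        simp at h3
        linarith
      have hcong : HasDerivAt dh (φv rr) rr := by
        apply (hφd rr hrm').congr_of_eventuallyEq
        filter_upwards [Ioo_mem_nhds hrm.1 hrm.2] with c hc
        exact hdφ c hc
      have hg : HasDerivAt dh (ff rr - ((N:ℝ)-1)/rr * dh rr) rr := by
        rcases hdich rr hrm' with hg | hb
        · exact hg
        · exact absurd hcong.differentiableAt hb.1
      have huniq := hcong.unique hg
      have hkφ : ((N:ℝ)-1)/rr * φ rr = ff rr := by
        simp only [hφDef]
        field_simp
      have hzero : φv rr = 0 := by
        rw [huniq, hdφ rr hrm, hkφ]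
        ring
      have := hφvneg rr hrm'
      rw [hzero] at this
      exact lt_irrefl 0 this
    · push_neg at hbadex
      set t0 : ℝ := (a+s0)/2 with ht0Def
      have ht0a : a < t0 := by simp only [ht0Def]; linarith
      have ht0s : t0 < s0 := by simp only [ht0Def]; linarith
      apply reg_contra N hN hα hp h a t0 ha0 ht0a
      · exact hcont.mono (fun t ht =>
          ⟨le_trans ha0.le ht.1, lt_of_le_of_lt ht.2 (lt_trans ht0s hs0R)⟩)
      · exact hha
      · intro r hr; exact hpos r ⟨hr.1, le_trans hr.2 ht0s.le⟩
      · intro r hr; exact hdh r ⟨hr.1, lt_of_le_of_lt hr.2 ht0s⟩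
      · intro r hr; exact hdpos r ⟨hr.1, lt_of_le_of_lt hr.2 ht0s⟩
      · intro r hr
        have hrm : r ∈ Ioo a s0 := ⟨hr.1, lt_of_le_of_lt hr.2 ht0s⟩
        rcases hdich r hrm with hg | hb
        · exact hg
        · exact absurd (hbadex r hrm) hb.1
      · intro r hr; exact hfl r ⟨hr.1, le_trans hr.2 ht0s.le⟩

/-- A continuous radial solution of `Δh = (1/α) h^(-α) - p` on `B_R(0)` — a nonnegative
continuous function on `[0,R)`, not identically zero, solving the radial ODE on the open
set where it is positive — cannot vanish away from the origin: `h(r) > 0` for all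
`r ∈ (0,R)`. -/
theorem no_rupture_away_from_origin
    (N : ℕ) (hN : 2 ≤ N) (α p R : ℝ) (hα : 1 < α) (hp : 0 < p) (hR : 0 < R)
    (h : ℝ → ℝ)
    (hcont : ContinuousOn h (Ico 0 R))
    (hnonneg : ∀ r ∈ Ico (0 : ℝ) R, 0 ≤ h r)
    (hnontriv : ¬ ∀ r ∈ Ico (0 : ℝ) R, h r = 0)
    (hode : ∀ r ∈ Ioo (0 : ℝ) R, 0 < h r →
      deriv (deriv h) r + ((N : ℝ) - 1) / r * deriv h r = 1 / α * h r ^ (-α) - p) :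
    ∀ r ∈ Ioo (0 : ℝ) R, 0 < h r := by
  intro r0 hr0
  by_contra hcon
  push_neg at hcon
  have hr0z : h r0 = 0 := le_antisymm hcon (hnonneg r0 ⟨hr0.1.le, hr0.2⟩)
  push_neg at hnontriv
  obtain ⟨r1, hr1m, hr1ne⟩ := hnontriv
  have hr1pos : 0 < h r1 := lt_of_le_of_ne (hnonneg r1 hr1m) (Ne.symm hr1ne)
  by_cases HL : ∃ z, z ∈ Ioo (0:ℝ) R ∧ h z = 0 ∧ ∃ w, w ∈ Ico (0:ℝ) z ∧ 0 < h w
  · obtain ⟨z, hz, hhz, w, hw, hhw⟩ := HL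
    exact left_case_contra N hN hα hp hR h hcont hnonneg hode hz hhz hw hhw
  · push_neg at HL
    -- all zeros in (0,R) lie at or below r1
    have hzle : ∀ z, z ∈ Ioo (0:ℝ) R → h z = 0 → z ≤ r1 := by
      intro z hzm hz0
      by_contra hlt
      push_neg at hlt
      have := HL z hzm hz0 r1 ⟨hr1m.1, hlt⟩
      linarith
  -- the last zero
    set A : Set ℝ := {t | t ∈ Icc r0 r1 ∧ h t = 0} with hADef
    have hr0r1 : r0 ≤ r1 := hzle r0 hr0 hr0z
    have hAclosed : IsClosed A := by
      have h1 : ContinuousOn h (Icc r0 r1) :=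
        hcont.mono (fun t ht => ⟨le_trans hr0.1.le ht.1,
          lt_of_le_of_lt ht.2 (lt_of_le_of_ne hr1m.2.le (by rintro rfl; exact hr1m.2.false))⟩)
      exact h1.preimage_isClosed_of_isClosed isClosed_Icc isClosed_singleton
    have hAne : A.Nonempty := ⟨r0, ⟨le_refl r0, hr0r1⟩, hr0z⟩
    have hAbdd : BddAbove A := ⟨r1, fun t ht => ht.1.2⟩
    set a : ℝ := sSup A with haDef
    have haA : a ∈ A := hAclosed.csSup_mem hAne hAbdd
    have hha : h a = 0 := haA.2
    have haIoo : a ∈ Ioo (0:ℝ) R :=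
      ⟨lt_of_lt_of_le hr0.1 haA.1.1, lt_of_le_of_lt haA.1.2 hr1m.2⟩
    have hapos : ∀ t ∈ Ioo a R, 0 < h t := by
      intro t ht
      have htm : t ∈ Ico (0:ℝ) R := ⟨le_trans haIoo.1.le ht.1.le, ht.2⟩
      rcases lt_or_eq_of_le (hnonneg t htm) with h1 | h1
      · exact h1
      exfalso
      have htz : h t = 0 := h1.symm
      have htIoo : t ∈ Ioo (0:ℝ) R := ⟨lt_trans haIoo.1 ht.1, ht.2⟩
      have htr1 : t ≤ r1 := hzle t htIoo htz
      have htA : t ∈ A := ⟨⟨le_trans haA.1.1 ht.1.le, htr1⟩, htz⟩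
      exact absurd (le_csSup hAbdd htA) (not_le.mpr ht.1)
    exact right_case_contra N hN hα hp hR h hcont hode haIoo hha hapos
end
end

section
/- Let N ≥ 2, α > 1 and p > 0. Let h be a positive C² function on (0,∞) satisfying h'' + ((N-1)/r)h' = (1/α)h^{-α} − p on (0,∞). Then for every r_0 > 0 there exists r_1 > r_0 such that h'(r_1) = 0. -/
open Set Filter
open Topology

noncomputable section


/-- Monotone from pointwise derivative lower bound 0 on `Ici a`. -/
lemma monoOn_Ici {φ φ' : ℝ → ℝ} {a : ℝ}
    (hd : ∀ x ∈ Ici a, HasDerivAt φ (φ' x) x)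
    (h0 : ∀ x ∈ Ioi a, 0 ≤ φ' x) : MonotoneOn φ (Ici a) := by
  refine monotoneOn_of_deriv_nonneg (convex_Ici a)
    (fun x hx => (hd x hx).continuousAt.continuousWithinAt) ?_ ?_
  · rw [interior_Ici]
    exact fun x hx => ((hd x (Ioi_subset_Ici_self hx)).differentiableAt).differentiableWithinAt
  · rw [interior_Ici]
    intro x hx
    rw [(hd x (Ioi_subset_Ici_self hx)).deriv]
    exact h0 x hx

lemma antiOn_Ici {φ φ' : ℝ → ℝ} {a : ℝ}
    (hd : ∀ x ∈ Ici a, HasDerivAt φ (φ' x) x)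
    (h0 : ∀ x ∈ Ioi a, φ' x ≤ 0) : AntitoneOn φ (Ici a) := by
  refine antitoneOn_of_deriv_nonpos (convex_Ici a)
    (fun x hx => (hd x hx).continuousAt.continuousWithinAt) ?_ ?_
  · rw [interior_Ici]
    exact fun x hx => ((hd x (Ioi_subset_Ici_self hx)).differentiableAt).differentiableWithinAt
  · rw [interior_Ici]
    intro x hx
    rw [(hd x (Ioi_subset_Ici_self hx)).deriv]
    exact h0 x hx

lemma antiOn_Icc {φ φ' : ℝ → ℝ} {a b : ℝ}
    (hd : ∀ x ∈ Icc a b, HasDerivAt φ (φ' x) x)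
    (h0 : ∀ x ∈ Ioo a b, φ' x ≤ 0) : AntitoneOn φ (Icc a b) := by
  refine antitoneOn_of_deriv_nonpos (convex_Icc a b)
    (fun x hx => (hd x hx).continuousAt.continuousWithinAt) ?_ ?_
  · rw [interior_Icc]
    exact fun x hx => ((hd x (Ioo_subset_Icc_self hx)).differentiableAt).differentiableWithinAt
  · rw [interior_Icc]
    intro x hx
    rw [(hd x (Ioo_subset_Icc_self hx)).deriv]
    exact h0 x hx

/-- Convexity-type bound: for `0 < t ≤ s`, `α s^(-α-1) (s - t) ≤ t^(-α) - s^(-α)`. -/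
lemma rpow_convexity {α t s : ℝ} (hα : 0 < α) (ht : 0 < t) (hts : t ≤ s) :
    α * s ^ (-α - 1) * (s - t) ≤ t ^ (-α) - s ^ (-α) := by
  have hs : 0 < s := lt_of_lt_of_le ht hts
  set φ : ℝ → ℝ := fun x => x ^ (-α) + α * s ^ (-α - 1) * x with hφ
  have hanti : AntitoneOn φ (Icc t s) := by
    refine antiOn_Icc (φ' := fun x => (-α) * x ^ (-α - 1) + α * s ^ (-α - 1)) ?_ ?_
    · intro x hx
      have hx0 : (0:ℝ) < x := lt_of_lt_of_le ht hx.1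
      have h1 : HasDerivAt (fun x : ℝ => x ^ (-α)) ((-α) * x ^ (-α - 1)) x :=
        Real.hasDerivAt_rpow_const (Or.inl hx0.ne')
      have h2 := h1.add ((hasDerivAt_id x).const_mul (α * s ^ (-α - 1)))
      simp only [id, mul_one] at h2
      exact h2
    · intro x hx
      have hx0 : (0:ℝ) < x := lt_of_lt_of_le ht hx.1.le
      have : s ^ (-α - 1) ≤ x ^ (-α - 1) :=
        Real.rpow_le_rpow_of_nonpos hx0 hx.2.le (by linarith)
      show -α * x ^ (-α - 1) + α * s ^ (-α - 1) ≤ 0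
      nlinarith
  have h2 := hanti (left_mem_Icc.2 hts) (right_mem_Icc.2 hts) hts
  simp only [hφ] at h2
  nlinarith

/-- Abstract "no monotone convergence to the degenerate equilibrium" bootstrap.
`W` plays the role of `± r^(k+1) h'`, `u` of `±(L - h) ≥ 0`, with `N = k+2`. -/
lemma bootstrap (k : ℕ) (s₀ κ : ℝ) (hs₀ : 0 < s₀) (hκ : 0 < κ)
    (W u ω : ℝ → ℝ)
    (hWd : ∀ r ∈ Ici s₀, HasDerivAt W (ω r) r)
    (hω : ∀ r ∈ Ici s₀, κ * r ^ (k + 1) * u r ≤ ω r)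
    (hud : ∀ r ∈ Ici s₀, HasDerivAt u (-(W r) / r ^ (k + 1)) r)
    (hu0 : ∀ r ∈ Ici s₀, 0 ≤ u r)
    (hW0 : 0 < W s₀) : False := by
  have hpow : ∀ x : ℝ, 0 < x → (x : ℝ) ^ (k + 1) = x ^ ((k : ℝ) + 1) := by
    intro x hx
    rw [← Real.rpow_natCast x (k + 1)]
    norm_num
  have hWmono : MonotoneOn W (Ici s₀) := by
    refine monoOn_Ici hWd (fun r hr => le_trans ?_ (hω r (Ioi_subset_Ici_self hr)))
    have hr0 : (0:ℝ) < r := lt_trans hs₀ hr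
    have := hu0 r (Ioi_subset_Ici_self hr)
    positivity
  set R₀ := max s₀ 1 with hR₀
  set P : ℝ → Prop := fun β => ∃ c, 0 < c ∧ ∃ R, R₀ ≤ R ∧ ∀ r, R ≤ r → c * r ^ β ≤ W r with hP
  have hbase : P 0 := by
    refine ⟨W s₀, hW0, R₀, le_refl _, fun r hr => ?_⟩
    have hs₀r : s₀ ≤ r := le_trans (le_max_left _ _) hr
    rw [Real.rpow_zero, mul_one]
    exact hWmono self_mem_Ici hs₀r hs₀r
  -- facts extracted from P β
  have hfacts : ∀ (β c R : ℝ), R₀ ≤ R → 0 < c → (∀ r, R ≤ r → c * r ^ β ≤ W r) →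
      s₀ ≤ R ∧ 1 ≤ R ∧ 0 < R := by
    intro β c R hR hc _
    exact ⟨le_trans (le_max_left _ _) hR, le_trans (le_max_right _ _) hR,
      lt_of_lt_of_le hs₀ (le_trans (le_max_left _ _) hR)⟩
  -- Step 1: if β ≥ k then contradiction
  have hstepF : ∀ β : ℝ, (k : ℝ) ≤ β → P β → False := by
    intro β hkβ ⟨c, hc, R, hRR₀, hPb⟩
    obtain ⟨hs₀R, h1R, hRpos⟩ := hfacts β c R hRR₀ hc hPb
    -- u x + c * log x is antitone on Ici R
    have hkey : ∀ x : ℝ, R ≤ x → c * x⁻¹ ≤ W x / x ^ (k + 1) := by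
      intro x hx
      have hx0 : (0:ℝ) < x := lt_of_lt_of_le hRpos hx
      have h1x : (1:ℝ) ≤ x := le_trans h1R hx
      have hb : c * x ^ β ≤ W x := hPb x hx
      have hxx : x ^ (-(1:ℝ)) ≤ x ^ (β - ((k:ℝ) + 1)) :=
        Real.rpow_le_rpow_of_exponent_le h1x (by linarith)
      have hdiv : x ^ (β - ((k:ℝ) + 1)) = x ^ β / x ^ (k + 1) := by
        rw [Real.rpow_sub hx0, hpow x hx0]
      rw [Real.rpow_neg_one] at hxx
      rw [hdiv] at hxx
      have hpk : (0:ℝ) < x ^ (k + 1) := by positivity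
      calc c * x⁻¹ ≤ c * (x ^ β / x ^ (k + 1)) := by
            exact mul_le_mul_of_nonneg_left hxx (le_of_lt hc)
        _ = c * x ^ β / x ^ (k + 1) := by ring
        _ ≤ W x / x ^ (k + 1) := by
            gcongr
    set φ : ℝ → ℝ := fun x => u x + c * Real.log x with hφ
    have hanti : AntitoneOn φ (Ici R) := by
      refine antiOn_Ici (φ' := fun x => -(W x) / x ^ (k + 1) + c * x⁻¹) ?_ ?_
      · intro x hx
        have hx0 : (0:ℝ) < x := lt_of_lt_of_le hRpos hx
        exact (hud x (le_trans hs₀R hx)).add ((Real.hasDerivAt_log hx0.ne').const_mul c)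
      · intro x hx
        have hx0 : (0:ℝ) < x := lt_of_lt_of_le hRpos (le_of_lt hx)
        have h3 := hkey x (le_of_lt hx)
        have hpk : (0:ℝ) < x ^ (k + 1) := by positivity
        have h4 : -(W x) / x ^ (k + 1) = -(W x / x ^ (k + 1)) := by ring
        show -(W x) / x ^ (k + 1) + c * x⁻¹ ≤ 0
        rw [h4]
        linarith
    set r₁ := R * Real.exp (u R / c + 1) with hr₁
    have huR : 0 ≤ u R := hu0 R hs₀R
    have hexp1 : (1:ℝ) ≤ Real.exp (u R / c + 1) := Real.one_le_exp (by positivity)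
    have hr₁R : R ≤ r₁ := by nlinarith
    have h2 := hanti self_mem_Ici hr₁R hr₁R
    have hlog : Real.log r₁ = Real.log R + (u R / c + 1) := by
      rw [hr₁, Real.log_mul hRpos.ne' (Real.exp_ne_zero _), Real.log_exp]
    have hur₁ : 0 ≤ u r₁ := hu0 r₁ (le_trans hs₀R hr₁R)
    simp only [hφ] at h2
    rw [hlog] at h2
    have hcc : c * (Real.log R + (u R / c + 1)) = c * Real.log R + u R + c := by
      field_simp
      ring
    nlinarith
  -- Step 2: if β < k then upgrade P β to P (β + 2)
  have hstepU : ∀ β : ℝ, 0 ≤ β → β < (k : ℝ) → P β → P (β + 2) := by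
    intro β hβ0 hβk ⟨c, hc, R, hRR₀, hPb⟩
    obtain ⟨hs₀R, h1R, hRpos⟩ := hfacts β c R hRR₀ hc hPb
    set γ : ℝ := (k : ℝ) - β with hγ
    have hγ0 : 0 < γ := by rw [hγ]; linarith
    have hβ2 : (0:ℝ) < β + 2 := by linarith
    -- Claim A: u r ≥ (c/γ) r^(-γ) for r ≥ R
    have hA : ∀ r, R ≤ r → c / γ * r ^ (-γ) ≤ u r := by
      intro r hr
      have hr0 : (0:ℝ) < r := lt_of_lt_of_le hRpos hr
      have hanti : AntitoneOn (fun x => u x - c / γ * x ^ (-γ)) (Ici R) := by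
        refine antiOn_Ici (φ' := fun x => -(W x) / x ^ (k + 1) + c * x ^ (-γ - 1)) ?_ ?_
        · intro x hx
          have hx0 : (0:ℝ) < x := lt_of_lt_of_le hRpos hx
          have h1 : HasDerivAt (fun y : ℝ => y ^ (-γ)) ((-γ) * x ^ (-γ - 1)) x :=
            Real.hasDerivAt_rpow_const (Or.inl hx0.ne')
          have h2 := (hud x (le_trans hs₀R hx)).sub (h1.const_mul (c / γ))
          refine h2.congr_deriv ?_
          field_simp
          ring
        · intro x hx
          have hx0 : (0:ℝ) < x := lt_of_lt_of_le hRpos (le_of_lt hx)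
          have hb := hPb x (le_of_lt hx)
          have hpk : (0:ℝ) < x ^ (k + 1) := by positivity
          have heq : x ^ (-γ - 1) = x ^ β / x ^ (k + 1) := by
            rw [hpow x hx0, ← Real.rpow_sub hx0]
            congr 1
            rw [hγ]
            ring
          show -(W x) / x ^ (k + 1) + c * x ^ (-γ - 1) ≤ 0
          rw [heq]
          calc -(W x) / x ^ (k + 1) + c * (x ^ β / x ^ (k + 1))
              = (-(W x) + c * x ^ β) / x ^ (k + 1) := by ring
            _ ≤ 0 := div_nonpos_of_nonpos_of_nonneg (by linarith) hpk.le
      have key : ∀ s, r ≤ s → c / γ * r ^ (-γ) - c / γ * s ^ (-γ) ≤ u r := by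
        intro s hs
        have h4 := hanti (show r ∈ Ici R from hr) (show s ∈ Ici R from le_trans hr hs) hs
        have h5 : 0 ≤ u s := hu0 s (le_trans hs₀R (le_trans hr hs))
        simp only at h4
        linarith
      have hT : Tendsto (fun s : ℝ => c / γ * r ^ (-γ) - c / γ * s ^ (-γ)) atTop
          (𝓝 (c / γ * r ^ (-γ) - c / γ * 0)) :=
        tendsto_const_nhds.sub ((tendsto_rpow_neg_atTop hγ0).const_mul (c / γ))
      have h6 := le_of_tendsto hT (by
        filter_upwards [eventually_ge_atTop r] with s hs using key s hs)
      simpa using h6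
    -- Claim B: W grows like r^(β+2)
    set c₁ := κ * (c / γ) with hc₁
    have hc₁0 : 0 < c₁ := by positivity
    have hmono : MonotoneOn (fun x => W x - c₁ / (β + 2) * x ^ (β + 2)) (Ici R) := by
      refine monoOn_Ici (φ' := fun x => ω x - c₁ * x ^ (β + 1)) ?_ ?_
      · intro x hx
        have hx0 : (0:ℝ) < x := lt_of_lt_of_le hRpos hx
        have h1 : HasDerivAt (fun y : ℝ => y ^ (β + 2)) ((β + 2) * x ^ (β + 2 - 1)) x :=
          Real.hasDerivAt_rpow_const (Or.inl hx0.ne')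
        have h2 := (hWd x (le_trans hs₀R hx)).sub (h1.const_mul (c₁ / (β + 2)))
        refine h2.congr_deriv ?_
        have he : β + 2 - 1 = β + 1 := by ring
        rw [he]
        field_simp
      · intro x hx
        have hx0 : (0:ℝ) < x := lt_of_lt_of_le hRpos (le_of_lt hx)
        have hAx := hA x (le_of_lt hx)
        have h5 := hω x (le_trans hs₀R (le_of_lt hx))
        show 0 ≤ ω x - c₁ * x ^ (β + 1)
        have h6 : c₁ * x ^ (β + 1) ≤ κ * x ^ (k + 1) * u x := by
          have h7 : κ * x ^ (k + 1) * (c / γ * x ^ (-γ)) ≤ κ * x ^ (k + 1) * u x :=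
            mul_le_mul_of_nonneg_left hAx (by positivity)
          have hxx : x ^ ((k:ℝ) + 1) * x ^ (-γ) = x ^ (β + 1) := by
            rw [← Real.rpow_add hx0]
            congr 1
            rw [hγ]
            ring
          have h8 : κ * x ^ (k + 1) * (c / γ * x ^ (-γ)) = c₁ * x ^ (β + 1) := by
            rw [hpow x hx0, hc₁]
            calc κ * x ^ ((k:ℝ)+1) * (c/γ * x ^ (-γ))
                = κ * (c/γ) * (x ^ ((k:ℝ)+1) * x ^ (-γ)) := by ring
              _ = κ * (c/γ) * x ^ (β+1) := by rw [hxx]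
          linarith [h7, h8.symm.le]
        linarith
    refine ⟨c₁ / (2 * (β + 2)), by positivity, 2 * R, by linarith, ?_⟩
    intro r hr
    have hRr : R ≤ r := by linarith
    have hr0 : (0:ℝ) < r := lt_of_lt_of_le hRpos hRr
    have h8 := hmono self_mem_Ici (show r ∈ Ici R from hRr) hRr
    simp only at h8
    have hWR : 0 < W R := lt_of_lt_of_le (by positivity) (hPb R le_rfl)
    have hRb : R ^ (β + 2) ≤ r ^ (β + 2) / 2 := by
      have h9 : (2 * R) ^ (β + 2) ≤ r ^ (β + 2) :=
        Real.rpow_le_rpow (by positivity) hr (by linarith)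
      have h10 : (2:ℝ) ^ (β + 2) * R ^ (β + 2) = (2 * R) ^ (β + 2) :=
        (Real.mul_rpow two_pos.le hRpos.le).symm
      have h11 : (2:ℝ) ≤ 2 ^ (β + 2) := by
        nth_rewrite 1 [← Real.rpow_one 2]
        exact Real.rpow_le_rpow_of_exponent_le one_le_two (by linarith)
      nlinarith [Real.rpow_nonneg (le_of_lt hRpos) (β + 2)]
    have h12 : c₁ / (β + 2) * (r ^ (β + 2) - R ^ (β + 2)) ≥ c₁ / (β + 2) * (r ^ (β + 2) / 2) := by
      apply mul_le_mul_of_nonneg_left (by linarith) (by positivity)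
    have h13 : c₁ / (2 * (β + 2)) * r ^ (β + 2) = c₁ / (β + 2) * (r ^ (β + 2) / 2) := by
      field_simp
    linarith
  -- induction on m : P (2 m) for every m, then contradiction at m = k
  have hall : ∀ m : ℕ, P (2 * (m : ℝ)) := by
    intro m
    induction m with
    | zero => simpa using hbase
    | succ m ih =>
      by_cases hc2 : (k : ℝ) ≤ 2 * (m : ℝ)
      · exact (hstepF _ hc2 ih).elim
      · push_neg at hc2
        have h14 := hstepU _ (by positivity) hc2 ih
        have h15 : (2:ℝ) * ((m + 1 : ℕ) : ℝ) = 2 * (m : ℝ) + 2 := by push_cast; ring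
        rw [h15]
        exact h14
  exact hstepF (2 * (k : ℝ)) (by nlinarith [Nat.cast_nonneg (α := ℝ) k]) (hall k)
/-- If `W' ≥ c r^(k+1)` beyond `s`, then `W` is unbounded above beyond `s`. -/
lemma w_unbounded (k : ℕ) {s c : ℝ} (B : ℝ) (hs : 0 < s) (hc : 0 < c) {W ω : ℝ → ℝ}
    (hWd : ∀ r ∈ Ici s, HasDerivAt W (ω r) r)
    (hω : ∀ r ∈ Ioi s, c * r ^ (k + 1) ≤ ω r) :
    ∃ r, s ≤ r ∧ B < W r := by
  have hk2 : (0:ℝ) < (k:ℝ) + 2 := by positivity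
  have hmono : MonotoneOn (fun x => W x - c / ((k:ℝ) + 2) * x ^ (k + 2)) (Ici s) := by
    refine monoOn_Ici (φ' := fun x => ω x - c * x ^ (k + 1)) ?_ ?_
    · intro x hx
      have h1 : HasDerivAt (fun y : ℝ => y ^ (k + 2)) (((k:ℝ) + 2) * x ^ (k + 1)) x := by
        have h0 := hasDerivAt_pow (k + 2) x
        have he : ((k + 2 : ℕ) : ℝ) = (k:ℝ) + 2 := by push_cast; ring
        have he2 : k + 2 - 1 = k + 1 := rfl
        rw [he2, he] at h0
        exact h0
      have h2 := (hWd x hx).sub (h1.const_mul (c / ((k:ℝ) + 2)))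
      refine h2.congr_deriv ?_
      field_simp
    · intro x hx
      have := hω x hx
      show 0 ≤ ω x - c * x ^ (k + 1)
      linarith
  set D := s ^ (k + 2) + ((k:ℝ) + 2) / c * (|B - W s| + 1) with hD
  set r := max (max s 1) D with hr
  have hrs : s ≤ r := le_trans (le_max_left s 1) (le_max_left _ _)
  have hr1 : (1:ℝ) ≤ r := le_trans (le_max_right s 1) (le_max_left _ _)
  have hrD : D ≤ r := le_max_right _ _
  have hrr : r ≤ r ^ (k + 2) := le_self_pow₀ hr1 (by omega)
  have h8 := hmono self_mem_Ici (show r ∈ Ici s from hrs) hrs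
  simp only at h8
  have h9 : ((k:ℝ) + 2) / c * (|B - W s| + 1) ≤ r ^ (k + 2) - s ^ (k + 2) := by
    rw [hD] at hrD
    linarith
  have h10 := mul_le_mul_of_nonneg_left h9 (le_of_lt (div_pos hc hk2))
  have h11 : c / ((k:ℝ) + 2) * (((k:ℝ) + 2) / c * (|B - W s| + 1)) = |B - W s| + 1 := by
    field_simp
  refine ⟨r, hrs, ?_⟩
  have h12 := le_abs_self (B - W s)
  linarith
/-- For a positive global `C²` solution of the radial equation
`h'' + ((N-1)/r) h' = (1/α) h^(-α) - p` on `(0,∞)`, beyond every `r₀ > 0` there is a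
critical point `r₁ > r₀` with `h'(r₁) = 0`. -/
theorem exists_critical_point_beyond
    (N : ℕ) (hN : 2 ≤ N) (α p : ℝ) (hα : 1 < α) (hp : 0 < p)
    (h : ℝ → ℝ)
    (hpos : ∀ r ∈ Ioi (0 : ℝ), 0 < h r)
    (hreg : ContDiffOn ℝ 2 h (Ioi 0))
    (hode : ∀ r ∈ Ioi (0 : ℝ),
      deriv (deriv h) r + ((N : ℝ) - 1) / r * deriv h r = 1 / α * h r ^ (-α) - p) :
    ∀ r₀ ∈ Ioi (0 : ℝ), ∃ r₁ : ℝ, r₀ < r₁ ∧ deriv h r₁ = 0 := by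
  intro r₀ hr₀
  rw [mem_Ioi] at hr₀
  by_contra hcon
  push_neg at hcon
  obtain ⟨k, hNk⟩ : ∃ k, N = k + 2 := ⟨N - 2, by omega⟩
  subst hNk
  have hα0 : (0:ℝ) < α := by linarith
  have hNcast : ((k + 2 : ℕ) : ℝ) - 1 = (k : ℝ) + 1 := by push_cast; ring
  -- differentiability facts
  have hdh : ∀ r ∈ Ioi (0:ℝ), HasDerivAt h (deriv h r) r := by
    intro r hr
    exact ((hreg.differentiableOn (by norm_num)).differentiableAt
      (isOpen_Ioi.mem_nhds hr)).hasDerivAt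
  have hd2 : ∀ r ∈ Ioi (0:ℝ), HasDerivAt (deriv h) (deriv (deriv h) r) r := by
    intro r hr
    have h1 : ContDiffOn ℝ 1 (deriv h) (Ioi 0) :=
      hreg.deriv_of_isOpen isOpen_Ioi (by norm_num)
    exact ((h1.differentiableOn (by norm_num)).differentiableAt
      (isOpen_Ioi.mem_nhds hr)).hasDerivAt
  set g : ℝ → ℝ := fun t => 1 / α * t ^ (-α) - p with hg
  set d : ℝ → ℝ := deriv h with hd
  set w : ℝ → ℝ := fun r => r ^ (k + 1) * d r with hw
  -- derivative of w
  have hwd : ∀ r ∈ Ioi (0:ℝ), HasDerivAt w (r ^ (k + 1) * g (h r)) r := by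
    intro r hr
    have hr0 : (0:ℝ) < r := hr
    have h1 : HasDerivAt (fun x : ℝ => x ^ (k + 1)) (((k:ℝ) + 1) * r ^ k) r := by
      have h0 := hasDerivAt_pow (k + 1) r
      have he : ((k + 1 : ℕ) : ℝ) = (k:ℝ) + 1 := by push_cast; ring
      have he2 : k + 1 - 1 = k := rfl
      rw [he2, he] at h0
      exact h0
    have h2 := h1.mul (hd2 r hr)
    have heq : ((k:ℝ) + 1) * r ^ k * d r + r ^ (k + 1) * deriv (deriv h) r
        = r ^ (k + 1) * g (h r) := by
      have hode' := hode r hr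
      rw [hNcast] at hode'
      have h3 : r ^ (k + 1) * (deriv (deriv h) r + ((k:ℝ) + 1) / r * d r)
          = r ^ (k + 1) * (1 / α * h r ^ (-α) - p) := by rw [hode']
      have h4 : r ^ (k + 1) * (((k:ℝ) + 1) / r * d r) = ((k:ℝ) + 1) * r ^ k * d r := by
        rw [pow_succ]
        field_simp
      simp only [hg]
      nlinarith [h3, h4]
    exact heq ▸ h2
  -- monotonicity of g
  have hganti : ∀ a b : ℝ, 0 < a → a ≤ b → g b ≤ g a := by
    intro a b ha hab
    have h1 := Real.rpow_le_rpow_of_nonpos ha hab (neg_nonpos.mpr hα0.le)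
    have h2 : 1 / α * b ^ (-α) ≤ 1 / α * a ^ (-α) :=
      mul_le_mul_of_nonneg_left h1 (by positivity)
    simp only [hg]
    linarith
  have hgstrict : ∀ a b : ℝ, 0 < a → a < b → g b < g a := by
    intro a b ha hab
    have h1 := Real.rpow_lt_rpow_of_neg ha hab (neg_neg_iff_pos.mpr hα0)
    have h2 : 1 / α * b ^ (-α) < 1 / α * a ^ (-α) :=
      mul_lt_mul_of_pos_left h1 (by positivity)
    simp only [hg]
    linarith
  -- equilibrium value
  set hstar : ℝ := (α * p) ^ (-α⁻¹) with hhs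
  have hstar_pos : 0 < hstar := Real.rpow_pos_of_pos (by positivity) _
  have hgstar : g hstar = 0 := by
    have hαp : (0:ℝ) < α * p := by positivity
    have h1 : hstar ^ (-α) = α * p := by
      rw [hhs, ← Real.rpow_mul hαp.le, neg_mul_neg, inv_mul_cancel₀ hα0.ne', Real.rpow_one]
    simp only [hg]
    rw [h1]
    field_simp
    ring
  -- nonvanishing of d beyond r₀ and sign dichotomy
  have hne : ∀ r, r₀ < r → d r ≠ 0 := fun r hr => hcon r hr
  set s₀ := r₀ + 1 with hs₀def
  have hs₀ : r₀ < s₀ := by linarith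
  have hs₀0 : (0:ℝ) < s₀ := by linarith
  have hIoi : ∀ r : ℝ, r₀ < r → (0:ℝ) < r := fun r hr => lt_trans hr₀ hr
  have ivt : ∀ a b, r₀ < a → r₀ < b → d a < 0 → 0 < d b → False := by
    intro a b ha hb hda hdb
    rcases le_total a b with hab | hab
    · have hcont : ContinuousOn d (Icc a b) := fun x hx =>
        ((hd2 x (lt_of_lt_of_le (hIoi a ha) hx.1)).continuousAt).continuousWithinAt
      obtain ⟨x, hx, hx0⟩ := intermediate_value_Icc hab hcont ⟨hda.le, hdb.le⟩
      exact hne x (lt_of_lt_of_le ha hx.1) hx0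
    · have hcont : ContinuousOn d (Icc b a) := fun x hx =>
        ((hd2 x (lt_of_lt_of_le (hIoi b hb) hx.1)).continuousAt).continuousWithinAt
      obtain ⟨x, hx, hx0⟩ := intermediate_value_Icc' hab hcont ⟨hda.le, hdb.le⟩
      exact hne x (lt_of_lt_of_le hb hx.1) hx0
  have hdichot : (∀ r, r₀ < r → 0 < d r) ∨ (∀ r, r₀ < r → d r < 0) := by
    rcases Ne.lt_or_gt (hne s₀ hs₀) with hneg | hpos'
    · right
      intro r hr
      rcases Ne.lt_or_gt (hne r hr) with h1 | h1
      · exact h1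
      · exact absurd (ivt s₀ r hs₀ hr hneg h1) not_false
    · left
      intro r hr
      rcases Ne.lt_or_gt (hne r hr) with h1 | h1
      · exact absurd (ivt r s₀ hr hs₀ h1 hpos') not_false
      · exact h1
  rcases hdichot with hdp | hdn
  · -- h is increasing beyond r₀
    by_cases hex : ∃ s, r₀ < s ∧ hstar < h s
    · -- once above the equilibrium, w → -∞, contradicting w > 0
      obtain ⟨s, hs, hsh⟩ := hex
      have hs0 : (0:ℝ) < s := hIoi s hs
      have hmonoh : MonotoneOn h (Ici s) := by
        refine monoOn_Ici (φ' := d) (fun x hx => hdh x (lt_of_lt_of_le hs0 hx)) ?_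
        exact fun x hx => (hdp x (lt_trans hs hx)).le
      have hc : 0 < -g (h s) := by
        have h1 := hgstrict hstar (h s) hstar_pos hsh
        rw [hgstar] at h1
        linarith
      have hω : ∀ x ∈ Ioi s, (-g (h s)) * x ^ (k + 1) ≤ -(x ^ (k + 1) * g (h x)) := by
        intro x hx
        have hx0 : (0:ℝ) < x := lt_trans hs0 hx
        have hhx : h s ≤ h x := hmonoh self_mem_Ici (Ioi_subset_Ici_self hx) (le_of_lt hx)
        have h1 := hganti (h s) (h x) (hpos s hs0) hhx
        nlinarith [pow_nonneg hx0.le (k + 1)]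
      obtain ⟨r, hrs, hrw⟩ := w_unbounded k (0:ℝ) hs0 hc
        (fun x hx => (hwd x (lt_of_lt_of_le hs0 hx)).neg) hω
      have hr0 : (0:ℝ) < r := lt_of_lt_of_le hs0 hrs
      have hwpos : 0 < w r := mul_pos (pow_pos hr0 _) (hdp r (lt_of_lt_of_le hs hrs))
      rw [Pi.neg_apply] at hrw
      linarith
    · -- h stays at or below the equilibrium: bootstrap contradiction
      push_neg at hex
      set L := sSup (h '' Ioi r₀) with hL
      have hbdd : BddAbove (h '' Ioi r₀) := ⟨hstar, by rintro x ⟨y, hy, rfl⟩; exact hex y hy⟩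
      have hhL : ∀ r, r₀ < r → h r ≤ L := fun r hr => le_csSup hbdd ⟨r, hr, rfl⟩
      have hLstar : L ≤ hstar := csSup_le ⟨h s₀, s₀, hs₀, rfl⟩
        (by rintro x ⟨y, hy, rfl⟩; exact hex y hy)
      have hL0 : 0 < L := lt_of_lt_of_le (hpos s₀ hs₀0) (hhL s₀ hs₀)
      have hgL : 0 ≤ g L := by
        rcases eq_or_lt_of_le hLstar with he | hlt
        · rw [he, hgstar]
        · have h1 := hgstrict L hstar hL0 hlt
          rw [hgstar] at h1
          linarith
      have hκ : 0 < L ^ (-α - 1) := Real.rpow_pos_of_pos hL0 _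
      refine bootstrap k s₀ (L ^ (-α - 1)) hs₀0 hκ w (fun r => L - h r)
        (fun r => r ^ (k + 1) * g (h r)) ?_ ?_ ?_ ?_ ?_
      · exact fun r hr => hwd r (lt_of_lt_of_le hs₀0 hr)
      · intro r hr
        have hr0 : (0:ℝ) < r := lt_of_lt_of_le hs₀0 hr
        have hrr₀ : r₀ < r := lt_of_lt_of_le hs₀ hr
        have hhr : 0 < h r := hpos r hr0
        have hhrL : h r ≤ L := hhL r hrr₀
        have hcx := rpow_convexity hα0 hhr hhrL
        have h6 : L ^ (-α - 1) * (L - h r) ≤ 1 / α * (h r ^ (-α) - L ^ (-α)) := by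
          have h5 := mul_le_mul_of_nonneg_left hcx (le_of_lt (by positivity : (0:ℝ) < 1 / α))
          calc L ^ (-α - 1) * (L - h r) = 1 / α * (α * L ^ (-α - 1) * (L - h r)) := by
                field_simp
              _ ≤ 1 / α * (h r ^ (-α) - L ^ (-α)) := h5
        have h7 : L ^ (-α - 1) * (L - h r) ≤ g (h r) := by
          have h5 : g (h r) - g L = 1 / α * (h r ^ (-α) - L ^ (-α)) := by
            simp only [hg]
            ring
          have h12 := h6
          rw [← h5] at h12
          linarith
        calc L ^ (-α - 1) * r ^ (k + 1) * (L - h r)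
            = r ^ (k + 1) * (L ^ (-α - 1) * (L - h r)) := by ring
          _ ≤ r ^ (k + 1) * g (h r) := mul_le_mul_of_nonneg_left h7 (by positivity)
      · intro r hr
        have hr0 : (0:ℝ) < r := lt_of_lt_of_le hs₀0 hr
        have h1 := (hdh r hr0).const_sub L
        refine h1.congr_deriv ?_
        have hne0 : (r:ℝ) ^ (k + 1) ≠ 0 := by positivity
        simp only [hw]
        field_simp
      · exact fun r hr => sub_nonneg.mpr (hhL r (lt_of_lt_of_le hs₀ hr))
      · exact mul_pos (pow_pos hs₀0 _) (hdp s₀ hs₀)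
  · -- h is decreasing beyond r₀
    by_cases hex : ∃ s, r₀ < s ∧ h s < hstar
    · -- once below the equilibrium, w → +∞, contradicting w < 0
      obtain ⟨s, hs, hsh⟩ := hex
      have hs0 : (0:ℝ) < s := hIoi s hs
      have hantih : AntitoneOn h (Ici s) := by
        refine antiOn_Ici (φ' := d) (fun x hx => hdh x (lt_of_lt_of_le hs0 hx)) ?_
        exact fun x hx => (hdn x (lt_trans hs hx)).le
      have hc : 0 < g (h s) := by
        have h1 := hgstrict (h s) hstar (hpos s hs0) hsh
        rw [hgstar] at h1
        linarith
      have hω : ∀ x ∈ Ioi s, g (h s) * x ^ (k + 1) ≤ x ^ (k + 1) * g (h x) := by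
        intro x hx
        have hx0 : (0:ℝ) < x := lt_trans hs0 hx
        have hhx : h x ≤ h s := hantih self_mem_Ici (Ioi_subset_Ici_self hx) (le_of_lt hx)
        have h1 := hganti (h x) (h s) (hpos x hx0) hhx
        nlinarith [pow_nonneg hx0.le (k + 1)]
      obtain ⟨r, hrs, hrw⟩ := w_unbounded k (0:ℝ) hs0 hc
        (fun x hx => hwd x (lt_of_lt_of_le hs0 hx)) hω
      have hr0 : (0:ℝ) < r := lt_of_lt_of_le hs0 hrs
      have hwneg : w r < 0 := mul_neg_of_pos_of_neg (pow_pos hr0 _)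
        (hdn r (lt_of_lt_of_le hs hrs))
      linarith
    · -- h stays at or above the equilibrium: bootstrap contradiction
      push_neg at hex
      set L := sInf (h '' Ioi r₀) with hL
      have hbdd : BddBelow (h '' Ioi r₀) := ⟨hstar, by rintro x ⟨y, hy, rfl⟩; exact hex y hy⟩
      have hhL : ∀ r, r₀ < r → L ≤ h r := fun r hr => csInf_le hbdd ⟨r, hr, rfl⟩
      have hLstar : hstar ≤ L := le_csInf ⟨h s₀, s₀, hs₀, rfl⟩
        (by rintro x ⟨y, hy, rfl⟩; exact hex y hy)
      have hL0 : 0 < L := lt_of_lt_of_le hstar_pos hLstar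
      have hgL : g L ≤ 0 := by
        rcases eq_or_lt_of_le hLstar with he | hlt
        · rw [← he, hgstar]
        · have h1 := hgstrict hstar L hstar_pos hlt
          rw [hgstar] at h1
          linarith
      set M := h s₀ with hM
      have hM0 : 0 < M := hpos s₀ hs₀0
      have hantih : AntitoneOn h (Ici s₀) := by
        refine antiOn_Ici (φ' := d) (fun x hx => hdh x (lt_of_lt_of_le hs₀0 hx)) ?_
        exact fun x hx => (hdn x (lt_of_le_of_lt hs₀.le hx)).le
      have hκ : 0 < M ^ (-α - 1) := Real.rpow_pos_of_pos hM0 _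
      refine bootstrap k s₀ (M ^ (-α - 1)) hs₀0 hκ (fun r => -w r) (fun r => h r - L)
        (fun r => -(r ^ (k + 1) * g (h r))) ?_ ?_ ?_ ?_ ?_
      · exact fun r hr => (hwd r (lt_of_lt_of_le hs₀0 hr)).neg
      · intro r hr
        have hr0 : (0:ℝ) < r := lt_of_lt_of_le hs₀0 hr
        have hrr₀ : r₀ < r := lt_of_lt_of_le hs₀ hr
        have hhr : 0 < h r := hpos r hr0
        have hLr : L ≤ h r := hhL r hrr₀
        have hcx := rpow_convexity hα0 hL0 hLr
        have hhrM : h r ≤ M := hantih self_mem_Ici hr hr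
        have hmm : M ^ (-α - 1) ≤ h r ^ (-α - 1) :=
          Real.rpow_le_rpow_of_nonpos hhr hhrM (by linarith)
        have h6 : M ^ (-α - 1) * (h r - L) ≤ 1 / α * (L ^ (-α) - h r ^ (-α)) := by
          have h7 : M ^ (-α - 1) * (h r - L) ≤ h r ^ (-α - 1) * (h r - L) :=
            mul_le_mul_of_nonneg_right hmm (by linarith)
          have h8 : h r ^ (-α - 1) * (h r - L) ≤ 1 / α * (L ^ (-α) - h r ^ (-α)) := by
            have h5 := mul_le_mul_of_nonneg_left hcx (le_of_lt (by positivity : (0:ℝ) < 1 / α))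
            calc h r ^ (-α - 1) * (h r - L) = 1 / α * (α * h r ^ (-α - 1) * (h r - L)) := by
                  field_simp
                _ ≤ 1 / α * (L ^ (-α) - h r ^ (-α)) := h5
          linarith
        have h10 : 1 / α * (L ^ (-α) - h r ^ (-α)) ≤ -(g (h r)) := by
          simp only [hg] at hgL ⊢
          linarith
        have h11 : M ^ (-α - 1) * (h r - L) ≤ -(g (h r)) := le_trans h6 h10
        calc M ^ (-α - 1) * r ^ (k + 1) * (h r - L)
            = r ^ (k + 1) * (M ^ (-α - 1) * (h r - L)) := by ring
          _ ≤ r ^ (k + 1) * (-(g (h r))) := mul_le_mul_of_nonneg_left h11 (by positivity)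
          _ = -(r ^ (k + 1) * g (h r)) := by ring
      · intro r hr
        have hr0 : (0:ℝ) < r := lt_of_lt_of_le hs₀0 hr
        have h1 := (hdh r hr0).sub_const L
        refine h1.congr_deriv ?_
        have hne0 : (r:ℝ) ^ (k + 1) ≠ 0 := by positivity
        simp only [hw]
        field_simp
      · exact fun r hr => sub_nonneg.mpr (hhL r (lt_of_lt_of_le hs₀ hr))
      · show 0 < -(w s₀)
        have : w s₀ < 0 := mul_neg_of_pos_of_neg (pow_pos hs₀0 _) (hdn s₀ hs₀)
        linarith
end
end

section
/- Let N ≥ 2, α > 1, p > 0 and ξ = (αp)^{-1/α}. Let h be a positive function, C¹ on [0,∞) and C² on (0,∞), satisfying h'' + ((N-1)/r)h' = (1/α)h^{-α} − p on (0,∞). If there exists r_0 ≥ 0 with h'(r_0) = 0 and h(r_0) = ξ, then h(r) = ξ for all r ≥ 0. -/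
open Set Filter
open Topology

noncomputable section

def myG (α p : ℝ) : ℝ → ℝ := fun y => p * y + y ^ (1 - α) / (α * (α - 1))

lemma myG_hasDerivAt {α p : ℝ} (hα : 1 < α) {y : ℝ} (hy : 0 < y) :
    HasDerivAt (myG α p) (p - y ^ (-α) / α) y := by
  have hα0 : (0:ℝ) < α := lt_trans one_pos hα
  have h1 : HasDerivAt (fun x : ℝ => x ^ (1 - α)) ((1 - α) * y ^ (1 - α - 1)) y :=
    Real.hasDerivAt_rpow_const (Or.inl hy.ne')
  have h2 : HasDerivAt (fun x : ℝ => p * x) p y := by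
    simpa using (hasDerivAt_id y).const_mul p
  have := h2.add (h1.div_const (α * (α - 1)))
  refine this.congr_deriv ?_
  have : 1 - α - 1 = -α := by ring
  rw [this]
  have h1 : α ≠ 0 := ne_of_gt hα0
  have h2 : α - 1 ≠ 0 := sub_ne_zero.2 (ne_of_gt hα)
  field_simp
  ring

lemma myG_continuousOn {α p : ℝ} : ContinuousOn (myG α p) (Ioi 0) := by
  apply ContinuousOn.add
  · exact (continuous_const.mul continuous_id).continuousOn
  · exact ContinuousOn.div_const
      (fun x hx => (Real.continuousAt_rpow_const x _ (Or.inl (ne_of_gt hx))).continuousWithinAt) _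

lemma myXi_pow {α p : ℝ} (hα : 1 < α) (hp : 0 < p) :
    ((α * p) ^ (-(1 / α)) : ℝ) ^ (-α) = α * p := by
  have hα0 : (0:ℝ) < α := lt_trans one_pos hα
  rw [← Real.rpow_mul (le_of_lt (mul_pos hα0 hp))]
  have : -(1 / α) * -α = 1 := by field_simp
  rw [this, Real.rpow_one]

lemma myG_min {α p : ℝ} (hα : 1 < α) (hp : 0 < p) {y : ℝ} (hy : 0 < y)
    (hne : y ≠ (α * p) ^ (-(1 / α))) :
    myG α p ((α * p) ^ (-(1 / α))) < myG α p y := by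
  have hα0 : (0:ℝ) < α := lt_trans one_pos hα
  set ξ : ℝ := (α * p) ^ (-(1 / α)) with hξdef
  have hξpos : 0 < ξ := Real.rpow_pos_of_pos (mul_pos hα0 hp) _
  have hξpow : ξ ^ (-α) = α * p := myXi_pow hα hp
  rcases lt_or_gt_of_ne hne with hlt | hgt
  · have hanti : StrictAntiOn (myG α p) (Ioc 0 ξ) := by
      apply strictAntiOn_of_deriv_neg (convex_Ioc 0 ξ)
        (myG_continuousOn.mono (fun x hx => hx.1))
      intro x hx
      rw [interior_Ioc] at hx
      rw [(myG_hasDerivAt hα hx.1).deriv]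
      have hk : ξ ^ (-α) < x ^ (-α) :=
        Real.rpow_lt_rpow_of_neg hx.1 hx.2 (neg_lt_zero.2 hα0)
      rw [hξpow] at hk
      rw [sub_neg, lt_div_iff₀ hα0]
      linarith [mul_comm p α]
    exact hanti ⟨hy, hlt.le⟩ ⟨hξpos, le_rfl⟩ hlt
  · have hmono : StrictMonoOn (myG α p) (Ici ξ) := by
      apply strictMonoOn_of_deriv_pos (convex_Ici ξ)
        (myG_continuousOn.mono (fun x hx => lt_of_lt_of_le hξpos hx))
      intro x hx
      rw [interior_Ici] at hx
      have hx0 : (0:ℝ) < x := lt_trans hξpos hx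
      rw [(myG_hasDerivAt hα hx0).deriv]
      have hk : x ^ (-α) < ξ ^ (-α) :=
        Real.rpow_lt_rpow_of_neg hξpos hx (neg_lt_zero.2 hα0)
      rw [hξpow] at hk
      rw [sub_pos, div_lt_iff₀ hα0]
      linarith [mul_comm p α]
    exact hmono self_mem_Ici hgt.le hgt

/-- If a positive solution (`C¹` on `[0,∞)`, `C²` on `(0,∞)`) of the radial equation
`h'' + ((N-1)/r) h' = (1/α) h^(-α) - p` has a critical point `r₀ ≥ 0` where it takes
the equilibrium value `ξ = (αp)^(-1/α)`, then `h ≡ ξ` on `[0,∞)`. -/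
theorem equilibrium_rigidity
    (N : ℕ) (hN : 2 ≤ N) (α p : ℝ) (hα : 1 < α) (hp : 0 < p)
    (ξ : ℝ) (hξ : ξ = (α * p) ^ (-(1 / α)))
    (h : ℝ → ℝ)
    (hpos : ∀ r ∈ Ici (0 : ℝ), 0 < h r)
    (hreg1 : ContDiffOn ℝ 1 h (Ici 0))
    (hreg2 : ContDiffOn ℝ 2 h (Ioi 0))
    (hode : ∀ r ∈ Ioi (0 : ℝ),
      deriv (deriv h) r + ((N : ℝ) - 1) / r * deriv h r = 1 / α * h r ^ (-α) - p)
    (r₀ : ℝ) (hr₀ : 0 ≤ r₀)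
    (hcrit : derivWithin h (Ici 0) r₀ = 0)
    (hval : h r₀ = ξ) :
    ∀ r ∈ Ici (0 : ℝ), h r = ξ := by
  have hα0 : (0:ℝ) < α := lt_trans one_pos hα
  have hαne : α ≠ 0 := ne_of_gt hα0
  have hN2 : (2:ℝ) ≤ (N:ℝ) := by exact_mod_cast hN
  have hN1 : (0:ℝ) ≤ (N:ℝ) - 1 := by linarith
  have hξpos : 0 < ξ := by rw [hξ]; exact Real.rpow_pos_of_pos (mul_pos hα0 hp) _
  set D : ℝ → ℝ := derivWithin h (Ici 0) with hDdef
  have hDeq : ∀ x ∈ Ioi (0:ℝ), D x = deriv h x := fun x hx =>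
    derivWithin_of_mem_nhds (Ici_mem_nhds hx)
  set G : ℝ → ℝ := myG α p with hGdef
  have hmin' : ∀ y : ℝ, 0 < y → y ≠ ξ → G ξ < G y := by
    intro y hy hne
    have h1 := myG_min (α := α) (p := p) hα hp hy (by rw [hξ] at hne; exact hne)
    rw [← hξ] at h1
    exact h1
  have hGmin : ∀ y : ℝ, 0 < y → G ξ ≤ G y := by
    intro y hy
    rcases eq_or_ne y ξ with hEq | hne
    · rw [hEq]
    · exact le_of_lt (hmin' y hy hne)
  have hGuniq : ∀ y : ℝ, 0 < y → G y ≤ G ξ → y = ξ := by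
    intro y hy hle
    by_contra hne
    exact absurd hle (not_le.2 (hmin' y hy hne))
  have hd1 : DifferentiableOn ℝ h (Ioi 0) := hreg2.differentiableOn (by norm_num)
  have hd2 : DifferentiableOn ℝ (deriv h) (Ioi 0) :=
    (hreg2.deriv_of_isOpen (m := 1) isOpen_Ioi (by norm_num)).differentiableOn (by norm_num)
  set Etil : ℝ → ℝ := fun r => 1/2 * (D r)^2 + G (h r) with hE
  set Wtil : ℝ → ℝ := fun r => 1/2 * (r^(N-1) * D r)^2 + (r^(N-1))^2 * (G (h r) - G ξ) with hW
  have key : ∀ x ∈ Ioi (0:ℝ),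
      HasDerivAt Etil (-(((N:ℝ)-1)/x * (D x)^2)) x ∧
      HasDerivAt Wtil (2 * (((N:ℝ)-1) * x^(N-2)) * x^(N-1) * (G (h x) - G ξ)) x := by
    intro x hx
    have hx0 : (0:ℝ) < x := hx
    have hxne : x ≠ 0 := ne_of_gt hx0
    have hnx : Ioi (0:ℝ) ∈ 𝓝 x := isOpen_Ioi.mem_nhds hx
    have Hh : HasDerivAt h (deriv h x) x := ((hd1 x hx).differentiableAt hnx).hasDerivAt
    have HDD : HasDerivAt (deriv h) (deriv (deriv h) x) x :=
      ((hd2 x hx).differentiableAt hnx).hasDerivAt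
    have hDev : D =ᶠ[𝓝 x] deriv h := eventually_of_mem hnx (fun y hy => hDeq y hy)
    have HD : HasDerivAt D (deriv (deriv h) x) x := HDD.congr_of_eventuallyEq hDev
    have hhx : 0 < h x := hpos x (le_of_lt hx0)
    have HG : HasDerivAt (fun r => G (h r)) ((p - (h x)^(-α)/α) * deriv h x) x :=
      (myG_hasDerivAt hα hhx).comp x Hh
    have hdd : deriv (deriv h) x = 1/α * h x ^ (-α) - p - ((N:ℝ)-1)/x * D x := by
      have h0 := hode x hx
      rw [← hDeq x hx] at h0
      linarith
    have hDx : deriv h x = D x := (hDeq x hx).symm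
    have HP : HasDerivAt (fun r : ℝ => r^(N-1)) (((N:ℝ)-1) * x^(N-2)) x := by
      have h1 := hasDerivAt_pow (N-1) x
      have e1 : N - 1 - 1 = N - 2 := by omega
      have e2 : ((N - 1 : ℕ) : ℝ) = (N:ℝ) - 1 := by
        rw [Nat.cast_sub (by omega), Nat.cast_one]
      rw [e1, e2] at h1
      exact h1
    have e3 : x ^ (N-1) = x * x ^ (N-2) := by
      rw [← pow_succ']
      congr 1
      omega
    constructor
    · have HE := ((HD.pow 2).const_mul (1/2 : ℝ)).add HG
      refine HE.congr_deriv ?_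
      rw [hdd, hDx]
      push_cast
      field_simp
      ring
    · have HW := (((HP.mul HD).pow 2).const_mul (1/2 : ℝ)).add
        ((HP.pow 2).mul (HG.sub_const (G ξ)))
      refine HW.congr_deriv ?_
      simp only [Pi.mul_apply, Pi.pow_apply]
      rw [hdd, hDx, e3]
      push_cast
      field_simp
      ring
  have hDcont : ContinuousOn D (Ici 0) :=
    hreg1.continuousOn_derivWithin (uniqueDiffOn_Ici 0) le_rfl
  have hhcont : ContinuousOn h (Ici 0) := hreg1.continuousOn
  have hGhcont : ContinuousOn (fun r => G (h r)) (Ici 0) :=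
    myG_continuousOn.comp hhcont (fun x hx => hpos x hx)
  have hEcont : ContinuousOn Etil (Ici 0) :=
    (continuousOn_const.mul (hDcont.pow 2)).add hGhcont
  have hPcont : ContinuousOn (fun r : ℝ => r^(N-1)) (Ici 0) := (continuous_pow (N-1)).continuousOn
  have hWcont : ContinuousOn Wtil (Ici 0) :=
    (continuousOn_const.mul ((hPcont.mul hDcont).pow 2)).add
      ((hPcont.pow 2).mul (hGhcont.sub continuousOn_const))
  have hEanti : AntitoneOn Etil (Ici 0) := by
    apply antitoneOn_of_deriv_nonpos (convex_Ici 0) hEcont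
    · rw [interior_Ici]
      exact fun x hx => ((key x hx).1).differentiableAt.differentiableWithinAt
    · rw [interior_Ici]
      intro x hx
      rw [((key x hx).1).deriv]
      have hx0 : (0:ℝ) < x := hx
      exact neg_nonpos.2 (mul_nonneg (div_nonneg hN1 hx0.le) (sq_nonneg _))
  have hWmono : MonotoneOn Wtil (Ici 0) := by
    apply monotoneOn_of_deriv_nonneg (convex_Ici 0) hWcont
    · rw [interior_Ici]
      exact fun x hx => ((key x hx).2).differentiableAt.differentiableWithinAt
    · rw [interior_Ici]
      intro x hx
      rw [((key x hx).2).deriv]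
      have hx0 : (0:ℝ) < x := hx
      have hg : 0 ≤ G (h x) - G ξ := sub_nonneg.2 (hGmin (h x) (hpos x hx0.le))
      exact mul_nonneg (mul_nonneg (mul_nonneg (by norm_num)
        (mul_nonneg hN1 (pow_nonneg hx0.le _))) (pow_nonneg hx0.le _)) hg
  have hcrit' : D r₀ = 0 := hcrit
  have hE0 : Etil r₀ = G ξ := by simp [hE, hcrit', hval]
  have hW0 : Wtil r₀ = 0 := by simp [hW, hcrit', hval]
  have key_ge : ∀ x, r₀ ≤ x → 0 ≤ x → h x = ξ := by
    intro x h1 h2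
    have hle : Etil x ≤ Etil r₀ := hEanti hr₀ h2 h1
    rw [hE0] at hle
    simp only [hE] at hle
    have hsq : 0 ≤ (D x)^2 := sq_nonneg _
    have : G (h x) ≤ G ξ := by linarith
    exact hGuniq (h x) (hpos x h2) this
  have key_le : ∀ x, 0 < x → x ≤ r₀ → h x = ξ := by
    intro x hx0 hx2
    have hle : Wtil x ≤ Wtil r₀ := hWmono (mem_Ici.2 hx0.le) (mem_Ici.2 hr₀) hx2
    rw [hW0] at hle
    simp only [hW] at hle
    have hP2 : (0:ℝ) < (x^(N-1))^2 := by positivity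
    have hgge : 0 ≤ G (h x) - G ξ := sub_nonneg.2 (hGmin _ (hpos x hx0.le))
    have hsq : 0 ≤ (x^(N-1) * D x)^2 := sq_nonneg _
    have : G (h x) ≤ G ξ := by nlinarith
    exact hGuniq _ (hpos x hx0.le) this
  intro r hr
  rcases le_or_gt r₀ r with hc | hc
  · exact key_ge r hc hr
  · rcases eq_or_lt_of_le (mem_Ici.1 hr : (0:ℝ) ≤ r) with h0 | h0
    · -- r = 0 < r₀
      rw [← h0] at hc ⊢
      have h1 : Tendsto h (𝓝[>] (0:ℝ)) (𝓝 (h 0)) :=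
        (hhcont 0 self_mem_Ici).mono_left (nhdsWithin_mono _ Ioi_subset_Ici_self)
      have h2 : Tendsto h (𝓝[>] (0:ℝ)) (𝓝 ξ) := by
        apply Tendsto.congr' _ tendsto_const_nhds
        filter_upwards [Ioc_mem_nhdsGT hc] with y hy
        exact (key_le y hy.1 hy.2).symm
      exact tendsto_nhds_unique h1 h2
    · exact key_le r h0 hc.le
end
end

section
/- Let N ≥ 2, α > 1, p > 0, ξ = (αp)^{-1/α} and F(h) = h^{1-α}/(α(α−1)) + p·h. Let h be a positive function, C¹ on [0,∞) and C² on (0,∞), satisfying h'' + ((N-1)/r)h' = (1/α)h^{-α} − p on (0,∞), and let r_0 ≥ 0 satisfy h'(r_0) = 0. (ii) If h(r_0) > ξ, then there exists r_1 > r_0 such that h'(r) < 0 for all r ∈ (r_0, r_1), h'(r_1) = 0, h(r_1) < ξ and F(h(r_1)) < F(h(r_0)). (iii) If 0 < h(r_0) < ξ, then there exists r_1 > r_0 such that h'(r) > 0 for all r ∈ (r_0, r_1), h'(r_1) = 0, h(r_1) > ξ and F(h(r_1)) < F(h(r_0)). -/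
open Set Filter

noncomputable section

open Topology

private lemma myStrictAntiOn {φ φ' : ℝ → ℝ} {a b : ℝ}
    (hc : ContinuousOn φ (Icc a b))
    (hd : ∀ x ∈ Ioo a b, HasDerivAt φ (φ' x) x)
    (hs : ∀ x ∈ Ioo a b, φ' x < 0) : StrictAntiOn φ (Icc a b) := by
  apply strictAntiOn_of_deriv_neg (convex_Icc a b) hc
  intro x hx
  rw [interior_Icc] at hx
  rw [(hd x hx).deriv]
  exact hs x hx

private lemma myStrictMonoOn {φ φ' : ℝ → ℝ} {a b : ℝ}
    (hc : ContinuousOn φ (Icc a b))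
    (hd : ∀ x ∈ Ioo a b, HasDerivAt φ (φ' x) x)
    (hs : ∀ x ∈ Ioo a b, 0 < φ' x) : StrictMonoOn φ (Icc a b) := by
  apply strictMonoOn_of_deriv_pos (convex_Icc a b) hc
  intro x hx
  rw [interior_Icc] at hx
  rw [(hd x hx).deriv]
  exact hs x hx

private lemma myAntitoneOn {φ φ' : ℝ → ℝ} {a b : ℝ}
    (hc : ContinuousOn φ (Icc a b))
    (hd : ∀ x ∈ Ioo a b, HasDerivAt φ (φ' x) x)
    (hs : ∀ x ∈ Ioo a b, φ' x ≤ 0) : AntitoneOn φ (Icc a b) := by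
  apply antitoneOn_of_deriv_nonpos (convex_Icc a b) hc
  · intro x hx
    rw [interior_Icc] at hx
    exact (hd x hx).differentiableAt.differentiableWithinAt
  · intro x hx
    rw [interior_Icc] at hx
    rw [(hd x hx).deriv]
    exact hs x hx

private lemma myDecay {φ φ' : ℝ → ℝ} {a b k : ℝ} (hab : a ≤ b)
    (hd : ∀ x ∈ Icc a b, HasDerivAt φ (φ' x) x)
    (hk : ∀ x ∈ Ioo a b, φ' x ≤ -k) : φ b ≤ φ a - k * (b - a) := by
  have h2 : AntitoneOn (fun x => φ x + k * x) (Icc a b) := by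
    apply myAntitoneOn (φ' := fun x => φ' x + k)
    · exact fun x hx => ((hd x hx).continuousAt.continuousWithinAt).add
        ((continuous_const.mul continuous_id).continuousAt.continuousWithinAt)
    · intro x hx
      have : HasDerivAt (fun y => k * y) (k * 1) x := (hasDerivAt_id x).const_mul k
      have h3 := (hd x (Ioo_subset_Icc_self hx)).add this
      rw [mul_one] at h3
      exact h3
    · intro x hx; have := hk x hx; linarith
  have := h2 (left_mem_Icc.2 hab) (right_mem_Icc.2 hab) hab
  simp only at this
  linarith

private lemma myGrow {φ φ' : ℝ → ℝ} {a b k : ℝ} (hab : a ≤ b)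
    (hd : ∀ x ∈ Icc a b, HasDerivAt φ (φ' x) x)
    (hk : ∀ x ∈ Ioo a b, k ≤ φ' x) : φ a + k * (b - a) ≤ φ b := by
  have := myDecay (φ := fun x => -φ x) (φ' := fun x => -φ' x) (k := k) hab
    (fun x hx => (hd x hx).neg) (fun x hx => by have := hk x hx; linarith)
  linarith

/-- For `0 < a ≤ b ≤ K` and `β > 0`: `a^(-β) - b^(-β) ≥ β K^(-β-1) (b - a)`. -/
private lemma mySec {β a b K : ℝ} (hβ : 0 < β) (ha : 0 < a) (hab : a ≤ b) (hbK : b ≤ K) :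
    β * K ^ (-β - 1) * (b - a) ≤ a ^ (-β) - b ^ (-β) := by
  have hK : 0 < K := lt_of_lt_of_le (lt_of_lt_of_le ha hab) hbK
  have h2 : AntitoneOn (fun t : ℝ => t ^ (-β) + β * K ^ (-β - 1) * t) (Icc a b) := by
    apply myAntitoneOn (φ' := fun t => (-β) * t ^ (-β - 1) + β * K ^ (-β - 1))
    · intro x hx
      have hx0 : 0 < x := lt_of_lt_of_le ha hx.1
      exact ((Real.continuousAt_rpow_const x (-β) (Or.inl hx0.ne')).continuousWithinAt).add
        ((continuous_const.mul continuous_id).continuousAt.continuousWithinAt)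
    · intro x hx
      have hx0 : 0 < x := lt_of_lt_of_le ha hx.1.le
      have h1 : HasDerivAt (fun t : ℝ => t ^ (-β)) ((-β) * x ^ (-β - 1)) x :=
        Real.hasDerivAt_rpow_const (Or.inl hx0.ne')
      have h2 : HasDerivAt (fun t : ℝ => β * K ^ (-β - 1) * t) (β * K ^ (-β - 1) * 1) x :=
        (hasDerivAt_id x).const_mul _
      have h3 := h1.add h2
      rw [mul_one] at h3
      exact h3
    · intro x hx
      have hx0 : 0 < x := lt_of_lt_of_le ha hx.1.le
      have : K ^ (-β - 1) ≤ x ^ (-β - 1) :=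
        Real.rpow_le_rpow_of_nonpos hx0 (le_trans hx.2.le hbK) (by linarith)
      nlinarith
  have := h2 (left_mem_Icc.2 hab) (right_mem_Icc.2 hab) hab
  simp only at this
  linarith

/-- No positive function on `(a,∞)` satisfies `V'' + (b/r) V' ≤ -c V` with `c > 0`. -/
private lemma myRiccati {b c a : ℝ} (hb : 0 ≤ b) (hc : 0 < c) (ha : 0 ≤ a)
    {V V' V'' : ℝ → ℝ}
    (hdV : ∀ r ∈ Ioi a, HasDerivAt V (V' r) r)
    (hdV' : ∀ r ∈ Ioi a, HasDerivAt V' (V'' r) r)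
    (hV : ∀ r ∈ Ioi a, 0 < V r)
    (hineq : ∀ r ∈ Ioi a, V'' r + b / r * V' r ≤ -(c * V r)) : False := by
  set w : ℝ → ℝ := fun r => V' r / V r with hw_def
  set w' : ℝ → ℝ := fun r => V'' r / V r - (w r) ^ 2 with hw'_def
  have hdw : ∀ r ∈ Ioi a, HasDerivAt w (w' r) r := by
    intro r hr
    have hVr := hV r hr
    have := (hdV' r hr).div (hdV r hr) hVr.ne'
    refine this.congr_deriv ?_
    simp only [hw'_def, hw_def]
    field_simp [hw'_def, hw_def]
  have hw2 : ∀ r ∈ Ioi a, w' r ≤ -c - b / r * w r - (w r) ^ 2 := by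
    intro r hr
    have hVr := hV r hr
    have h1 := hineq r hr
    have hr0 : 0 < r := lt_of_le_of_lt ha hr
    have h2 : V'' r / V r ≤ -c - b / r * (V' r / V r) := by
      rw [div_le_iff₀ hVr]
      have : (-c - b / r * (V' r / V r)) * V r = -(c * V r) - b / r * V' r := by
        field_simp
      rw [this]
      linarith
    simp only [hw'_def, hw_def]
    linarith
  -- Step 1 : choose R with w' ≤ -c/2 beyond R
  set R : ℝ := max (a + 1) (b / Real.sqrt c) with hR_def
  have hRa : a < R := lt_of_lt_of_le (by linarith) (le_max_left _ _)
  have hR0 : 0 < R := lt_of_le_of_lt ha hRa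
  have hb2 : ∀ r : ℝ, R ≤ r → b ^ 2 ≤ c * r ^ 2 := by
    intro r hr
    have h1 : b / Real.sqrt c ≤ r := le_trans (le_max_right _ _) hr
    have hs : 0 < Real.sqrt c := Real.sqrt_pos.2 hc
    have h2 : b ≤ r * Real.sqrt c := by
      rw [div_le_iff₀ hs] at h1; linarith
    have hr0 : 0 < r := lt_of_lt_of_le hR0 hr
    nlinarith [Real.sq_sqrt hc.le]
  have hstep1 : ∀ r : ℝ, R ≤ r → w' r ≤ -(c / 2) := by
    intro r hr
    have hr0 : 0 < r := lt_of_lt_of_le hR0 hr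
    have hra : r ∈ Ioi a := lt_of_lt_of_le hRa hr
    have h1 := hw2 r hra
    have hB : (b / r) ^ 2 ≤ c := by
      rw [div_pow, div_le_iff₀ (by positivity)]
      nlinarith [hb2 r hr]
    nlinarith [sq_nonneg (2 * w r + b / r), hB, hc]
  -- Step 2 : drive w below -2b/R - 1
  set T : ℝ := max (w R + 2 * b / R + 1) 0 with hT_def
  set R₁ : ℝ := R + (2 / c) * T with hR₁_def
  have hRR₁ : R ≤ R₁ := by
    have h0 : 0 ≤ (2 / c) * T := mul_nonneg (by positivity) (le_max_right _ _)
    rw [hR₁_def]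
    linarith
  have hdecay : ∀ x y : ℝ, R ≤ x → x ≤ y → w y ≤ w x - (c / 2) * (y - x) := by
    intro x y hx hxy
    apply myDecay hxy
    · intro z hz
      exact hdw z (lt_of_lt_of_le hRa (le_trans hx hz.1))
    · intro z hz
      exact hstep1 z (le_trans hx hz.1.le)
  have hwR₁ : w R₁ ≤ -(2 * b / R) - 1 := by
    have h1 := hdecay R R₁ le_rfl hRR₁
    have h2 : (c / 2) * (R₁ - R) = T := by
      rw [hR₁_def]; field_simp; ring
    have h3 : w R + 2 * b / R + 1 ≤ T := le_max_left _ _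
    rw [h2] at h1
    linarith
  have hR₁a : a < R₁ := lt_of_lt_of_le hRa hRR₁
  -- Step 3 : w r ≤ -2b/r - 1 for r ≥ R₁
  have hstep3 : ∀ r : ℝ, R₁ ≤ r → w r ≤ -(2 * b / r) - 1 := by
    intro r hr
    have h1 := hdecay R₁ r hRR₁ hr
    have hr0 : 0 < r := lt_of_lt_of_le (lt_of_lt_of_le hR0 hRR₁) hr
    have h2 : 2 * b / r ≤ 2 * b / R := by
      apply div_le_div_of_nonneg_left (by linarith) hR0
      exact le_trans hRR₁ hr
    have h3 : 0 ≤ (c / 2) * (r - R₁) := by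
      apply mul_nonneg (by positivity); linarith
    linarith
  -- Step 4 : w' ≤ -w²/2 for r ≥ R₁
  have hstep4 : ∀ r : ℝ, R₁ ≤ r → w' r ≤ -((w r) ^ 2) / 2 := by
    intro r hr
    have hr0 : 0 < r := lt_of_lt_of_le (lt_of_lt_of_le hR0 hRR₁) hr
    have hra : r ∈ Ioi a := lt_of_lt_of_le hR₁a hr
    have h1 := hw2 r hra
    have h2 := hstep3 r hr
    have hk : 0 ≤ b / r := div_nonneg hb hr0.le
    have hW2 : w r / 2 + b / r ≤ 0 := by
      have : b / r ≤ (2 * b / r) / 2 + 1 / 2 := by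
        rw [← add_div]
        have : (2 * b / r) = 2 * (b / r) := by ring
        rw [this]; linarith
      linarith
    have hWneg : w r ≤ 0 := by nlinarith
    have h3 : 0 ≤ w r * (w r / 2 + b / r) := mul_nonneg_of_nonpos_of_nonpos hWneg hW2
    nlinarith
  -- Step 5 : u := -1/w satisfies 0 < u ≤ 1 and u' ≤ -1/2 : contradiction
  set u : ℝ → ℝ := fun r => -(w r)⁻¹ with hu_def
  have hwneg : ∀ r : ℝ, R₁ ≤ r → w r ≤ -1 := by
    intro r hr
    have := hstep3 r hr
    have hr0 : 0 < r := lt_of_lt_of_le (lt_of_lt_of_le hR0 hRR₁) hr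
    have : 0 ≤ 2 * b / r := div_nonneg (by linarith) hr0.le
    linarith [hstep3 r hr]
  have hu_pos : ∀ r : ℝ, R₁ ≤ r → 0 < u r := by
    intro r hr
    have h1 := hwneg r hr
    have : (w r)⁻¹ < 0 := inv_lt_zero.mpr (by linarith)
    simp only [hu_def]; linarith
  have hu_le : ∀ r : ℝ, R₁ ≤ r → u r ≤ 1 := by
    intro r hr
    have h1 := hwneg r hr
    have hne : w r ≠ 0 := by intro h; rw [h] at h1; linarith
    have h2 : (w r)⁻¹ * w r = 1 := inv_mul_cancel₀ hne
    have h3 : (w r)⁻¹ < 0 := inv_lt_zero.mpr (by linarith)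
    have h4 : -1 ≤ (w r)⁻¹ := by nlinarith
    simp only [hu_def]; linarith
  have hdu : ∀ r : ℝ, R₁ ≤ r → HasDerivAt u (w' r / (w r) ^ 2) r := by
    intro r hr
    have h1 := hwneg r hr
    have hne : w r ≠ 0 := by intro h; rw [h] at h1; linarith
    have := ((hdw r (lt_of_lt_of_le hR₁a hr)).inv hne).neg
    refine this.congr_deriv ?_
    field_simp
  have hu_decay : ∀ r : ℝ, R₁ ≤ r → w' r / (w r) ^ 2 ≤ -(1 / 2) := by
    intro r hr
    have h1 := hstep4 r hr
    have h2 := hwneg r hr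
    have hsq : 0 < (w r) ^ 2 := by nlinarith
    rw [div_le_iff₀ hsq]
    nlinarith
  have hfinal : u (R₁ + 4) ≤ u R₁ - 1 / 2 * (R₁ + 4 - R₁) :=
    myDecay (φ := u) (φ' := fun r => w' r / (w r) ^ 2) (k := 1 / 2)
    (by linarith : R₁ ≤ R₁ + 4)
    (fun x hx => hdu x hx.1) (fun x hx => hu_decay x hx.1.le)
  have h5 := hu_pos (R₁ + 4) (by linarith)
  have h6 := hu_le R₁ le_rfl
  clear_value u R₁ T R w' w
  linarith

private noncomputable def fA (α p x : ℝ) : ℝ := 1 / α * x ^ (-α) - p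
private noncomputable def gA (h : ℝ → ℝ) (n : ℕ) (r : ℝ) : ℝ := r ^ (n + 1) * derivWithin h (Set.Ici 0) r
private noncomputable def EA (α p : ℝ) (h : ℝ → ℝ) (r : ℝ) : ℝ :=
  (derivWithin h (Set.Ici 0) r) ^ 2 / 2 + ((h r) ^ (1 - α) / (α * (α - 1)) + p * h r)

set_option maxHeartbeats 2000000 in
/-- Oscillation of radial solutions around `ξ = (αp)^(-1/α)`: at a critical point `r₀ ≥ 0`
of a positive solution (`C¹` on `[0,∞)`, `C²` on `(0,∞)`) of
`h'' + ((N-1)/r) h' = (1/α) h^(-α) - p`, (ii) if `h(r₀) > ξ` then `h` strictly decreases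
until a next critical point `r₁` where `h(r₁) < ξ` and `F(h(r₁)) < F(h(r₀))`; (iii) if
`0 < h(r₀) < ξ` then `h` strictly increases until a next critical point `r₁` where
`h(r₁) > ξ` and `F(h(r₁)) < F(h(r₀))`. Here `F(h) = h^(1-α)/(α(α-1)) + p h`. -/
theorem oscillation_around_xi
    (N : ℕ) (hN : 2 ≤ N) (α p : ℝ) (hα : 1 < α) (hp : 0 < p)
    (ξ : ℝ) (hξ : ξ = (α * p) ^ (-(1 / α)))
    (F : ℝ → ℝ) (hF : ∀ x : ℝ, 0 < x → F x = x ^ (1 - α) / (α * (α - 1)) + p * x)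
    (h : ℝ → ℝ)
    (hpos : ∀ r ∈ Ici (0 : ℝ), 0 < h r)
    (hreg1 : ContDiffOn ℝ 1 h (Ici 0))
    (hreg2 : ContDiffOn ℝ 2 h (Ioi 0))
    (hode : ∀ r ∈ Ioi (0 : ℝ),
      deriv (deriv h) r + ((N : ℝ) - 1) / r * deriv h r = 1 / α * h r ^ (-α) - p)
    (r₀ : ℝ) (hr₀ : 0 ≤ r₀)
    (hcrit : derivWithin h (Ici 0) r₀ = 0) :
    (ξ < h r₀ →
      ∃ r₁ : ℝ, r₀ < r₁ ∧ (∀ r ∈ Ioo r₀ r₁, deriv h r < 0) ∧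
        deriv h r₁ = 0 ∧ h r₁ < ξ ∧ F (h r₁) < F (h r₀)) ∧
    (h r₀ < ξ →
      ∃ r₁ : ℝ, r₀ < r₁ ∧ (∀ r ∈ Ioo r₀ r₁, 0 < deriv h r) ∧
        deriv h r₁ = 0 ∧ ξ < h r₁ ∧ F (h r₁) < F (h r₀)) := by
  have hα0 : (0:ℝ) < α := by linarith
  have hαp : 0 < α * p := by positivity
  have hξ0 : 0 < ξ := by rw [hξ]; positivity
  have hξα : ξ ^ (-α) = α * p := by
    rw [hξ, ← Real.rpow_mul hαp.le]
    rw [show -(1/α) * -α = 1 by field_simp, Real.rpow_one]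
  obtain ⟨n, rfl⟩ : ∃ n : ℕ, N = n + 2 := ⟨N - 2, by omega⟩
  have hbN : ((n + 2 : ℕ) : ℝ) - 1 = (n : ℝ) + 1 := by push_cast; ring
  set b : ℝ := (n : ℝ) + 1 with hb_def
  have hb0 : 0 ≤ b := by rw [hb_def]; positivity
  have hb1 : 0 < b := by rw [hb_def]; positivity
  have hpξ : p = 1 / α * ξ ^ (-α) := by rw [hξα]; field_simp
  have hfA : ∀ x : ℝ, fA α p x = 1 / α * (x ^ (-α) - ξ ^ (-α)) := by
    intro x; unfold fA; rw [hpξ]; ring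
  have hf_lt : ∀ x : ℝ, ξ < x → fA α p x < 0 := by
    intro x hx
    have h1 : x ^ (-α) < ξ ^ (-α) := Real.rpow_lt_rpow_of_neg hξ0 hx (by linarith)
    rw [hfA x]
    exact mul_neg_of_pos_of_neg (by positivity) (by linarith)
  have hf_gt : ∀ x : ℝ, 0 < x → x < ξ → 0 < fA α p x := by
    intro x hx0 hx
    have h1 : ξ ^ (-α) < x ^ (-α) := Real.rpow_lt_rpow_of_neg hx0 hx (by linarith)
    rw [hfA x]
    exact mul_pos (by positivity) (by linarith)
  have hf_anti : ∀ x y : ℝ, 0 < x → x ≤ y → fA α p y ≤ fA α p x := by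
    intro x y hx hxy
    have h1 : y ^ (-α) ≤ x ^ (-α) := Real.rpow_le_rpow_of_nonpos hx hxy (by linarith)
    rw [hfA x, hfA y]
    exact mul_le_mul_of_nonneg_left (by linarith) (by positivity)
  have hfsec1 : ∀ K x : ℝ, ξ ≤ x → x ≤ K → fA α p x ≤ -(K ^ (-α - 1) * (x - ξ)) := by
    intro K x h1 h2
    have hs := mySec hα0 hξ0 h1 h2
    rw [hfA x]
    have e1 : 1 / α * (x ^ (-α) - ξ ^ (-α)) ≤ 1 / α * (-(α * K ^ (-α-1) * (x - ξ))) :=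
      mul_le_mul_of_nonneg_left (by linarith) (by positivity)
    have e2 : 1 / α * (-(α * K ^ (-α-1) * (x - ξ))) = -(K ^ (-α-1) * (x - ξ)) := by
      field_simp
    linarith
  have hfsec2 : ∀ x : ℝ, 0 < x → x ≤ ξ → ξ ^ (-α - 1) * (ξ - x) ≤ fA α p x := by
    intro x hx0 hx
    have hs := mySec hα0 hx0 hx le_rfl
    rw [hfA x]
    have e1 : 1 / α * (α * ξ ^ (-α-1) * (ξ - x)) ≤ 1 / α * (x ^ (-α) - ξ ^ (-α)) :=
      mul_le_mul_of_nonneg_left (by linarith) (by positivity)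
    have e2 : 1 / α * (α * ξ ^ (-α-1) * (ξ - x)) = ξ ^ (-α-1) * (ξ - x) := by
      field_simp
    linarith
  -- regularity facts
  have hcont : ContinuousOn h (Ici 0) := hreg1.continuousOn
  have hd1 : ∀ r ∈ Ioi (0:ℝ), HasDerivAt h (deriv h r) r := by
    intro r hr
    exact ((hreg1.differentiableOn one_ne_zero r (mem_Ici.2 (le_of_lt hr))).differentiableAt
      (Ici_mem_nhds hr)).hasDerivAt
  have hdW : ∀ r ∈ Ioi (0:ℝ), derivWithin h (Ici 0) r = deriv h r := fun r hr =>
    derivWithin_of_mem_nhds (Ici_mem_nhds hr)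
  have hC1' : ContinuousOn (derivWithin h (Ici 0)) (Ici 0) :=
    hreg1.continuousOn_derivWithin (uniqueDiffOn_Ici 0) le_rfl
  have hcd : ContDiffOn ℝ 1 (deriv h) (Ioi 0) := hreg2.deriv_of_isOpen isOpen_Ioi (by norm_num)
  have hcontd : ContinuousOn (deriv h) (Ioi 0) := hcd.continuousOn
  have hd2 : ∀ r ∈ Ioi (0:ℝ), HasDerivAt (deriv h) (deriv (deriv h) r) r := by
    intro r hr
    exact ((hcd.differentiableOn one_ne_zero r hr).differentiableAt
      (isOpen_Ioi.mem_nhds hr)).hasDerivAt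
  have hode' : ∀ r ∈ Ioi (0:ℝ), deriv (deriv h) r = fA α p (h r) - b / r * deriv h r := by
    intro r hr
    have h0 := hode r hr
    rw [hbN] at h0
    unfold fA
    linarith
  -- g facts
  have hgcont : ContinuousOn (gA h n) (Ici 0) := by
    unfold gA
    exact (continuous_pow (n+1)).continuousOn.mul hC1'
  have hg0 : gA h n r₀ = 0 := by unfold gA; rw [hcrit]; ring
  have hgval : ∀ r ∈ Ioi (0:ℝ), gA h n r = r ^ (n+1) * deriv h r := by
    intro r hr; unfold gA; rw [hdW r hr]
  have hgd : ∀ r ∈ Ioi (0:ℝ), HasDerivAt (gA h n) (r ^ (n+1) * fA α p (h r)) r := by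
    intro r hr
    have hr0 : (0:ℝ) < r := hr
    have heq : (fun s => s ^ (n+1) * deriv h s) =ᶠ[𝓝 r] gA h n := by
      filter_upwards [isOpen_Ioi.mem_nhds hr] with s hs
      exact (hgval s hs).symm
    have hD : HasDerivAt (fun s : ℝ => s ^ (n+1) * deriv h s)
        ((((n+1 : ℕ)) : ℝ) * r ^ n * deriv h r + r ^ (n+1) * deriv (deriv h) r) r := by
      have := (hasDerivAt_pow (n+1) r).mul (hd2 r hr)
      simp only [Nat.add_sub_cancel] at this
      exact this
    have hD2 := hD.congr_of_eventuallyEq heq.symm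
    refine hD2.congr_deriv ?_
    rw [hode' r hr]
    have hrne : r ≠ 0 := ne_of_gt hr0
    rw [hb_def]
    push_cast
    field_simp [pow_succ]
    ring
  -- energy facts
  have hEcont : ContinuousOn (EA α p h) (Ici 0) := by
    unfold EA
    apply ContinuousOn.add
    · exact (hC1'.pow 2).div_const 2
    · apply ContinuousOn.add
      · apply ContinuousOn.div_const
        intro r hr
        exact (Real.continuousAt_rpow_const (h r) (1-α)
          (Or.inl (hpos r hr).ne')).comp_continuousWithinAt (hcont r hr)
      · exact continuous_const.continuousOn.mul hcont
  have hEr₀ : EA α p h r₀ = (h r₀) ^ (1-α) / (α*(α-1)) + p * h r₀ := by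
    unfold EA; rw [hcrit]; ring
  have hEd : ∀ r ∈ Ioi (0:ℝ), HasDerivAt (EA α p h) (-(b / r) * (deriv h r)^2) r := by
    intro r hr
    have hr0 : (0:ℝ) < r := hr
    have hhr : 0 < h r := hpos r (le_of_lt hr0)
    have heq : (fun s => (deriv h s)^2/2 + ((h s)^(1-α)/(α*(α-1)) + p * h s)) =ᶠ[𝓝 r]
        EA α p h := by
      filter_upwards [isOpen_Ioi.mem_nhds hr] with s hs
      unfold EA; rw [hdW s hs]
    have hG : HasDerivAt (fun x : ℝ => x ^ (1-α)/(α*(α-1)) + p * x)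
        ((1-α) * (h r) ^ (-α) / (α*(α-1)) + p) (h r) := by
      have h1 : HasDerivAt (fun x : ℝ => x ^ (1-α)) ((1-α) * (h r) ^ (1-α-1)) (h r) :=
        Real.hasDerivAt_rpow_const (Or.inl hhr.ne')
      have h2 := h1.div_const (α*(α-1))
      have h3 : HasDerivAt (fun x : ℝ => p * x) (p * 1) (h r) := (hasDerivAt_id _).const_mul p
      have h4 := h2.add h3
      have e : 1 - α - 1 = -α := by ring
      rw [e] at h4
      rw [mul_one] at h4
      exact h4
    have hcomp := hG.comp r (hd1 r hr)
    have hsq : HasDerivAt (fun s => (deriv h s)^2/2) (deriv h r * deriv (deriv h) r) r := by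
      have := ((hd2 r hr).pow 2).div_const 2
      refine this.congr_deriv ?_
      simp
      ring
    have hsum := (hsq.add hcomp).congr_of_eventuallyEq heq.symm
    refine hsum.congr_deriv ?_
    rw [hode' r hr]
    simp only [fA]
    have hrne : r ≠ 0 := ne_of_gt hr0
    have hα1 : α - 1 ≠ 0 := by intro e; apply absurd hα; rw [show α = 1 by linarith]; simp
    field_simp
    ring
  have energy_drop : ∀ r₁ : ℝ, r₀ < r₁ → (∀ r ∈ Ioo r₀ r₁, deriv h r ≠ 0) →
      deriv h r₁ = 0 → F (h r₁) < F (h r₀) := by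
    intro r₁ h01 hne hz
    have hr₁0 : (0:ℝ) < r₁ := lt_of_le_of_lt hr₀ h01
    set m := (r₀ + r₁)/2 with hm_def
    have hm1 : r₀ < m := by rw [hm_def]; linarith
    have hm2 : m < r₁ := by rw [hm_def]; linarith
    have hm0 : (0:ℝ) < m := lt_of_le_of_lt hr₀ hm1
    have hanti : StrictAntiOn (EA α p h) (Icc m r₁) := by
      apply myStrictAntiOn (φ' := fun x => -(b/x) * (deriv h x)^2)
        (hEcont.mono (fun y hy => le_trans hm0.le hy.1))
      · intro x hx; exact hEd x (lt_trans hm0 hx.1)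
      · intro x hx
        have hx0 : (0:ℝ) < x := lt_trans hm0 hx.1
        have hdx := hne x ⟨lt_trans hm1 hx.1, hx.2⟩
        have h5 : 0 < (deriv h x)^2 := by positivity
        have h6 : 0 < b/x := by positivity
        nlinarith
    have h1 : EA α p h r₁ < EA α p h m := hanti ⟨le_rfl, hm2.le⟩ ⟨hm2.le, le_rfl⟩ hm2
    have h2 : EA α p h m ≤ EA α p h r₀ := by
      have htd : Tendsto (EA α p h) (𝓝[>] r₀) (𝓝 (EA α p h r₀)) :=
        (hEcont r₀ hr₀).mono (fun y hy => le_trans hr₀ hy.le)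
      apply ge_of_tendsto htd
      filter_upwards [Ioo_mem_nhdsGT_of_mem (⟨le_rfl, hm1⟩ : r₀ ∈ Ico r₀ m)] with s hs
      have hs0 : (0:ℝ) < s := lt_of_le_of_lt hr₀ hs.1
      have hAnt : AntitoneOn (EA α p h) (Icc s m) := by
        apply myAntitoneOn (φ' := fun x => -(b/x) * (deriv h x)^2)
          (hEcont.mono (fun y hy => le_trans hs0.le hy.1))
        · intro x hx; exact hEd x (lt_trans hs0 hx.1)
        · intro x hx
          have hx0 : (0:ℝ) < x := lt_trans hs0 hx.1
          have h5 : 0 ≤ b/x * (deriv h x)^2 := by positivity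
          nlinarith
      exact hAnt ⟨le_rfl, hs.2.le⟩ ⟨hs.2.le, le_rfl⟩ hs.2.le
    have h3 : EA α p h r₁ = (h r₁)^(1-α)/(α*(α-1)) + p * h r₁ := by
      unfold EA; rw [hdW r₁ hr₁0, hz]; ring
    rw [hF _ (hpos r₁ (le_of_lt hr₁0)), hF _ (hpos r₀ hr₀)]
    rw [hEr₀] at h2
    linarith
  constructor
  · -- case (ii)
    intro hgt
    have hMpos : 0 < h r₀ := hpos r₀ hr₀
    have key : ∃ x, r₀ < x ∧ h x ≤ ξ := by
      by_contra hK; push_neg at hK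
      have hg_neg : ∀ x, r₀ < x → gA h n x < 0 := by
        intro x hx
        have hsa : StrictAntiOn (gA h n) (Icc r₀ x) := by
          apply myStrictAntiOn (φ' := fun z => z ^ (n+1) * fA α p (h z))
            (hgcont.mono (fun y hy => le_trans hr₀ hy.1))
          · intro z hz; exact hgd z (lt_of_le_of_lt hr₀ hz.1)
          · intro z hz
            have hz0 : (0:ℝ) < z := lt_of_le_of_lt hr₀ hz.1
            exact mul_neg_of_pos_of_neg (pow_pos hz0 _) (hf_lt _ (hK z hz.1))
        have h7 := hsa ⟨le_rfl, hx.le⟩ ⟨hx.le, le_rfl⟩ hx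
        rw [hg0] at h7
        exact h7
      have hd_neg : ∀ x, r₀ < x → deriv h x < 0 := by
        intro x hx
        have hx0 : (0:ℝ) < x := lt_of_le_of_lt hr₀ hx
        have h5 := hg_neg x hx
        rw [hgval x hx0] at h5
        nlinarith [pow_pos hx0 (n+1)]
      have hM : ∀ x, r₀ < x → h x ≤ h r₀ := by
        intro x hx
        have hsa : StrictAntiOn h (Icc r₀ x) := by
          apply myStrictAntiOn (φ' := deriv h) (hcont.mono (fun y hy => le_trans hr₀ hy.1))
          · intro z hz; exact hd1 z (lt_of_le_of_lt hr₀ hz.1)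
          · intro z hz; exact hd_neg z hz.1
        exact (hsa ⟨le_rfl, hx.le⟩ ⟨hx.le, le_rfl⟩ hx).le
      have hcpos : 0 < (h r₀) ^ (-α - 1) := Real.rpow_pos_of_pos hMpos _
      apply myRiccati (b := b) (c := (h r₀) ^ (-α-1)) (a := r₀) hb0 hcpos hr₀
        (V := fun r => h r - ξ) (V' := deriv h) (V'' := deriv (deriv h))
      · intro r hr; exact (hd1 r (lt_of_le_of_lt hr₀ hr)).sub_const ξ
      · intro r hr; exact hd2 r (lt_of_le_of_lt hr₀ hr)
      · intro r hr; exact sub_pos.2 (hK r hr)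
      · intro r hr
        have hr0 : (0:ℝ) < r := lt_of_le_of_lt hr₀ hr
        rw [hode' r hr0]
        have h6 := hfsec1 (h r₀) (h r) (hK r hr).le (hM r hr)
        linarith
    obtain ⟨x₀, hx₀, hx₀le⟩ := key
    set S : Set ℝ := Ici r₀ ∩ h ⁻¹' (Iic ξ) with hS_def
    have hSclosed : IsClosed S :=
      ContinuousOn.preimage_isClosed_of_isClosed
        (hcont.mono (Ici_subset_Ici.2 hr₀)) isClosed_Ici isClosed_Iic
    have hSne : S.Nonempty := ⟨x₀, hx₀.le, hx₀le⟩
    have hSbdd : BddBelow S := ⟨r₀, fun y hy => hy.1⟩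
    set r₂ := sInf S with hr₂_def
    have hr₂S : r₂ ∈ S := hSclosed.csInf_mem hSne hSbdd
    have hr₂le : h r₂ ≤ ξ := hr₂S.2
    have h02 : r₀ < r₂ := by
      rcases lt_or_eq_of_le (mem_Ici.1 hr₂S.1) with hlt | heq
      · exact hlt
      · exfalso; rw [← heq] at hr₂le; exact absurd hgt (not_lt.2 hr₂le)
    have hr₂0 : (0:ℝ) < r₂ := lt_of_le_of_lt hr₀ h02
    have hlow : ∀ r, r₀ ≤ r → r < r₂ → ξ < h r := by
      intro r hr hrr
      by_contra hle; push_neg at hle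
      exact absurd (csInf_le hSbdd ⟨hr, hle⟩) (not_le.2 hrr)
    have hr₂ξ : h r₂ = ξ := by
      rcases lt_or_eq_of_le hr₂le with hlt | heq
      · exfalso
        have hne : (𝓝[Ioo r₀ r₂] r₂).NeBot := by
          rw [nhdsWithin_Ioo_eq_nhdsLT h02]; infer_instance
        have hct : Tendsto h (𝓝[Ioo r₀ r₂] r₂) (𝓝 (h r₂)) :=
          (hcont r₂ hr₂0.le).mono (fun y hy => le_trans hr₀ hy.1.le)
        have hev := hct.eventually_lt_const hlt
        obtain ⟨s, hs1, hs2⟩ := (hev.and eventually_mem_nhdsWithin).exists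
        exact absurd (hlow s hs2.1.le hs2.2) (not_lt.2 hs1.le)
      · exact heq
    have hph1 : ∀ r, r₀ < r → r ≤ r₂ → deriv h r < 0 := by
      intro x hx hxr
      have hx0 : (0:ℝ) < x := lt_of_le_of_lt hr₀ hx
      have hsa : StrictAntiOn (gA h n) (Icc r₀ x) := by
        apply myStrictAntiOn (φ' := fun z => z ^ (n+1) * fA α p (h z))
          (hgcont.mono (fun y hy => le_trans hr₀ hy.1))
        · intro z hz; exact hgd z (lt_of_le_of_lt hr₀ hz.1)
        · intro z hz
          have hz0 : (0:ℝ) < z := lt_of_le_of_lt hr₀ hz.1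
          exact mul_neg_of_pos_of_neg (pow_pos hz0 _)
            (hf_lt _ (hlow z hz.1.le (lt_of_lt_of_le hz.2 hxr)))
      have h7 := hsa ⟨le_rfl, hx.le⟩ ⟨hx.le, le_rfl⟩ hx
      rw [hg0, hgval x hx0] at h7
      nlinarith [pow_pos hx0 (n+1)]
    have hd2neg : deriv h r₂ < 0 := hph1 r₂ h02 le_rfl
    have key2 : ∃ r₃, r₂ < r₃ ∧ 0 ≤ deriv h r₃ := by
      by_contra hB; push_neg at hB
      have hanti : ∀ x, r₂ < x → h x < ξ := by
        intro x hx
        have hsa : StrictAntiOn h (Icc r₂ x) := by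
          apply myStrictAntiOn (φ' := deriv h) (hcont.mono (fun y hy => le_trans hr₂0.le hy.1))
          · intro z hz; exact hd1 z (lt_trans hr₂0 hz.1)
          · intro z hz; exact hB z hz.1
        have h8 := hsa ⟨le_rfl, hx.le⟩ ⟨hx.le, le_rfl⟩ hx
        rw [hr₂ξ] at h8; exact h8
      have hκξ : h (r₂ + 1) < ξ := hanti (r₂+1) (by linarith)
      have hκ0 : 0 < h (r₂ + 1) := hpos (r₂+1) (mem_Ici.mpr (by linarith))
      have hfκ : 0 < fA α p (h (r₂+1)) := hf_gt _ hκ0 hκξ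
      set k := (r₂+1) ^ (n+1) * fA α p (h (r₂+1)) with hk_def
      have hk0 : 0 < k := by rw [hk_def]; exact mul_pos (pow_pos (by linarith) _) hfκ
      set X := r₂ + 1 + (|gA h n (r₂+1)| + 1) / k with hX_def
      have hX1 : r₂ + 1 ≤ X := by
        rw [hX_def]
        have h9 : 0 ≤ (|gA h n (r₂+1)|+1)/k := by positivity
        linarith
      have hgrow : gA h n (r₂+1) + k * (X - (r₂+1)) ≤ gA h n X := by
        apply myGrow hX1
        · intro z hz
          have hz0 : (0:ℝ) < z := by
            have := hz.1; linarith
          exact hgd z hz0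
        · intro z hz
          have hz1 : r₂ + 1 ≤ z := hz.1.le
          have hz0 : (0:ℝ) < z := by linarith
          have hhz : h z ≤ h (r₂+1) := by
            rcases eq_or_lt_of_le hz1 with he | hlt'
            · rw [← he]
            · have hsa : StrictAntiOn h (Icc (r₂+1) z) := by
                apply myStrictAntiOn (φ' := deriv h)
                  (hcont.mono (fun y hy => by
                    have := hy.1; simp only [mem_Ici]; linarith))
                · intro u hu; exact hd1 u (by have := hu.1; simp only [mem_Ioi]; linarith)
                · intro u hu; exact hB u (by have := hu.1; linarith)
              exact (hsa ⟨le_rfl, hz1⟩ ⟨hz1, le_rfl⟩ hlt').le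
          have h8 : fA α p (h z) ≥ fA α p (h (r₂+1)) := hf_anti (h z) (h (r₂+1)) (hpos z (mem_Ici.mpr (by linarith))) hhz
          have h9 : (r₂+1)^(n+1) ≤ z^(n+1) := pow_le_pow_left₀ (by linarith) hz1 _
          rw [hk_def]
          calc (r₂+1)^(n+1) * fA α p (h (r₂+1)) ≤ z^(n+1) * fA α p (h (r₂+1)) :=
                mul_le_mul_of_nonneg_right h9 hfκ.le
            _ ≤ z^(n+1) * fA α p (h z) := mul_le_mul_of_nonneg_left h8 (by positivity)
      have hXg : 0 < gA h n X := by
        have e : k * (X - (r₂+1)) = |gA h n (r₂+1)| + 1 := by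
          rw [hX_def]; field_simp; ring
        rw [e] at hgrow
        have := neg_abs_le (gA h n (r₂+1))
        linarith
      have hX0 : (0:ℝ) < X := by linarith
      have hBX := hB X (by linarith)
      rw [hgval X hX0] at hXg
      nlinarith [pow_pos hX0 (n+1)]
    obtain ⟨r₃, h23, hd3⟩ := key2
    have hr₃0 : (0:ℝ) < r₃ := lt_trans hr₂0 h23
    set A := Icc r₂ r₃ ∩ deriv h ⁻¹' {0} with hA_def
    have hsubA : Icc r₂ r₃ ⊆ Ioi (0:ℝ) := fun y hy => lt_of_lt_of_le hr₂0 hy.1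
    have hA_closed : IsClosed A :=
      ContinuousOn.preimage_isClosed_of_isClosed (hcontd.mono hsubA)
        isClosed_Icc isClosed_singleton
    have hA_ne : A.Nonempty := by
      have hiv := intermediate_value_Icc h23.le (hcontd.mono hsubA)
      obtain ⟨z, hz1, hz2⟩ := hiv (⟨hd2neg.le, hd3⟩ : (0:ℝ) ∈ Icc (deriv h r₂) (deriv h r₃))
      exact ⟨z, hz1, hz2⟩
    have hA_bdd : BddBelow A := ⟨r₂, fun y hy => hy.1.1⟩
    set r₁ := sInf A with hr₁_def
    have hr₁A : r₁ ∈ A := hA_closed.csInf_mem hA_ne hA_bdd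
    have hr₁z : deriv h r₁ = 0 := hr₁A.2
    have hr₁I : r₁ ∈ Icc r₂ r₃ := hr₁A.1
    have h21 : r₂ < r₁ := by
      rcases lt_or_eq_of_le hr₁I.1 with hlt | heq
      · exact hlt
      · exfalso; rw [← heq] at hr₁z; exact absurd hr₁z (ne_of_lt hd2neg)
    have hph2 : ∀ r, r₂ < r → r < r₁ → deriv h r < 0 := by
      intro x hx1 hx2
      rcases lt_trichotomy (deriv h x) 0 with hn' | hz' | hp'
      · exact hn'
      · exfalso
        have hxA : x ∈ A := ⟨⟨hx1.le, le_trans hx2.le hr₁I.2⟩, hz'⟩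
        exact absurd (csInf_le hA_bdd hxA) (not_le.2 hx2)
      · exfalso
        have hsub2 : Icc r₂ x ⊆ Ioi (0:ℝ) := fun y hy => lt_of_lt_of_le hr₂0 hy.1
        have hiv := intermediate_value_Icc hx1.le (hcontd.mono hsub2)
        obtain ⟨z, hz1, hz2⟩ := hiv (⟨hd2neg.le, hp'.le⟩ : (0:ℝ) ∈ Icc (deriv h r₂) (deriv h x))
        have hzA : z ∈ A := ⟨⟨hz1.1, le_trans hz1.2 (le_trans hx2.le hr₁I.2)⟩, hz2⟩
        have := csInf_le hA_bdd hzA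
        have hzx := hz1.2
        rw [← hr₁_def] at this
        linarith
    have hsign : ∀ r ∈ Ioo r₀ r₁, deriv h r < 0 := by
      intro r hr
      rcases le_or_gt r r₂ with hle | hgt'
      · exact hph1 r hr.1 hle
      · exact hph2 r hgt' hr.2
    have hr₁ξ : h r₁ < ξ := by
      have hsa : StrictAntiOn h (Icc r₂ r₁) := by
        apply myStrictAntiOn (φ' := deriv h) (hcont.mono (fun y hy => le_trans hr₂0.le hy.1))
        · intro z hz; exact hd1 z (lt_trans hr₂0 hz.1)
        · intro z hz; exact hph2 z hz.1 hz.2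
      have h8 := hsa ⟨le_rfl, h21.le⟩ ⟨h21.le, le_rfl⟩ h21
      rw [hr₂ξ] at h8; exact h8
    have h01 : r₀ < r₁ := lt_trans h02 h21
    exact ⟨r₁, h01, hsign, hr₁z, hr₁ξ,
      energy_drop r₁ h01 (fun r hr => ne_of_lt (hsign r hr)) hr₁z⟩
  · -- case (iii)
    intro hlt
    have key : ∃ x, r₀ < x ∧ ξ ≤ h x := by
      by_contra hK; push_neg at hK
      have hg_pos : ∀ x, r₀ < x → 0 < gA h n x := by
        intro x hx
        have hsm : StrictMonoOn (gA h n) (Icc r₀ x) := by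
          apply myStrictMonoOn (φ' := fun z => z ^ (n+1) * fA α p (h z))
            (hgcont.mono (fun y hy => le_trans hr₀ hy.1))
          · intro z hz; exact hgd z (lt_of_le_of_lt hr₀ hz.1)
          · intro z hz
            have hz0 : (0:ℝ) < z := lt_of_le_of_lt hr₀ hz.1
            exact mul_pos (pow_pos hz0 _)
              (hf_gt _ (hpos z (mem_Ici.mpr hz0.le)) (hK z hz.1))
        have h7 := hsm ⟨le_rfl, hx.le⟩ ⟨hx.le, le_rfl⟩ hx
        rw [hg0] at h7
        exact h7
      have hd_pos : ∀ x, r₀ < x → 0 < deriv h x := by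
        intro x hx
        have hx0 : (0:ℝ) < x := lt_of_le_of_lt hr₀ hx
        have h5 := hg_pos x hx
        rw [hgval x hx0] at h5
        nlinarith [pow_pos hx0 (n+1)]
      have hcpos : 0 < ξ ^ (-α - 1) := Real.rpow_pos_of_pos hξ0 _
      apply myRiccati (b := b) (c := ξ ^ (-α-1)) (a := r₀) hb0 hcpos hr₀
        (V := fun r => ξ - h r) (V' := fun r => -deriv h r)
        (V'' := fun r => -deriv (deriv h) r)
      · intro r hr; exact (hd1 r (lt_of_le_of_lt hr₀ hr)).const_sub ξ
      · intro r hr; exact (hd2 r (lt_of_le_of_lt hr₀ hr)).neg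
      · intro r hr; exact sub_pos.2 (hK r hr)
      · intro r hr
        have hr0 : (0:ℝ) < r := lt_of_le_of_lt hr₀ hr
        have hode'' := hode' r hr0
        have h6 := hfsec2 (h r) (hpos r (mem_Ici.mpr hr0.le)) (hK r hr).le
        rw [hode'']
        linarith
    obtain ⟨x₀, hx₀, hx₀ge⟩ := key
    set S : Set ℝ := Ici r₀ ∩ h ⁻¹' (Ici ξ) with hS_def
    have hSclosed : IsClosed S :=
      ContinuousOn.preimage_isClosed_of_isClosed
        (hcont.mono (Ici_subset_Ici.2 hr₀)) isClosed_Ici isClosed_Ici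
    have hSne : S.Nonempty := ⟨x₀, hx₀.le, hx₀ge⟩
    have hSbdd : BddBelow S := ⟨r₀, fun y hy => hy.1⟩
    set r₂ := sInf S with hr₂_def
    have hr₂S : r₂ ∈ S := hSclosed.csInf_mem hSne hSbdd
    have hr₂ge : ξ ≤ h r₂ := hr₂S.2
    have h02 : r₀ < r₂ := by
      rcases lt_or_eq_of_le (mem_Ici.1 hr₂S.1) with hlt' | heq
      · exact hlt'
      · exfalso; rw [← heq] at hr₂ge; exact absurd hlt (not_lt.2 hr₂ge)
    have hr₂0 : (0:ℝ) < r₂ := lt_of_le_of_lt hr₀ h02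
    have hhigh : ∀ r, r₀ ≤ r → r < r₂ → h r < ξ := by
      intro r hr hrr
      by_contra hle; push_neg at hle
      exact absurd (csInf_le hSbdd ⟨hr, hle⟩) (not_le.2 hrr)
    have hr₂ξ : h r₂ = ξ := by
      rcases lt_or_eq_of_le hr₂ge with hlt' | heq
      · exfalso
        have hne : (𝓝[Ioo r₀ r₂] r₂).NeBot := by
          rw [nhdsWithin_Ioo_eq_nhdsLT h02]; infer_instance
        have hct : Tendsto h (𝓝[Ioo r₀ r₂] r₂) (𝓝 (h r₂)) :=
          (hcont r₂ hr₂0.le).mono (fun y hy => le_trans hr₀ hy.1.le)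
        have hev := hct.eventually_const_lt hlt'
        obtain ⟨s, hs1, hs2⟩ := (hev.and eventually_mem_nhdsWithin).exists
        exact absurd (hhigh s hs2.1.le hs2.2) (not_lt.2 hs1.le)
      · exact heq.symm
    have hph1 : ∀ r, r₀ < r → r ≤ r₂ → 0 < deriv h r := by
      intro x hx hxr
      have hx0 : (0:ℝ) < x := lt_of_le_of_lt hr₀ hx
      have hsm : StrictMonoOn (gA h n) (Icc r₀ x) := by
        apply myStrictMonoOn (φ' := fun z => z ^ (n+1) * fA α p (h z))
          (hgcont.mono (fun y hy => le_trans hr₀ hy.1))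
        · intro z hz; exact hgd z (lt_of_le_of_lt hr₀ hz.1)
        · intro z hz
          have hz0 : (0:ℝ) < z := lt_of_le_of_lt hr₀ hz.1
          exact mul_pos (pow_pos hz0 _)
            (hf_gt _ (hpos z (mem_Ici.mpr hz0.le))
              (hhigh z hz.1.le (lt_of_lt_of_le hz.2 hxr)))
      have h7 := hsm ⟨le_rfl, hx.le⟩ ⟨hx.le, le_rfl⟩ hx
      rw [hg0, hgval x hx0] at h7
      nlinarith [pow_pos hx0 (n+1)]
    have hd2pos : 0 < deriv h r₂ := hph1 r₂ h02 le_rfl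
    have key2 : ∃ r₃, r₂ < r₃ ∧ deriv h r₃ ≤ 0 := by
      by_contra hB; push_neg at hB
      have hmono : ∀ x, r₂ < x → ξ < h x := by
        intro x hx
        have hsm : StrictMonoOn h (Icc r₂ x) := by
          apply myStrictMonoOn (φ' := deriv h)
            (hcont.mono (fun y hy => le_trans hr₂0.le hy.1))
          · intro z hz; exact hd1 z (lt_trans hr₂0 hz.1)
          · intro z hz; exact hB z hz.1
        have h8 := hsm ⟨le_rfl, hx.le⟩ ⟨hx.le, le_rfl⟩ hx
        rw [hr₂ξ] at h8; exact h8
      have hκξ : ξ < h (r₂ + 1) := hmono (r₂+1) (by linarith)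
      have hfκ : fA α p (h (r₂+1)) < 0 := hf_lt _ hκξ
      set k := -((r₂+1) ^ (n+1) * fA α p (h (r₂+1))) with hk_def
      have hk0 : 0 < k := by
        rw [hk_def]
        have h9 := mul_pos (pow_pos (by linarith : (0:ℝ) < r₂+1) (n+1)) (neg_pos.2 hfκ)
        nlinarith
      set X := r₂ + 1 + (|gA h n (r₂+1)| + 1) / k with hX_def
      have hX1 : r₂ + 1 ≤ X := by
        rw [hX_def]
        have h9 : 0 ≤ (|gA h n (r₂+1)|+1)/k := by positivity
        linarith
      have hdecay : gA h n X ≤ gA h n (r₂+1) - k * (X - (r₂+1)) := by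
        apply myDecay hX1
        · intro z hz
          have hz0 : (0:ℝ) < z := by have := hz.1; linarith
          exact hgd z hz0
        · intro z hz
          have hz1 : r₂ + 1 ≤ z := hz.1.le
          have hz0 : (0:ℝ) < z := by linarith
          have hhz : h (r₂+1) ≤ h z := by
            rcases eq_or_lt_of_le hz1 with he | hlt'
            · rw [← he]
            · have hsm : StrictMonoOn h (Icc (r₂+1) z) := by
                apply myStrictMonoOn (φ' := deriv h)
                  (hcont.mono (fun y hy => by
                    have := hy.1; simp only [mem_Ici]; linarith))
                · intro u hu; exact hd1 u (by have := hu.1; simp only [mem_Ioi]; linarith)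
                · intro u hu; exact hB u (by have := hu.1; linarith)
              exact (hsm ⟨le_rfl, hz1⟩ ⟨hz1, le_rfl⟩ hlt').le
          have h8 : fA α p (h z) ≤ fA α p (h (r₂+1)) :=
            hf_anti (h (r₂+1)) (h z) (hpos (r₂+1) (mem_Ici.mpr (by linarith))) hhz
          have h9 : (r₂+1)^(n+1) ≤ z^(n+1) := pow_le_pow_left₀ (by linarith) hz1 _
          have e : (r₂+1)^(n+1) * fA α p (h (r₂+1)) = -k := by rw [hk_def]; ring
          calc z^(n+1) * fA α p (h z) ≤ z^(n+1) * fA α p (h (r₂+1)) :=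
                mul_le_mul_of_nonneg_left h8 (by positivity)
            _ ≤ (r₂+1)^(n+1) * fA α p (h (r₂+1)) :=
                mul_le_mul_of_nonpos_right h9 hfκ.le
            _ = -k := e
      have hXg : gA h n X < 0 := by
        have e : k * (X - (r₂+1)) = |gA h n (r₂+1)| + 1 := by
          rw [hX_def]; field_simp; ring
        rw [e] at hdecay
        have := le_abs_self (gA h n (r₂+1))
        linarith
      have hX0 : (0:ℝ) < X := by linarith
      have hBX := hB X (by linarith)
      rw [hgval X hX0] at hXg
      nlinarith [pow_pos hX0 (n+1)]
    obtain ⟨r₃, h23, hd3⟩ := key2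
    have hr₃0 : (0:ℝ) < r₃ := lt_trans hr₂0 h23
    set A := Icc r₂ r₃ ∩ deriv h ⁻¹' {0} with hA_def
    have hsubA : Icc r₂ r₃ ⊆ Ioi (0:ℝ) := fun y hy => lt_of_lt_of_le hr₂0 hy.1
    have hA_closed : IsClosed A :=
      ContinuousOn.preimage_isClosed_of_isClosed (hcontd.mono hsubA)
        isClosed_Icc isClosed_singleton
    have hA_ne : A.Nonempty := by
      have hiv := intermediate_value_Icc' h23.le (hcontd.mono hsubA)
      obtain ⟨z, hz1, hz2⟩ := hiv (⟨hd3, hd2pos.le⟩ : (0:ℝ) ∈ Icc (deriv h r₃) (deriv h r₂))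
      exact ⟨z, hz1, hz2⟩
    have hA_bdd : BddBelow A := ⟨r₂, fun y hy => hy.1.1⟩
    set r₁ := sInf A with hr₁_def
    have hr₁A : r₁ ∈ A := hA_closed.csInf_mem hA_ne hA_bdd
    have hr₁z : deriv h r₁ = 0 := hr₁A.2
    have hr₁I : r₁ ∈ Icc r₂ r₃ := hr₁A.1
    have h21 : r₂ < r₁ := by
      rcases lt_or_eq_of_le hr₁I.1 with hlt' | heq
      · exact hlt'
      · exfalso; rw [← heq] at hr₁z; exact absurd hr₁z (ne_of_gt hd2pos)
    have hph2 : ∀ r, r₂ < r → r < r₁ → 0 < deriv h r := by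
      intro x hx1 hx2
      rcases lt_trichotomy (deriv h x) 0 with hn' | hz' | hp'
      · exfalso
        have hsub2 : Icc r₂ x ⊆ Ioi (0:ℝ) := fun y hy => lt_of_lt_of_le hr₂0 hy.1
        have hiv := intermediate_value_Icc' hx1.le (hcontd.mono hsub2)
        obtain ⟨z, hz1, hz2⟩ := hiv (⟨hn'.le, hd2pos.le⟩ :
          (0:ℝ) ∈ Icc (deriv h x) (deriv h r₂))
        have hzA : z ∈ A := ⟨⟨hz1.1, le_trans hz1.2 (le_trans hx2.le hr₁I.2)⟩, hz2⟩
        have h9 := csInf_le hA_bdd hzA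
        have hzx := hz1.2
        rw [← hr₁_def] at h9
        linarith
      · exfalso
        have hxA : x ∈ A := ⟨⟨hx1.le, le_trans hx2.le hr₁I.2⟩, hz'⟩
        exact absurd (csInf_le hA_bdd hxA) (not_le.2 hx2)
      · exact hp'
    have hsign : ∀ r ∈ Ioo r₀ r₁, 0 < deriv h r := by
      intro r hr
      rcases le_or_gt r r₂ with hle | hgt'
      · exact hph1 r hr.1 hle
      · exact hph2 r hgt' hr.2
    have hr₁ξ : ξ < h r₁ := by
      have hsm : StrictMonoOn h (Icc r₂ r₁) := by
        apply myStrictMonoOn (φ' := deriv h)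
          (hcont.mono (fun y hy => le_trans hr₂0.le hy.1))
        · intro z hz; exact hd1 z (lt_trans hr₂0 hz.1)
        · intro z hz; exact hph2 z hz.1 hz.2
      have h8 := hsm ⟨le_rfl, h21.le⟩ ⟨h21.le, le_rfl⟩ h21
      rw [hr₂ξ] at h8; exact h8
    have h01 : r₀ < r₁ := lt_trans h02 h21
    exact ⟨r₁, h01, hsign, hr₁z, hr₁ξ,
      energy_drop r₁ h01 (fun r hr => ne_of_gt (hsign r hr)) hr₁z⟩
end
end
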